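/- arXiv:1702.07302 — 8 statements merged into one kernel-verified Lean document; each statement's English description precedes it below -/
import Mathlib

section
/- Let f be a nonnegative Lebesgue measurable function on (0,∞), and let p, q, r be real numbers with 0 < r < 1 and p < 1/r − 1 < q. With λ = (q + 1 − 1/r)/(q − p), the inequality ( ∫_0^∞ f(x)^r dx )^{1/r} ≤ [ψ_r(p,q)]^{(1−r)/r} · ( ∫_0^∞ x^p f(x) dx )^λ · ( ∫_0^∞ x^q f(x) dx )^{1−λ} holds. -/
open MeasureTheory Set
open scoped ENNReal NNReal Real

/-- `B̃(a,b) = B(a,b) (a+b)^{a+b} a^{-a} b^{-b}`, where `B` is the Beta function. -/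
noncomputable def Btilde (a b : ℝ) : ℝ :=
  (Real.Gamma a * Real.Gamma b / Real.Gamma (a + b)) * (a + b) ^ (a + b) * a ^ (-a) * b ^ (-b)

/-- `ψ_r(p,q) = (1/(q-p)) B̃(rλ/(1-r), r(1-λ)/(1-r))` with `λ = (q+1-1/r)/(q-p)`. -/
noncomputable def psi (r p q : ℝ) : ℝ :=
  (1 / (q - p)) * Btilde (r * ((q + 1 - 1 / r) / (q - p)) / (1 - r))
    (r * (1 - (q + 1 - 1 / r) / (q - p)) / (1 - r))

lemma lintegral_image_eq_lintegral_abs_deriv_mul' {s : Set ℝ} {f f' : ℝ → ℝ}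
    (hs : MeasurableSet s) (hf' : ∀ x ∈ s, HasDerivWithinAt f (f' x) s x)
    (hf : InjOn f s) (g : ℝ → ℝ≥0∞) :
    ∫⁻ x in f '' s, g x = ∫⁻ x in s, ENNReal.ofReal |f' x| * g (f x) := by
  simpa only [ContinuousLinearMap.det_toSpanSingleton] using
    lintegral_image_eq_lintegral_abs_det_fderiv_mul volume hs
      (fun x hx => (hf' x hx).hasFDerivWithinAt) hf g

lemma beta_integral_Ioo {u v : ℝ} (hu : 0 < u) (hv : 0 < v) :
    IntegrableOn (fun x : ℝ => x ^ (u-1) * (1-x) ^ (v-1)) (Ioo (0:ℝ) 1) ∧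
    ∫ x in Ioo (0:ℝ) 1, x ^ (u-1) * (1-x) ^ (v-1)
      = Real.Gamma u * Real.Gamma v / Real.Gamma (u+v) := by
  have hconv := Complex.betaIntegral_convergent (u := u) (v := v) (by simpa) (by simpa)
  have hIoc : IntegrableOn (fun x : ℝ => (x:ℂ) ^ ((u:ℂ)-1) * (1-(x:ℂ)) ^ ((v:ℂ)-1))
      (Ioc (0:ℝ) 1) := by
    rwa [intervalIntegrable_iff_integrableOn_Ioc_of_le zero_le_one] at hconv
  have key : ∀ x ∈ Ioo (0:ℝ) 1,
      ((x ^ (u-1) * (1-x) ^ (v-1) : ℝ) : ℂ) = (x:ℂ) ^ ((u:ℂ)-1) * (1-(x:ℂ)) ^ ((v:ℂ)-1) := by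
    intro x hx
    push_cast
    rw [Complex.ofReal_cpow hx.1.le, Complex.ofReal_cpow (by linarith [hx.2] : (0:ℝ) ≤ 1 - x)]
    push_cast
    ring
  have hInt : IntegrableOn (fun x : ℝ => x ^ (u-1) * (1-x) ^ (v-1)) (Ioo (0:ℝ) 1) := by
    have : IntegrableOn (fun x : ℝ => (x:ℂ) ^ ((u:ℂ)-1) * (1-(x:ℂ)) ^ ((v:ℂ)-1))
        (Ioo (0:ℝ) 1) := hIoc.mono_set Ioo_subset_Ioc_self
    refine this.norm.congr ((ae_restrict_iff' measurableSet_Ioo).mpr (ae_of_all _ fun x hx => ?_))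
    simp only
    rw [← key x hx, Complex.norm_real, Real.norm_eq_abs, abs_of_nonneg]
    exact mul_nonneg (Real.rpow_nonneg hx.1.le _)
      (Real.rpow_nonneg (by linarith [hx.2] : (0:ℝ) ≤ 1 - x) _)
  refine ⟨hInt, ?_⟩
  have hG := Complex.Gamma_mul_Gamma_eq_betaIntegral
    (s := (u:ℂ)) (t := (v:ℂ)) (by simpa) (by simpa)
  have hGuv : Real.Gamma (u+v) ≠ 0 := (Real.Gamma_pos_of_pos (by linarith)).ne'
  have hbeta : Complex.betaIntegral u v = ((∫ x in Ioo (0:ℝ) 1, x ^ (u-1) * (1-x) ^ (v-1) : ℝ) : ℂ) := by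
    rw [Complex.betaIntegral, intervalIntegral.integral_of_le zero_le_one,
      integral_Ioc_eq_integral_Ioo]
    calc ∫ x in Ioo (0:ℝ) 1, (x:ℂ) ^ ((u:ℂ)-1) * (1-(x:ℂ)) ^ ((v:ℂ)-1)
        = ∫ x in Ioo (0:ℝ) 1, ((x ^ (u-1) * (1-x) ^ (v-1) : ℝ) : ℂ) :=
          setIntegral_congr_fun measurableSet_Ioo (fun x hx => (key x hx).symm)
      _ = _ := integral_ofReal
  rw [hbeta, ← Complex.ofReal_add, Complex.Gamma_ofReal, Complex.Gamma_ofReal,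
    Complex.Gamma_ofReal] at hG
  have : (↑(Real.Gamma u * Real.Gamma v) : ℂ)
      = ↑(Real.Gamma (u+v) * ∫ x in Ioo (0:ℝ) 1, x ^ (u-1) * (1-x) ^ (v-1)) := by
    push_cast; exact hG
  have hR := Complex.ofReal_injective this
  field_simp
  linarith [hR]

lemma beta_lintegral_Ioo {u v : ℝ} (hu : 0 < u) (hv : 0 < v) :
    ∫⁻ x in Ioo (0:ℝ) 1, ENNReal.ofReal (x ^ (u-1) * (1-x) ^ (v-1))
      = ENNReal.ofReal (Real.Gamma u * Real.Gamma v / Real.Gamma (u+v)) := by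
  obtain ⟨hInt, hval⟩ := beta_integral_Ioo hu hv
  rw [← hval, ← ofReal_integral_eq_lintegral_ofReal hInt]
  exact (ae_restrict_iff' measurableSet_Ioo).mpr (ae_of_all _ fun x hx =>
    mul_nonneg (Real.rpow_nonneg hx.1.le _)
      (Real.rpow_nonneg (by linarith [hx.2] : (0:ℝ) ≤ 1 - x) _))

lemma beta_lintegral_Ioi {u v : ℝ} (hu : 0 < u) (hv : 0 < v) :
    ∫⁻ t in Ioi (0:ℝ), ENNReal.ofReal (t ^ (u-1) * (1+t) ^ (-(u+v)))
      = ENNReal.ofReal (Real.Gamma u * Real.Gamma v / Real.Gamma (u+v)) := by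
  have himg : (fun x : ℝ => x / (1-x)) '' Ioo 0 1 = Ioi (0:ℝ) := by
    ext t
    simp only [mem_image, mem_Ioo, mem_Ioi]
    constructor
    · rintro ⟨x, ⟨hx0, hx1⟩, rfl⟩
      exact div_pos hx0 (by linarith)
    · intro ht
      refine ⟨t / (1+t), ⟨div_pos ht (by linarith), (div_lt_one (by linarith)).mpr (by linarith)⟩, ?_⟩
      have h1 : (1:ℝ) - t/(1+t) = 1/(1+t) := by field_simp; ring
      rw [h1]
      field_simp
  have hderiv : ∀ x ∈ Ioo (0:ℝ) 1,
      HasDerivWithinAt (fun x : ℝ => x / (1-x)) (1/(1-x)^2) (Ioo 0 1) x := by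
    intro x hx
    have h1 : (1:ℝ) - x ≠ 0 := by intro h; have := hx.2; nlinarith [hx.2]
    have := (hasDerivAt_id x).div ((hasDerivAt_id x).const_sub 1) h1
    have h2 : (1 * (1 - id x) - id x * -1) / (1 - id x) ^ 2 = 1/(1-x)^2 := by simp only [id]; ring
    rw [h2] at this
    exact this.hasDerivWithinAt
  have hinj : InjOn (fun x : ℝ => x / (1-x)) (Ioo 0 1) := by
    intro x hx y hy h
    have hx1 : (1:ℝ) - x ≠ 0 := by have := hx.2; intro hc; linarith [hx.2, (by linarith : (1:ℝ)-x = 0 → x = 1) hc]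
    have hy1 : (1:ℝ) - y ≠ 0 := by intro hc; have hy2 := hy.2; have : y = 1 := by linarith
                                   linarith
    field_simp at h
    linarith
  have := lintegral_image_eq_lintegral_abs_deriv_mul' measurableSet_Ioo hderiv hinj
    (fun t => ENNReal.ofReal (t ^ (u-1) * (1+t) ^ (-(u+v))))
  rw [himg] at this
  rw [this, ← beta_lintegral_Ioo hu hv]
  refine setLIntegral_congr_fun measurableSet_Ioo (fun x hx => ?_)
  have hx0 : 0 < x := hx.1
  have h1x : 0 < 1 - x := by linarith [hx.2]
  have habs : |1/(1-x)^2| = 1/(1-x)^2 := abs_of_pos (by positivity)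
  rw [habs, ← ENNReal.ofReal_mul (by positivity)]
  congr 1
  have h1 : (1:ℝ) + x/(1-x) = 1/(1-x) := by field_simp; ring
  rw [h1, Real.div_rpow hx0.le h1x.le, Real.div_rpow zero_le_one h1x.le, Real.one_rpow,
    Real.rpow_neg (by positivity)]
  rw [one_div ((((1:ℝ)-x)^(u+v))⁻¹), inv_inv]
  have e1 : (1-x)^(u+v) = (1-x)^(u-1) * ((1-x)^(v-1) * (1-x)^2) := by
    rw [← Real.rpow_two, ← Real.rpow_add h1x, ← Real.rpow_add h1x]
    congr 1; ring
  rw [e1]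
  have h2 : ((1-x):ℝ)^(u-1) ≠ 0 := (Real.rpow_pos_of_pos h1x _).ne'
  field_simp

lemma kernel_lintegral {p q s a b : ℝ} (hpq : p < q) (ha : 0 < a) (hb : 0 < b)
    (hs : 0 < s) (h1 : s*p < 1) (h2 : 1 < s*q) :
    ∫⁻ x in Ioi (0:ℝ), ENNReal.ofReal ((a * x^p + b * x^q) ^ (-s))
      = ENNReal.ofReal ((1/(q-p))
          * (Real.Gamma ((1-s*p)/(q-p)) * Real.Gamma (s - (1-s*p)/(q-p)) / Real.Gamma s)
          * a ^ (-(s - (1-s*p)/(q-p))) * b ^ (-((1-s*p)/(q-p)))) := by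
  have hqp : 0 < q - p := sub_pos.mpr hpq
  set m : ℝ := 1/(q-p) with hm
  set c : ℝ := a/b with hcdef
  set α : ℝ := (1-s*p)/(q-p) with hα
  have hmpos : 0 < m := by positivity
  have hc : 0 < c := by positivity
  have hαpos : 0 < α := div_pos (by linarith) hqp
  have hsα : 0 < s - α := by
    rw [hα, sub_div' hqp.ne', lt_div_iff₀ hqp]
    ring_nf
    nlinarith [h2]
  -- the substitution map
  have himg : (fun t : ℝ => (c*t)^m) '' Ioi 0 = Ioi (0:ℝ) := by
    ext y
    simp only [mem_image, mem_Ioi]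
    constructor
    · rintro ⟨t, ht, rfl⟩
      exact Real.rpow_pos_of_pos (mul_pos hc ht) _
    · intro hy
      refine ⟨y^(q-p)/c, by positivity, ?_⟩
      rw [mul_div_cancel₀ _ hc.ne', ← Real.rpow_mul hy.le,
        mul_one_div_cancel hqp.ne', Real.rpow_one]
  have hderiv : ∀ x ∈ Ioi (0:ℝ),
      HasDerivWithinAt (fun t : ℝ => (c*t)^m) (m * (c*x)^(m-1) * c) (Ioi 0) x := by
    intro x hx
    have hcx : c * x ≠ 0 := (mul_pos hc hx).ne'
    have h := (Real.hasDerivAt_rpow_const (p := m) (Or.inl hcx)).comp x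
      ((hasDerivAt_id x).const_mul c)
    have h' : HasDerivAt (fun t : ℝ => (c*t)^m) (m * (c*x)^(m-1) * (c*1)) x := h
    simpa using h'.hasDerivWithinAt
  have hinj : InjOn (fun t : ℝ => (c*t)^m) (Ioi 0) := by
    intro t1 h1' t2 h2' h
    simp only at h
    have e : ((c*t1)^m)^(q-p) = ((c*t2)^m)^(q-p) := by rw [h]
    rw [← Real.rpow_mul (mul_pos hc h1').le, ← Real.rpow_mul (mul_pos hc h2').le,
      hm, one_div_mul_cancel hqp.ne', Real.rpow_one, Real.rpow_one] at e
    exact mul_left_cancel₀ hc.ne' e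
  have := lintegral_image_eq_lintegral_abs_deriv_mul' measurableSet_Ioi hderiv hinj
    (fun x => ENNReal.ofReal ((a * x^p + b * x^q) ^ (-s)))
  rw [himg] at this
  rw [this]
  have key : ∀ t ∈ Ioi (0:ℝ),
      ENNReal.ofReal |m * (c*t)^(m-1) * c|
        * ENNReal.ofReal ((a * ((c*t)^m)^p + b * ((c*t)^m)^q) ^ (-s))
      = ENNReal.ofReal ((m * a^(-(s-α)) * b^(-α)) * (t^(α-1) * (1+t)^(-s))) := by
    intro t ht
    have ht' : 0 < t := ht
    have hw : 0 < c * t := mul_pos hc ht'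
    have habs : |m * (c*t)^(m-1) * c| = m * (c*t)^(m-1) * c :=
      abs_of_pos (by positivity)
    have hbw : b * (c*t) = a * t := by rw [hcdef]; field_simp
    have e1 : a * ((c*t)^m)^p + b * ((c*t)^m)^q = (c*t)^(m*p) * (a * (1+t)) := by
      rw [← Real.rpow_mul hw.le, ← Real.rpow_mul hw.le,
        show m*q = m*p + 1 by rw [hm]; field_simp; ring, Real.rpow_add hw, Real.rpow_one]
      linear_combination (c*t) ^ (m*p) * hbw
    have e2 : ((c*t)^(m*p) * (a*(1+t)))^(-s)
        = (c*t)^((m*p)*(-s)) * (a^(-s) * (1+t)^(-s)) := by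
      rw [Real.mul_rpow (Real.rpow_nonneg hw.le _) (by positivity),
        Real.mul_rpow ha.le (by positivity), ← Real.rpow_mul hw.le]
    have e4 : (c*t)^(m-1) * (c*t)^((m*p)*(-s)) = (c*t)^(α-1) := by
      rw [← Real.rpow_add hw]
      congr 1
      rw [hm, hα]
      field_simp
      ring
    have e5 : (c*t)^(α-1) = c^(α-1) * t^(α-1) := Real.mul_rpow hc.le ht'.le
    have e6 : c^(α-1) * c = c^α := by
      nth_rewrite 2 [← Real.rpow_one c]
      rw [← Real.rpow_add hc, sub_add_cancel]
    have e7 : c^α = a^α * b^(-α) := by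
      rw [hcdef, Real.div_rpow ha.le hb.le, Real.rpow_neg hb.le, div_eq_mul_inv]
    have e8 : a^α * a^(-s) = a^(-(s-α)) := by
      rw [← Real.rpow_add ha]; congr 1; ring
    rw [habs, e1, ← ENNReal.ofReal_mul (by positivity), e2]
    congr 1
    calc (m * (c*t)^(m-1) * c) * ((c*t)^((m*p)*(-s)) * (a^(-s) * (1+t)^(-s)))
        = m * (((c*t)^(m-1) * (c*t)^((m*p)*(-s))) * c) * (a^(-s) * (1+t)^(-s)) := by ring
      _ = m * ((c^(α-1) * c) * t^(α-1)) * (a^(-s) * (1+t)^(-s)) := by rw [e4, e5]; ring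
      _ = m * (a^α * b^(-α)) * t^(α-1) * (a^(-s) * (1+t)^(-s)) := by rw [e6, e7]; ring
      _ = (m * a^(-(s-α)) * b^(-α)) * (t^(α-1) * (1+t)^(-s)) := by rw [← e8]; ring
  rw [setLIntegral_congr_fun measurableSet_Ioi key]
  have hbeta := beta_lintegral_Ioi hαpos hsα
  rw [show α + (s-α) = s by ring] at hbeta
  simp_rw [ENNReal.ofReal_mul (by positivity : (0:ℝ) ≤ m * a^(-(s-α)) * b^(-α))]
  rw [lintegral_const_mul' _ _ ENNReal.ofReal_ne_top, hbeta,
    ← ENNReal.ofReal_mul (by positivity)]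
  congr 1
  rw [hm]
  ring

lemma reverse_holder {r : ℝ} (hr0 : 0 < r) (hr1 : r < 1) (f : ℝ → ℝ≥0∞) (hf : Measurable f)
    {g : ℝ → ℝ} (hg : Measurable g) (hgpos : ∀ x ∈ Ioi (0:ℝ), 0 < g x) :
    ∫⁻ x in Ioi (0:ℝ), f x ^ r
      ≤ (∫⁻ x in Ioi (0:ℝ), ENNReal.ofReal (g x) * f x) ^ r
        * (∫⁻ x in Ioi (0:ℝ), ENNReal.ofReal (g x) ^ (-(r/(1-r)))) ^ (1-r) := by
  have h1r : 0 < 1 - r := by linarith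
  have hpq : (1/r).HolderConjugate (1/(1-r)) := by
    rw [Real.holderConjugate_iff]
    constructor
    · rw [lt_div_iff₀ hr0, one_mul]; exact hr1
    · rw [one_div, one_div, inv_inv, inv_inv]; ring
  set F : ℝ → ℝ≥0∞ := fun x => (ENNReal.ofReal (g x) * f x) ^ r with hF
  set G : ℝ → ℝ≥0∞ := fun x => ENNReal.ofReal (g x) ^ (-r) with hG
  have hFm : Measurable F := ((hg.ennreal_ofReal.mul hf).pow measurable_const)
  have hGm : Measurable G := (hg.ennreal_ofReal.pow measurable_const)
  have hstep : ∫⁻ x in Ioi (0:ℝ), f x ^ r = ∫⁻ x in Ioi (0:ℝ), (F * G) x := by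
    refine (setLIntegral_congr_fun measurableSet_Ioi (fun x hx => ?_)).symm
    have hgx : (0:ℝ≥0∞) < ENNReal.ofReal (g x) := ENNReal.ofReal_pos.mpr (hgpos x hx)
    have hA0 : ENNReal.ofReal (g x) ^ r ≠ 0 := (ENNReal.rpow_pos hgx ENNReal.ofReal_ne_top).ne'
    have hAt : ENNReal.ofReal (g x) ^ r ≠ ∞ :=
      ENNReal.rpow_ne_top_of_nonneg hr0.le ENNReal.ofReal_ne_top
    simp only [Pi.mul_apply, hF, hG]
    rw [ENNReal.mul_rpow_of_nonneg _ _ hr0.le, ENNReal.rpow_neg, mul_right_comm,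
      ENNReal.mul_inv_cancel hA0 hAt, one_mul]
  rw [hstep]
  refine le_trans (ENNReal.lintegral_mul_le_Lp_mul_Lq _ hpq hFm.aemeasurable hGm.aemeasurable) ?_
  apply le_of_eq
  have e1 : ∀ x, F x ^ (1/r) = ENNReal.ofReal (g x) * f x := by
    intro x
    rw [hF, ← ENNReal.rpow_mul, mul_one_div_cancel hr0.ne', ENNReal.rpow_one]
  have e2 : ∀ x, G x ^ (1/(1-r)) = ENNReal.ofReal (g x) ^ (-(r/(1-r))) := by
    intro x
    rw [hG, ← ENNReal.rpow_mul]
    congr 1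
    field_simp
  simp_rw [e1, e2, one_div_one_div]

/-- **Two-moment inequality (Proposition 2).** For a nonnegative measurable function `f`
on `(0,∞)` and `0 < r < 1`, `p < 1/r - 1 < q`, with `λ = (q+1-1/r)/(q-p)`:
`‖f‖_r ≤ ψ_r(p,q)^{(1-r)/r} μ_p(f)^λ μ_q(f)^{1-λ}`, all quantities interpreted in `[0,∞]`
so that the inequality is trivial when a moment diverges. -/
theorem two_moment_inequality
    (f : ℝ → ℝ≥0∞) (hf : Measurable f)
    (p q r : ℝ) (hr0 : 0 < r) (hr1 : r < 1)
    (hp : p < 1 / r - 1) (hq : 1 / r - 1 < q) :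
    (∫⁻ x in Ioi (0 : ℝ), f x ^ r) ^ (1 / r)
      ≤ ENNReal.ofReal (psi r p q) ^ ((1 - r) / r)
        * (∫⁻ x in Ioi (0 : ℝ), ENNReal.ofReal (x ^ p) * f x) ^ ((q + 1 - 1 / r) / (q - p))
        * (∫⁻ x in Ioi (0 : ℝ), ENNReal.ofReal (x ^ q) * f x) ^ (1 - (q + 1 - 1 / r) / (q - p)) := by
  have h1r : 0 < 1 - r := by linarith
  have hqp : 0 < q - p := by linarith
  set l : ℝ := (q + 1 - 1 / r) / (q - p) with hldef
  set s : ℝ := r / (1 - r) with hsdef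
  have hs : 0 < s := by positivity
  have hl : 0 < l := div_pos (by linarith) hqp
  have h1l : 0 < 1 - l := by
    rw [hldef, sub_div' hqp.ne']
    apply div_pos _ hqp
    linarith
  have hl1 : l < 1 := by linarith
  have hsp : s * p < 1 := by
    rw [hsdef, div_mul_eq_mul_div, div_lt_one h1r]
    have h1 : 1 / r - 1 = (1 - r) / r := by field_simp
    rw [h1, lt_div_iff₀ hr0] at hp
    nlinarith
  have hsq : 1 < s * q := by
    rw [hsdef, div_mul_eq_mul_div, lt_div_iff₀ h1r]
    have h1 : 1 / r - 1 = (1 - r) / r := by field_simp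
    rw [h1, div_lt_iff₀ hr0] at hq
    nlinarith
  set A1 : ℝ := r * l / (1 - r) with hA1def
  set A2 : ℝ := r * (1 - l) / (1 - r) with hA2def
  have hA1pos : 0 < A1 := by positivity
  have hA2pos : 0 < A2 := by positivity
  have hA1s : A1 = s * l := by rw [hA1def, hsdef]; ring
  have hA2s : A2 = s * (1 - l) := by rw [hA2def, hsdef]; ring
  have hA12 : A1 + A2 = s := by rw [hA1s, hA2s]; ring
  set G0 : ℝ := (1 / (q - p)) * (Real.Gamma A1 * Real.Gamma A2 / Real.Gamma s) with hG0def
  have hG0pos : 0 < G0 := by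
    have := Real.Gamma_pos_of_pos hA1pos
    have := Real.Gamma_pos_of_pos hA2pos
    have := Real.Gamma_pos_of_pos hs
    positivity
  have hpsi : psi r p q = G0 * (s ^ s * A1 ^ (-A1) * A2 ^ (-A2)) := by
    rw [psi, Btilde, ← hldef, ← hA1def, ← hA2def, hA12, hG0def]
    ring
  have hpsipos : 0 < psi r p q := by
    rw [hpsi]
    have h1 := Real.rpow_pos_of_pos hs s
    have h2 := Real.rpow_pos_of_pos hA1pos (-A1)
    have h3 := Real.rpow_pos_of_pos hA2pos (-A2)
    positivity
  set A : ℝ≥0∞ := ∫⁻ x in Ioi (0 : ℝ), ENNReal.ofReal (x ^ p) * f x with hAdef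
  set B : ℝ≥0∞ := ∫⁻ x in Ioi (0 : ℝ), ENNReal.ofReal (x ^ q) * f x with hBdef
  have hmp : Measurable fun x : ℝ => ENNReal.ofReal (x ^ p) * f x :=
    ((measurable_id.pow measurable_const).ennreal_ofReal).mul hf
  have hmq : Measurable fun x : ℝ => ENNReal.ofReal (x ^ q) * f x :=
    ((measurable_id.pow measurable_const).ennreal_ofReal).mul hf
  have hpsinz : ENNReal.ofReal (psi r p q) ^ ((1 - r) / r) ≠ 0 :=
    (ENNReal.rpow_pos (ENNReal.ofReal_pos.mpr hpsipos) ENNReal.ofReal_ne_top).ne'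
  -- corner case: one of the moments vanishes, then f = 0 a.e.
  by_cases hA0 : A = 0
  · have hz := (lintegral_eq_zero_iff hmp).mp hA0
    have : ∫⁻ x in Ioi (0 : ℝ), f x ^ r = 0 := by
      rw [lintegral_eq_zero_iff (hf.pow measurable_const)]
      filter_upwards [hz, self_mem_ae_restrict measurableSet_Ioi] with x hx1 hx2
      have hxp : ENNReal.ofReal (x ^ p) ≠ 0 :=
        (ENNReal.ofReal_pos.mpr (Real.rpow_pos_of_pos hx2 p)).ne'
      have hfx : f x = 0 := by
        rcases mul_eq_zero.mp hx1 with h | h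
        · exact absurd h hxp
        · exact h
      simp [hfx, ENNReal.zero_rpow_of_pos hr0]
    rw [this, ENNReal.zero_rpow_of_pos (by positivity)]
    exact zero_le
  by_cases hB0 : B = 0
  · have hz := (lintegral_eq_zero_iff hmq).mp hB0
    have : ∫⁻ x in Ioi (0 : ℝ), f x ^ r = 0 := by
      rw [lintegral_eq_zero_iff (hf.pow measurable_const)]
      filter_upwards [hz, self_mem_ae_restrict measurableSet_Ioi] with x hx1 hx2
      have hxp : ENNReal.ofReal (x ^ q) ≠ 0 :=
        (ENNReal.ofReal_pos.mpr (Real.rpow_pos_of_pos hx2 q)).ne'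
      have hfx : f x = 0 := by
        rcases mul_eq_zero.mp hx1 with h | h
        · exact absurd h hxp
        · exact h
      simp [hfx, ENNReal.zero_rpow_of_pos hr0]
    rw [this, ENNReal.zero_rpow_of_pos (by positivity)]
    exact zero_le
  -- corner case: one of the moments is infinite, then RHS = ∞
  by_cases hAt : A = ⊤
  · rw [hAt, ENNReal.top_rpow_of_pos hl, ENNReal.mul_top hpsinz, ENNReal.top_mul]
    · exact le_top
    · intro h
      rcases (ENNReal.rpow_eq_zero_iff).mp h with ⟨h1, _⟩ | ⟨_, h2⟩
      · exact hB0 h1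
      · linarith
  by_cases hBt : B = ⊤
  · rw [hBt, ENNReal.top_rpow_of_pos h1l, ENNReal.mul_top]
    · exact le_top
    · intro h
      rcases mul_eq_zero.mp h with h | h
      · exact hpsinz h
      · rcases (ENNReal.rpow_eq_zero_iff).mp h with ⟨h1, _⟩ | ⟨_, h2⟩
        · exact hA0 h1
        · linarith
  -- main case
  set Ar : ℝ := A.toReal with hArdef
  set Br : ℝ := B.toReal with hBrdef
  have hArpos : 0 < Ar := ENNReal.toReal_pos hA0 hAt
  have hBrpos : 0 < Br := ENNReal.toReal_pos hB0 hBt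
  have hAR : A = ENNReal.ofReal Ar := (ENNReal.ofReal_toReal hAt).symm
  have hBR : B = ENNReal.ofReal Br := (ENNReal.ofReal_toReal hBt).symm
  set a : ℝ := l / Ar with hadef
  set b : ℝ := (1 - l) / Br with hbdef
  have hapos : 0 < a := by positivity
  have hbpos : 0 < b := by positivity
  have hgmeas : Measurable fun x : ℝ => a * x ^ p + b * x ^ q :=
    (((measurable_id.pow measurable_const).const_mul a).add
      ((measurable_id.pow measurable_const).const_mul b))
  have hgpos : ∀ x ∈ Ioi (0:ℝ), 0 < a * x ^ p + b * x ^ q := by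
    intro x hx
    have hx' : (0:ℝ) < x := hx
    have := Real.rpow_pos_of_pos hx' p
    have := Real.rpow_pos_of_pos hx' q
    positivity
  have H := reverse_holder hr0 hr1 f hf hgmeas hgpos
  -- first factor: the mixed moment equals 1
  have M1 : ∫⁻ x in Ioi (0:ℝ), ENNReal.ofReal (a * x ^ p + b * x ^ q) * f x = 1 := by
    have step : ∀ x ∈ Ioi (0:ℝ), ENNReal.ofReal (a * x ^ p + b * x ^ q) * f x
        = ENNReal.ofReal a * (ENNReal.ofReal (x ^ p) * f x)
          + ENNReal.ofReal b * (ENNReal.ofReal (x ^ q) * f x) := by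
      intro x hx
      have hx' : (0:ℝ) < x := hx
      rw [ENNReal.ofReal_add (by positivity) (by positivity),
        ENNReal.ofReal_mul hapos.le, ENNReal.ofReal_mul hbpos.le, add_mul, mul_assoc, mul_assoc]
    rw [setLIntegral_congr_fun measurableSet_Ioi step,
      lintegral_add_left (hmp.const_mul _),
      lintegral_const_mul' _ _ ENNReal.ofReal_ne_top,
      lintegral_const_mul' _ _ ENNReal.ofReal_ne_top, ← hAdef, ← hBdef, hAR, hBR,
      ← ENNReal.ofReal_mul hapos.le, ← ENNReal.ofReal_mul hbpos.le,
      hadef, hbdef, div_mul_cancel₀ _ hArpos.ne', div_mul_cancel₀ _ hBrpos.ne',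
      ← ENNReal.ofReal_add hl.le h1l.le]
    norm_num
  -- second factor: the kernel integral
  set K : ℝ := (1/(q-p))
      * (Real.Gamma ((1-s*p)/(q-p)) * Real.Gamma (s - (1-s*p)/(q-p)) / Real.Gamma s)
      * a ^ (-(s - (1-s*p)/(q-p))) * b ^ (-((1-s*p)/(q-p))) with hKdef
  have M2 : ∫⁻ x in Ioi (0:ℝ), ENNReal.ofReal (a * x ^ p + b * x ^ q) ^ (-(r/(1-r)))
      = ENNReal.ofReal K := by
    have step : ∀ x ∈ Ioi (0:ℝ),
        ENNReal.ofReal (a * x ^ p + b * x ^ q) ^ (-(r/(1-r)))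
        = ENNReal.ofReal ((a * x ^ p + b * x ^ q) ^ (-s)) := by
      intro x hx
      rw [← hsdef, ENNReal.ofReal_rpow_of_pos (hgpos x hx)]
    rw [setLIntegral_congr_fun measurableSet_Ioi step,
      kernel_lintegral (by linarith) hapos hbpos hs hsp hsq, hKdef]
  rw [M1, M2, ENNReal.one_rpow, one_mul] at H
  -- express α in terms of A1, A2
  have hα2 : (1 - s*p)/(q-p) = A2 := by
    rw [hA2s, hsdef, hldef]
    field_simp
    ring
  have hα1 : s - (1 - s*p)/(q-p) = A1 := by
    rw [hα2, ← hA12]; ring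
  have hKpos : 0 < K := by
    have h1 := Real.Gamma_pos_of_pos hA1pos
    have h2 := Real.Gamma_pos_of_pos hA2pos
    have h3 := Real.Gamma_pos_of_pos hs
    have h4 := Real.rpow_pos_of_pos hapos (-(s - (1-s*p)/(q-p)))
    have h5 := Real.rpow_pos_of_pos hbpos (-((1-s*p)/(q-p)))
    rw [hKdef, hα1, hα2]
    rw [hα1] at h4
    rw [hα2] at h5
    positivity
  -- raise to power 1/r
  have H2 : (∫⁻ x in Ioi (0 : ℝ), f x ^ r) ^ (1/r)
      ≤ ENNReal.ofReal K ^ ((1-r)/r) := by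
    calc (∫⁻ x in Ioi (0 : ℝ), f x ^ r) ^ (1/r)
        ≤ (ENNReal.ofReal K ^ (1-r)) ^ (1/r) :=
          ENNReal.rpow_le_rpow H (by positivity)
      _ = ENNReal.ofReal K ^ ((1-r)/r) := by
          rw [← ENNReal.rpow_mul]
          congr 1
          ring
  refine H2.trans (le_of_eq ?_)
  -- final identity between the constants
  rw [ENNReal.ofReal_rpow_of_pos hKpos, ENNReal.ofReal_rpow_of_pos hpsipos,
    hAR, hBR,
    ENNReal.ofReal_rpow_of_pos hArpos, ENNReal.ofReal_rpow_of_pos hBrpos,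
    ← ENNReal.ofReal_mul (by positivity), ← ENNReal.ofReal_mul (by positivity)]
  congr 1
  -- real-valued identity
  have he1 : (-A1) * ((1-r)/r) = -l := by
    rw [hA1def]; field_simp
  have he2 : (-A2) * ((1-r)/r) = -(1-l) := by
    rw [hA2def]; field_simp
  have hes : s * ((1-r)/r) = 1 := by
    rw [hsdef]; field_simp
  have hK' : K = G0 * a ^ (-A1) * b ^ (-A2) := by
    rw [hKdef, hα1, hα2, hG0def]; ring
  have hdiv : ∀ c d e : ℝ, 0 < c → 0 < d →
      (c / d) ^ (-e) = c ^ (-e) * d ^ e := by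
    intro c d e hc hd
    rw [Real.div_rpow hc.le hd.le, Real.rpow_neg hc.le, Real.rpow_neg hd.le,
      div_eq_mul_inv, inv_inv, ← Real.rpow_neg hc.le]
  have hKe : K ^ ((1-r)/r)
      = G0 ^ ((1-r)/r) * (l ^ (-l) * (1-l) ^ (-(1-l))) * (Ar ^ l * Br ^ (1-l)) := by
    rw [hK', Real.mul_rpow (by positivity) (by positivity),
      Real.mul_rpow (by positivity) (by positivity),
      ← Real.rpow_mul hapos.le, ← Real.rpow_mul hbpos.le, he1, he2,
      hadef, hbdef, hdiv l Ar l hl hArpos, hdiv (1-l) Br (1-l) h1l hBrpos]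
    ring
  have hpsie : psi r p q ^ ((1-r)/r)
      = G0 ^ ((1-r)/r) * (l ^ (-l) * (1-l) ^ (-(1-l))) := by
    have hsl := mul_pos hs hl
    have hs1l := mul_pos hs h1l
    have split1 : (s ^ s * A1 ^ (-A1) * A2 ^ (-A2)) ^ ((1-r)/r)
        = (s ^ s) ^ ((1-r)/r) * (A1 ^ (-A1)) ^ ((1-r)/r) * (A2 ^ (-A2)) ^ ((1-r)/r) := by
      rw [Real.mul_rpow (by positivity) (by positivity),
        Real.mul_rpow (by positivity) (by positivity)]
    rw [hpsi, Real.mul_rpow hG0pos.le (by positivity), split1,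
      ← Real.rpow_mul hs.le, hes, Real.rpow_one,
      ← Real.rpow_mul hA1pos.le, ← Real.rpow_mul hA2pos.le, he1, he2,
      hA1s, hA2s,
      Real.mul_rpow hs.le hl.le, Real.mul_rpow hs.le h1l.le]
    have hsone : s * (s ^ (-l) * s ^ (-(1-l))) = 1 := by
      rw [← Real.rpow_add hs]
      nth_rewrite 1 [← Real.rpow_one s]
      rw [← Real.rpow_add hs, show (1:ℝ) + (-l + -(1-l)) = 0 by ring, Real.rpow_zero]
    calc G0 ^ ((1-r)/r) * (s * (s ^ (-l) * l ^ (-l)) * (s ^ (-(1-l)) * (1-l) ^ (-(1-l))))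
        = G0 ^ ((1-r)/r) * (l ^ (-l) * (1-l) ^ (-(1-l))) * (s * (s ^ (-l) * s ^ (-(1-l)))) := by
          ring
      _ = G0 ^ ((1-r)/r) * (l ^ (-l) * (1-l) ^ (-(1-l))) := by rw [hsone, mul_one]
  rw [hKe, hpsie]
  ring
end

section
/- Let X = exp(W) where W ~ N(μ, σ²) with σ² > 0, so that X is lognormal. Then for every 0 < r < 1, the infimum over all p, q with p < 1/r − 1 < q of Δ_r(X; p, q) does not depend on (μ, σ²) and equals log( B̃( r/(2(1−r)), r/(2(1−r)) ) · √( r/(4(1−r)) ) ) + 1/2 − (1/2) log( 2π · r^{1/(r−1)} ). -/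
open MeasureTheory Set
open scoped ENNReal NNReal Real ProbabilityTheory

open Filter ProbabilityTheory

lemma pdf_shift (μ : ℝ) {v : ℝ≥0} (hv : v ≠ 0) (p x : ℝ) :
    gaussianPDFReal μ v x * Real.exp (p * x)
      = Real.exp (p * μ + p ^ 2 * v / 2) * gaussianPDFReal (μ + p * v) v x := by
  have hv' : (0:ℝ) < v := lt_of_le_of_ne v.coe_nonneg (by exact_mod_cast (Ne.symm hv))
  unfold gaussianPDFReal
  have key : Real.exp (- (x - μ)^2 / (2 * v)) * Real.exp (p * x)
      = Real.exp (p * μ + p ^ 2 * v / 2) * Real.exp (- (x - (μ + p * v))^2 / (2 * v)) := by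
    rw [← Real.exp_add, ← Real.exp_add]
    congr 1
    field_simp
    ring
  linear_combination (√(2 * π * (v:ℝ)))⁻¹ * key

lemma integral_exp_gaussian (μ : ℝ) {v : ℝ≥0} (hv : v ≠ 0) (p : ℝ) :
    ∫ x, Real.exp (p * x) ∂(gaussianReal μ v) = Real.exp (p * μ + p ^ 2 * v / 2) := by
  rw [gaussianReal_of_var_ne_zero μ hv]
  have hd : gaussianPDF μ v = fun x => ((Real.toNNReal (gaussianPDFReal μ v x) : ℝ≥0) : ℝ≥0∞) :=
    rfl
  rw [hd, integral_withDensity_eq_integral_smul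
    ((measurable_gaussianPDFReal μ v).real_toNNReal)]
  have : ∀ x, (Real.toNNReal (gaussianPDFReal μ v x)) • Real.exp (p * x)
      = Real.exp (p * μ + p ^ 2 * v / 2) * gaussianPDFReal (μ + p * v) v x := by
    intro x
    rw [NNReal.smul_def, smul_eq_mul, Real.coe_toNNReal _ (gaussianPDFReal_nonneg μ v x),
      pdf_shift μ hv p x]
  simp only [this]
  rw [integral_const_mul, integral_gaussianPDFReal_eq_one _ hv, mul_one]
noncomputable def gfun (y : ℝ) : ℝ := (y + 1/2) * (Real.log (y+1) - Real.log y)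

noncomputable def gfun1 (y : ℝ) : ℝ :=
  (Real.log (y+1) - Real.log y) + (y + 1/2) * ((y+1)⁻¹ - y⁻¹)

noncomputable def gfun2 (y : ℝ) : ℝ :=
  2 * ((y+1)⁻¹ - y⁻¹) + (y + 1/2) * (-((y+1)^2)⁻¹ + (y^2)⁻¹)

lemma hasDerivAt_gfun {y : ℝ} (hy : 0 < y) : HasDerivAt gfun (gfun1 y) y := by
  have h1 : HasDerivAt (fun y : ℝ => y + 1/2) 1 y := (hasDerivAt_id y).add_const _
  have h2 : HasDerivAt (fun y : ℝ => Real.log (y+1) - Real.log y) ((y+1)⁻¹ - y⁻¹) y := by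
    simpa [one_div, Pi.sub_def] using (((hasDerivAt_id y).add_const 1).log (by positivity)).sub
      (Real.hasDerivAt_log hy.ne')
  have h := h1.mul h2
  have : 1 * (Real.log (y+1) - Real.log y) + (y + 1/2) * ((y+1)⁻¹ - y⁻¹) = gfun1 y := by
    unfold gfun1; ring
  rw [← this]
  exact h

lemma hasDerivAt_gfun1 {y : ℝ} (hy : 0 < y) : HasDerivAt gfun1 (gfun2 y) y := by
  have h1 : HasDerivAt (fun y : ℝ => y + 1/2) 1 y := (hasDerivAt_id y).add_const _
  have h2 : HasDerivAt (fun y : ℝ => Real.log (y+1) - Real.log y) ((y+1)⁻¹ - y⁻¹) y := by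
    simpa [one_div, Pi.sub_def] using (((hasDerivAt_id y).add_const 1).log (by positivity)).sub
      (Real.hasDerivAt_log hy.ne')
  have ha : HasDerivAt (fun y : ℝ => (y+1)⁻¹) (-((y+1)^2)⁻¹) y := by
    simpa [neg_div, one_div, Pi.inv_def] using ((hasDerivAt_id y).add_const 1).inv (by positivity)
  have hb : HasDerivAt (fun y : ℝ => y⁻¹) (-(y^2)⁻¹) y := by
    simpa [neg_div, one_div, Pi.inv_def] using (hasDerivAt_id y).inv hy.ne'
  have h3 : HasDerivAt (fun y : ℝ => (y+1)⁻¹ - y⁻¹) (-((y+1)^2)⁻¹ + (y^2)⁻¹) y := by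
    simpa [sub_eq_add_neg, Pi.add_def, Pi.neg_def] using ha.sub hb
  have h := h2.add (h1.mul h3)
  have : ((y+1)⁻¹ - y⁻¹) + (1 * ((y+1)⁻¹ - y⁻¹) + (y + 1/2) * (-((y+1)^2)⁻¹ + (y^2)⁻¹))
      = gfun2 y := by unfold gfun2; ring
  rw [← this]
  exact h

lemma gfun2_nonneg {y : ℝ} (hy : 0 < y) : 0 ≤ gfun2 y := by
  have h : gfun2 y = (2 * y^2 * (y+1)^2)⁻¹ := by
    unfold gfun2
    field_simp
    ring
  rw [h]
  positivity

lemma convexOn_gfun : ConvexOn ℝ (Ioi (0:ℝ)) gfun := by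
  have hder : ∀ x ∈ Ioi (0:ℝ), deriv gfun x = gfun1 x := fun x hx =>
    (hasDerivAt_gfun hx).deriv
  refine convexOn_of_deriv2_nonneg (convex_Ioi 0) ?_ ?_ ?_ ?_
  · intro x hx
    exact ((hasDerivAt_gfun hx).continuousAt).continuousWithinAt
  · rw [interior_Ioi]
    intro x hx
    exact ((hasDerivAt_gfun hx).differentiableAt).differentiableWithinAt
  · rw [interior_Ioi]
    intro x hx
    refine DifferentiableAt.differentiableWithinAt ?_
    have heq : deriv gfun =ᶠ[nhds x] gfun1 := by
      filter_upwards [IsOpen.mem_nhds isOpen_Ioi hx] with z hz using hder z hz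
    exact (heq.differentiableAt_iff).mpr (hasDerivAt_gfun1 hx).differentiableAt
  · rw [interior_Ioi]
    intro x hx
    have heq : deriv gfun =ᶠ[nhds x] gfun1 := by
      filter_upwards [IsOpen.mem_nhds isOpen_Ioi hx] with z hz using hder z hz
    have h2 : deriv (deriv gfun) x = gfun2 x := by
      rw [heq.deriv_eq]
      exact (hasDerivAt_gfun1 hx).deriv
    simp only [Function.iterate_succ, Function.iterate_zero, Function.comp, id]
    rw [h2]
    exact gfun2_nonneg hx




noncomputable def philog (x : ℝ) : ℝ := Real.log (Real.Gamma x) - (x - 1/2) * Real.log x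

lemma philog_step {x : ℝ} (hx : 0 < x) : philog x = gfun x + philog (x+1) := by
  have hΓ : Real.Gamma (x+1) = x * Real.Gamma x := Real.Gamma_add_one hx.ne'
  have hΓpos : 0 < Real.Gamma x := Real.Gamma_pos_of_pos hx
  unfold philog gfun
  rw [hΓ, Real.log_mul hx.ne' hΓpos.ne']
  ring

lemma philog_tele {x : ℝ} (hx : 0 < x) (n : ℕ) :
    philog x = (∑ k ∈ Finset.range n, gfun (x + k)) + philog (x + n) := by
  induction n with
  | zero => simp
  | succ n ih =>
    rw [ih, Finset.sum_range_succ]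
    have h : philog (x + n) = gfun (x + n) + philog (x + n + 1) :=
      philog_step (by positivity)
    rw [h]
    push_cast
    ring_nf

lemma midpoint_le_of_convexOn {f : ℝ → ℝ} (hf : ConvexOn ℝ (Ioi (0:ℝ)) f)
    {a b : ℝ} (ha : 0 < a) (hb : 0 < b) :
    2 * f ((a+b)/2) ≤ f a + f b := by
  have := hf.2 (mem_Ioi.2 ha) (mem_Ioi.2 hb) (by norm_num : (0:ℝ) ≤ 1/2)
    (by norm_num : (0:ℝ) ≤ 1/2) (by norm_num)
  simp only [smul_eq_mul] at this
  have h2 : (1/2 : ℝ) * a + (1/2) * b = (a+b)/2 := by ring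
  rw [h2] at this
  linarith

lemma tendsto_term (c : ℝ) (hc : 0 < c) :
    Tendsto (fun n : ℕ => (c + n - 1/2) * (Real.log (c + n) - Real.log n)) atTop (nhds c) := by
  have hlog : ∀ᶠ n : ℕ in atTop, Real.log (c + n) - Real.log n = Real.log (1 + c / n) := by
    filter_upwards [eventually_gt_atTop 0] with n hn
    have hn' : (0:ℝ) < n := by exact_mod_cast hn
    rw [← Real.log_div (by positivity) hn'.ne']
    congr 1
    field_simp
    ring
  have h1 : Tendsto (fun n : ℕ => (n:ℝ) * Real.log (1 + c / n)) atTop (nhds c) :=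
    (Real.tendsto_mul_log_one_add_div_atTop c).comp tendsto_natCast_atTop_atTop
  have h0 : Tendsto (fun n : ℕ => Real.log (1 + c / n)) atTop (nhds 0) := by
    have : Tendsto (fun n : ℕ => 1 + c / n) atTop (nhds 1) := by
      have := (tendsto_const_nhds (x := c)).div_atTop (tendsto_natCast_atTop_atTop (R := ℝ))
      simpa using (tendsto_const_nhds (x := (1:ℝ))).add this
    have := (Real.continuousAt_log (by norm_num : (1:ℝ) ≠ 0)).tendsto.comp this
    simpa [Function.comp_def] using this
  have h2 : Tendsto (fun n : ℕ => (c - 1/2) * Real.log (1 + c / n)) atTop (nhds 0) := by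
    simpa using h0.const_mul (c - 1/2)
  have h3 : Tendsto (fun n : ℕ => (c + n - 1/2) * Real.log (1 + c / n)) atTop (nhds c) := by
    have := h1.add h2
    rw [add_zero] at this
    refine this.congr (fun n => ?_)
    ring
  refine Tendsto.congr' ?_ h3
  filter_upwards [hlog] with n hn
  rw [hn]

lemma philog_midpoint {a b : ℝ} (ha : 0 < a) (hb : 0 < b) :
    2 * philog ((a+b)/2) ≤ philog a + philog b := by
  set m := (a+b)/2 with hm
  have hmpos : 0 < m := by rw [hm]; positivity
  have key : ∀ n : ℕ, philog (a+n) + philog (b+n) - 2 * philog (m+n)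
      ≤ philog a + philog b - 2 * philog m := by
    intro n
    have ha' := philog_tele ha n
    have hb' := philog_tele hb n
    have hm' := philog_tele hmpos n
    have hsum : 0 ≤ ∑ k ∈ Finset.range n, (gfun (a+k) + gfun (b+k) - 2 * gfun (m+k)) := by
      apply Finset.sum_nonneg
      intro k _
      have h := midpoint_le_of_convexOn convexOn_gfun
        (by positivity : (0:ℝ) < a + k) (by positivity : (0:ℝ) < b + k)
      have he : (a + k + (b + k))/2 = m + k := by rw [hm]; ring
      rw [he] at h
      linarith
    have hsplit : ∑ k ∈ Finset.range n, (gfun (a+k) + gfun (b+k) - 2 * gfun (m+k))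
        = (∑ k ∈ Finset.range n, gfun (a+k)) + (∑ k ∈ Finset.range n, gfun (b+k))
          - 2 * ∑ k ∈ Finset.range n, gfun (m+k) := by
      rw [Finset.sum_sub_distrib, Finset.sum_add_distrib, Finset.mul_sum]
    linarith
  have hGam : ∀ n : ℕ,
      0 ≤ Real.log (Real.Gamma (a+n)) + Real.log (Real.Gamma (b+n))
        - 2 * Real.log (Real.Gamma (m+n)) := by
    intro n
    have h := midpoint_le_of_convexOn Real.convexOn_log_Gamma
      (by positivity : (0:ℝ) < a + n) (by positivity : (0:ℝ) < b + n)
    have he : (a + n + (b + n))/2 = m + n := by rw [hm]; ring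
    rw [he] at h
    simp only [Function.comp] at h
    linarith
  -- T n
  set T : ℕ → ℝ := fun n =>
    (a+n-1/2) * Real.log (a+n) + (b+n-1/2) * Real.log (b+n)
      - 2 * ((m+n-1/2) * Real.log (m+n)) with hT
  have hE : ∀ n : ℕ, -(T n) ≤ philog a + philog b - 2 * philog m := by
    intro n
    have h1 := key n
    have h2 := hGam n
    have hexp : philog (a+n) + philog (b+n) - 2 * philog (m+n)
        = (Real.log (Real.Gamma (a+n)) + Real.log (Real.Gamma (b+n))
            - 2 * Real.log (Real.Gamma (m+n))) - T n := by
      unfold philog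
      rw [hT]
      ring
    linarith [hexp ▸ h1]
  have hTto : Tendsto T atTop (nhds 0) := by
    have hu := ((tendsto_term a ha).add (tendsto_term b hb)).sub
      ((tendsto_term m hmpos).const_mul 2)
    have : a + b - 2 * m = 0 := by rw [hm]; ring
    rw [this] at hu
    refine Tendsto.congr (fun n => ?_) hu
    rw [hT]
    have hm2 : 2 * m = a + b := by rw [hm]; ring
    linear_combination (Real.log (n:ℝ)) * hm2
  have := le_of_tendsto' (hTto.neg.congr (fun n => rfl)) hE
  simp only [neg_zero] at this
  linarith






lemma Btilde_pos {a b : ℝ} (ha : 0 < a) (hb : 0 < b) : 0 < Btilde a b := by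
  unfold Btilde
  have h1 : 0 < Real.Gamma a := Real.Gamma_pos_of_pos ha
  have h2 : 0 < Real.Gamma b := Real.Gamma_pos_of_pos hb
  have h3 : 0 < Real.Gamma (a+b) := Real.Gamma_pos_of_pos (by linarith)
  have h4 : (0:ℝ) < (a+b) ^ (a+b) := Real.rpow_pos_of_pos (by linarith) _
  have h5 : (0:ℝ) < a ^ (-a) := Real.rpow_pos_of_pos ha _
  have h6 : (0:ℝ) < b ^ (-b) := Real.rpow_pos_of_pos hb _
  positivity

lemma log_Btilde {a b : ℝ} (ha : 0 < a) (hb : 0 < b) :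
    Real.log (Btilde a b)
      = Real.log (Real.Gamma a) + Real.log (Real.Gamma b) - Real.log (Real.Gamma (a+b))
        + (a+b) * Real.log (a+b) - a * Real.log a - b * Real.log b := by
  unfold Btilde
  have h1 : 0 < Real.Gamma a := Real.Gamma_pos_of_pos ha
  have h2 : 0 < Real.Gamma b := Real.Gamma_pos_of_pos hb
  have h3 : 0 < Real.Gamma (a+b) := Real.Gamma_pos_of_pos (by linarith)
  have h4 : (0:ℝ) < (a+b) ^ (a+b) := Real.rpow_pos_of_pos (by linarith) _
  have h5 : (0:ℝ) < a ^ (-a) := Real.rpow_pos_of_pos ha _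
  have h6 : (0:ℝ) < b ^ (-b) := Real.rpow_pos_of_pos hb _
  rw [Real.log_mul (by positivity) h6.ne', Real.log_mul (by positivity) h5.ne',
    Real.log_mul (by positivity) h4.ne', Real.log_div (by positivity) h3.ne',
    Real.log_mul h1.ne' h2.ne', Real.log_rpow (by linarith), Real.log_rpow ha,
    Real.log_rpow hb]
  ring

lemma step2 {a b : ℝ} (ha : 0 < a) (hb : 0 < b) :
    Real.log (Btilde ((a+b)/2) ((a+b)/2)) + (1/2) * Real.log ((a+b)/4)
      ≤ Real.log (Btilde a b) + (1/2) * Real.log a + (1/2) * Real.log b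
        - (1/2) * Real.log (a+b) := by
  have hm : 0 < (a+b)/2 := by positivity
  have h := philog_midpoint ha hb
  unfold philog at h
  rw [log_Btilde ha hb, log_Btilde hm hm]
  have h2 : (a+b)/2 + (a+b)/2 = a + b := by ring
  rw [h2]
  have e1 : Real.log ((a+b)/4) = Real.log ((a+b)/2) - Real.log 2 := by
    rw [← Real.log_div hm.ne' (by norm_num)]
    congr 1
    ring
  have e2 : Real.log (a+b) = Real.log ((a+b)/2) + Real.log 2 := by
    rw [← Real.log_mul hm.ne' (by norm_num)]
    congr 1
    ring
  rw [e1, e2]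
  ring_nf
  ring_nf at h
  linarith

lemma step1 {A t : ℝ} (hA : 0 < A) (ht : 0 < t) :
    Real.log t ≤ A * t^2 - 1/2 - (1/2) * Real.log (2*A) := by
  have h := Real.log_le_sub_one_of_pos (show (0:ℝ) < 2*A*t^2 by positivity)
  rw [Real.log_mul (by positivity) (by positivity), Real.log_pow] at h
  push_cast at h
  linarith

lemma lower {r : ℝ} (hr0 : 0 < r) (hr1 : r < 1) {a b t vv : ℝ} (ha : 0 < a) (hb : 0 < b)
    (hab : a + b = r / (1 - r)) (ht : 0 < t) (hvv : 0 < vv) :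
    Real.log (Btilde (r/(2*(1-r))) (r/(2*(1-r))) * Real.sqrt (r/(4*(1-r)))) + 1/2
      ≤ Real.log (Btilde a b) - Real.log t + (vv*a*b*(1-r)/(2*r))*t^2
        - (1/2)*Real.log vv := by
  have hr' : 0 < 1 - r := by linarith
  have hm : 0 < (a+b)/2 := by positivity
  have hA : 0 < vv*a*b*(1-r)/(2*r) := by positivity
  have h1 := step1 hA ht
  have h2A : 2*(vv*a*b*(1-r)/(2*r)) = vv*a*b/(a+b) := by
    rw [hab]
    field_simp
  have hlog2A : Real.log (2*(vv*a*b*(1-r)/(2*r)))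
      = Real.log vv + Real.log a + Real.log b - Real.log (a+b) := by
    rw [h2A, Real.log_div (by positivity) (by positivity),
      Real.log_mul (by positivity) hb.ne', Real.log_mul hvv.ne' ha.ne']
  have h2 := step2 ha hb
  have e1 : r/(2*(1-r)) = (a+b)/2 := by rw [hab, div_div, mul_comm (1-r) 2]
  have e2 : r/(4*(1-r)) = (a+b)/4 := by rw [hab, div_div, mul_comm (1-r) 4]
  rw [e1, e2, Real.log_mul (Btilde_pos hm hm).ne'
    (Real.sqrt_pos.2 (by positivity)).ne', Real.log_sqrt (by positivity)]
  linarith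

/-- **Optimal two-moment gap for the lognormal distribution.** Let `X = exp W` with
`W ~ N(μ, σ²)`, `σ² > 0`. For `0 < r < 1`, the infimum over `p < 1/r - 1 < q` of
`Δ_r(X; p, q) = log ψ_r(p,q) + L_r(X; p, q) − h_r(X)` does not depend on `(μ, σ²)` and
equals `log(B̃(r/(2(1-r)), r/(2(1-r))) √(r/(4(1-r)))) + 1/2 − (1/2) log(2π r^{1/(r-1)})`.
Here `L_r(X; p, q) = (rλ/(1-r)) log E[X^p] + (r(1-λ)/(1-r)) log E[X^q]` with
`λ = (q+1-1/r)/(q-p)`, and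
`h_r(X) = μ + (1/2)((1-r)/r)σ² + (1/2) log(2π r^{1/(r-1)} σ²)` is the Rényi entropy of
order `r` of the lognormal distribution. -/
theorem lognormal_two_moment_gap
    {Ω : Type*} [MeasureSpace Ω] [IsProbabilityMeasure (ℙ : Measure Ω)]
    (μ : ℝ) (v : ℝ≥0) (hv : 0 < v)
    (W : Ω → ℝ) (hW : Measurable W)
    (hlaw : Measure.map W ℙ = ProbabilityTheory.gaussianReal μ v)
    (r : ℝ) (hr0 : 0 < r) (hr1 : r < 1) :
    sInf {d : ℝ | ∃ p q : ℝ, p < 1 / r - 1 ∧ 1 / r - 1 < q ∧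
        d = Real.log (psi r p q)
          + (r * ((q + 1 - 1 / r) / (q - p)) / (1 - r))
              * Real.log (∫ ω, Real.exp (W ω) ^ p ∂ℙ)
          + (r * (1 - (q + 1 - 1 / r) / (q - p)) / (1 - r))
              * Real.log (∫ ω, Real.exp (W ω) ^ q ∂ℙ)
          - (μ + (1 / 2) * ((1 - r) / r) * (v : ℝ)
              + (1 / 2) * Real.log (2 * π * r ^ (1 / (r - 1)) * (v : ℝ)))}
      = Real.log (Btilde (r / (2 * (1 - r))) (r / (2 * (1 - r)))
            * Real.sqrt (r / (4 * (1 - r))))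
        + 1 / 2 - (1 / 2) * Real.log (2 * π * r ^ (1 / (r - 1))) := by
  have hr' : (0:ℝ) < 1 - r := by linarith
  have hvR : (0:ℝ) < (v:ℝ) := by exact_mod_cast hv
  have hπ : (0:ℝ) < π := Real.pi_pos
  have hrp : (0:ℝ) < r ^ (1/(r-1)) := Real.rpow_pos_of_pos hr0 _
  have hmom : ∀ p : ℝ, ∫ ω, Real.exp (W ω) ^ p ∂ℙ = Real.exp (p*μ + p^2*(v:ℝ)/2) := by
    intro p
    have h1 : (fun ω => Real.exp (W ω) ^ p) = fun ω => Real.exp (p * W ω) := by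
      funext ω
      rw [← Real.exp_mul, mul_comm]
    have hmeas : AEStronglyMeasurable (fun x : ℝ => Real.exp (p * x)) (Measure.map W ℙ) :=
      (Real.continuous_exp.comp (continuous_const.mul continuous_id)).measurable.aestronglyMeasurable
    rw [h1, ← integral_map hW.aemeasurable hmeas, hlaw,
      integral_exp_gaussian μ hv.ne' p]
  have hlogmom : ∀ p : ℝ, Real.log (∫ ω, Real.exp (W ω) ^ p ∂ℙ) = p*μ + p^2*(v:ℝ)/2 := by
    intro p
    rw [hmom p, Real.log_exp]
  -- the canonical formula
  have hform : ∀ p q : ℝ, p < 1/r - 1 → 1/r - 1 < q →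
      Real.log (psi r p q)
        + (r * ((q + 1 - 1 / r) / (q - p)) / (1 - r))
            * Real.log (∫ ω, Real.exp (W ω) ^ p ∂ℙ)
        + (r * (1 - (q + 1 - 1 / r) / (q - p)) / (1 - r))
            * Real.log (∫ ω, Real.exp (W ω) ^ q ∂ℙ)
        - (μ + (1 / 2) * ((1 - r) / r) * (v : ℝ)
            + (1 / 2) * Real.log (2 * π * r ^ (1 / (r - 1)) * (v : ℝ)))
      = Real.log (Btilde (r * ((q + 1 - 1 / r) / (q - p)) / (1 - r))
            (r * (1 - (q + 1 - 1 / r) / (q - p)) / (1 - r)))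
        - Real.log (q - p)
        + ((v:ℝ) * (r * ((q + 1 - 1 / r) / (q - p)) / (1 - r))
            * (r * (1 - (q + 1 - 1 / r) / (q - p)) / (1 - r)) * (1 - r) / (2 * r)) * (q - p)^2
        - (1/2) * Real.log (v:ℝ)
        - (1/2) * Real.log (2 * π * r ^ (1 / (r - 1))) := by
    intro p q hp hq
    have ht : 0 < q - p := by linarith
    have ht' : q - p ≠ 0 := ht.ne'
    have hr0' : r ≠ 0 := hr0.ne'
    have hr'' : (1:ℝ) - r ≠ 0 := hr'.ne'
    set lam := (q + 1 - 1/r)/(q - p) with hlam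
    have hlampos : 0 < lam := by
      apply div_pos ?_ ht
      linarith
    have hlamlt : lam < 1 := by
      rw [hlam, div_lt_one ht]
      linarith
    set α := r * lam / (1 - r) with hα
    set β := r * (1 - lam) / (1 - r) with hβ
    have hαpos : 0 < α := div_pos (mul_pos hr0 hlampos) hr'
    have hβpos : 0 < β := div_pos (mul_pos hr0 (by linarith)) hr'
    have hlogpsi : Real.log (psi r p q) = - Real.log (q - p) + Real.log (Btilde α β) := by
      have hpsi : psi r p q = (1/(q-p)) * Btilde α β := rfl
      rw [hpsi, Real.log_mul (by positivity) (Btilde_pos hαpos hβpos).ne', one_div,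
        Real.log_inv]
    have hsplit : Real.log (2 * π * r ^ (1 / (r - 1)) * (v:ℝ))
        = Real.log (2 * π * r ^ (1 / (r - 1))) + Real.log (v:ℝ) :=
      Real.log_mul (by positivity) hvR.ne'
    rw [hlogpsi, hlogmom p, hlogmom q, hsplit]
    have h1 : α * p + β * q = 1 := by
      rw [hα, hβ, hlam]
      field_simp
      ring
    have h2 : α * p^2 + β * q^2 = (1-r)/r + (α*β*(1-r)/r)*(q-p)^2 := by
      rw [hα, hβ, hlam]
      field_simp
      ring
    linear_combination μ * h1 + ((v:ℝ)/2) * h2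
  -- notation
  set tgt := Real.log (Btilde (r / (2 * (1 - r))) (r / (2 * (1 - r)))
      * Real.sqrt (r / (4 * (1 - r)))) + 1 / 2
      - (1 / 2) * Real.log (2 * π * r ^ (1 / (r - 1))) with htgt
  -- lower bound
  have hlow : ∀ d ∈ {d : ℝ | ∃ p q : ℝ, p < 1 / r - 1 ∧ 1 / r - 1 < q ∧
      d = Real.log (psi r p q)
        + (r * ((q + 1 - 1 / r) / (q - p)) / (1 - r))
            * Real.log (∫ ω, Real.exp (W ω) ^ p ∂ℙ)
        + (r * (1 - (q + 1 - 1 / r) / (q - p)) / (1 - r))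
            * Real.log (∫ ω, Real.exp (W ω) ^ q ∂ℙ)
        - (μ + (1 / 2) * ((1 - r) / r) * (v : ℝ)
            + (1 / 2) * Real.log (2 * π * r ^ (1 / (r - 1)) * (v : ℝ)))}, tgt ≤ d := by
    rintro d ⟨p, q, hp, hq, hd⟩
    rw [hd, hform p q hp hq]
    have ht : 0 < q - p := by linarith
    set lam := (q + 1 - 1/r)/(q - p) with hlam
    have hlampos : 0 < lam := by
      apply div_pos ?_ ht
      linarith
    have hlamlt : lam < 1 := by
      rw [hlam, div_lt_one ht]
      linarith
    have hαpos : 0 < r * lam / (1 - r) := div_pos (mul_pos hr0 hlampos) hr'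
    have hβpos : 0 < r * (1 - lam) / (1 - r) := div_pos (mul_pos hr0 (by linarith)) hr'
    have hab : r * lam / (1 - r) + r * (1 - lam) / (1 - r) = r / (1 - r) := by ring
    have h := lower hr0 hr1 hαpos hβpos hab ht hvR
    rw [htgt]
    linarith
  -- membership
  have hRpos : (0:ℝ) < r / (1 - r) := by positivity
  have hsq : (0:ℝ) < (v:ℝ) * (r/(1-r)) := by positivity
  have hst : (0:ℝ) < Real.sqrt ((v:ℝ) * (r/(1-r))) := Real.sqrt_pos.2 hsq
  set t0 := 2 / Real.sqrt ((v:ℝ) * (r/(1-r))) with ht0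
  have ht0pos : 0 < t0 := by rw [ht0]; positivity
  set p0 := (1/r - 1) - t0/2 with hp0def
  set q0 := (1/r - 1) + t0/2 with hq0def
  have hp0 : p0 < 1/r - 1 := by rw [hp0def]; linarith
  have hq0 : 1/r - 1 < q0 := by rw [hq0def]; linarith
  have hq0p0 : q0 - p0 = t0 := by rw [hp0def, hq0def]; ring
  have hlam0 : (q0 + 1 - 1/r)/(q0 - p0) = 1/2 := by
    rw [hq0p0]
    have h1 : q0 + 1 - 1/r = t0/2 := by rw [hq0def]; ring
    rw [h1, div_eq_iff ht0pos.ne']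
    ring
  have hα0 : r * ((q0 + 1 - 1/r)/(q0 - p0)) / (1 - r) = r / (2*(1-r)) := by
    rw [hlam0, mul_one_div, div_div]
  have hβ0 : r * (1 - (q0 + 1 - 1/r)/(q0 - p0)) / (1 - r) = r / (2*(1-r)) := by
    rw [hlam0, show (1:ℝ) - 1/2 = 1/2 by norm_num, mul_one_div, div_div]
  have ht0sq : t0^2 = 4/((v:ℝ)*(r/(1-r))) := by
    rw [ht0, div_pow, Real.sq_sqrt hsq.le]
    norm_num
  have hlogt0 : Real.log t0 = Real.log 2 - (1/2)*Real.log ((v:ℝ)*(r/(1-r))) := by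
    rw [ht0, Real.log_div two_ne_zero hst.ne', Real.log_sqrt hsq.le]
    ring
  have hlogvr : Real.log ((v:ℝ)*(r/(1-r))) = Real.log (v:ℝ) + Real.log (r/(1-r)) :=
    Real.log_mul hvR.ne' hRpos.ne'
  have hlog4 : Real.log (r/(4*(1-r))) = Real.log (r/(1-r)) - 2*Real.log 2 := by
    have e : r/(4*(1-r)) = (r/(1-r))/4 := by rw [div_div, mul_comm]
    rw [e, Real.log_div hRpos.ne' (by norm_num)]
    rw [show (4:ℝ) = 2^2 by norm_num, Real.log_pow]
    push_cast
    ring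
  have hC : ((v:ℝ) * (r/(2*(1-r))) * (r/(2*(1-r))) * (1-r)/(2*r)) * t0^2 = 1/2 := by
    rw [ht0sq]
    field_simp
    ring
  have hlogtgt : Real.log (Btilde (r / (2 * (1 - r))) (r / (2 * (1 - r)))
      * Real.sqrt (r / (4 * (1 - r))))
      = Real.log (Btilde (r / (2 * (1 - r))) (r / (2 * (1 - r))))
        + (1/2) * Real.log (r/(4*(1-r))) := by
    rw [Real.log_mul (Btilde_pos (by positivity) (by positivity)).ne'
      (Real.sqrt_pos.2 (by positivity)).ne', Real.log_sqrt (by positivity)]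
    ring
  have hmem : tgt ∈ {d : ℝ | ∃ p q : ℝ, p < 1 / r - 1 ∧ 1 / r - 1 < q ∧
      d = Real.log (psi r p q)
        + (r * ((q + 1 - 1 / r) / (q - p)) / (1 - r))
            * Real.log (∫ ω, Real.exp (W ω) ^ p ∂ℙ)
        + (r * (1 - (q + 1 - 1 / r) / (q - p)) / (1 - r))
            * Real.log (∫ ω, Real.exp (W ω) ^ q ∂ℙ)
        - (μ + (1 / 2) * ((1 - r) / r) * (v : ℝ)
            + (1 / 2) * Real.log (2 * π * r ^ (1 / (r - 1)) * (v : ℝ)))} := by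
    refine ⟨p0, q0, hp0, hq0, ?_⟩
    rw [hform p0 q0 hp0 hq0, hα0, hβ0, hq0p0, htgt, hlogtgt, hlogt0, hC, hlog4, hlogvr]
    ring
  exact le_antisymm (csInf_le ⟨tgt, fun d hd => hlow d hd⟩ hmem)
    (le_csInf ⟨tgt, hmem⟩ hlow)
end

section
/- Let X be a random vector with density f on ℝⁿ with finite differential entropy h(X) = −∫ f(x) log f(x) dx, and let s > 0 be such that E[‖X‖^s] < ∞. Then h(X) ≤ log( Γ(n/s + 1)/Γ(n/2 + 1) ) + (n/2) log π + (n/s) log( e·s·E[‖X‖^s]/n ). -/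
open MeasureTheory Set
open scoped ENNReal NNReal Real

open Filter Asymptotics Topology in
private lemma aux_integrable_exp (n : ℕ) (hn : 0 < n) {b s : ℝ} (hb : 0 < b) (hs : 0 < s) :
    Integrable (fun x : EuclideanSpace ℝ (Fin n) => Real.exp (-(b * ‖x‖ ^ s))) := by
  have hcont : Continuous fun x : EuclideanSpace ℝ (Fin n) => Real.exp (-(b * ‖x‖ ^ s)) := by
    have h1 : Continuous fun x : EuclideanSpace ℝ (Fin n) => ‖x‖ ^ s :=
      continuous_norm.rpow_const fun x => Or.inr hs.le
    exact Real.continuous_exp.comp ((continuous_const.mul h1).neg)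
  set c : ℝ := (n : ℝ) + 1 with hc
  have hc0 : (0:ℝ) ≤ c := by positivity
  have h0 : Tendsto (fun r : ℝ => (1 + r) ^ c * Real.exp (-(b * r ^ s))) atTop (𝓝 0) := by
    have hψ : Tendsto (fun y : ℝ => (2:ℝ)^c * (y ^ (c/s) * Real.exp (-b * y))) atTop (𝓝 0) := by
      simpa using (tendsto_rpow_mul_exp_neg_mul_atTop_nhds_zero (c/s) b hb).const_mul ((2:ℝ)^c)
    have hcomp := hψ.comp (tendsto_rpow_atTop hs)
    refine squeeze_zero' ?_ ?_ hcomp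
    · filter_upwards [eventually_ge_atTop (0:ℝ)] with r hr
      positivity
    · filter_upwards [eventually_ge_atTop (1:ℝ)] with r hr
      have hr0 : (0:ℝ) < r := by linarith
      have h1 : (1 + r) ^ c ≤ (2*r) ^ c :=
        Real.rpow_le_rpow (by linarith) (by linarith) hc0
      have h2 : ((r ^ s) ^ (c/s)) = r ^ c := by
        rw [← Real.rpow_mul hr0.le]
        congr 1
        field_simp
      simp only [Function.comp]
      rw [h2, Real.mul_rpow (by norm_num) hr0.le] at *
      calc (1+r)^c * Real.exp (-(b * r^s)) ≤ (2:ℝ)^c * r^c * Real.exp (-(b*r^s)) := by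
            apply mul_le_mul_of_nonneg_right h1 (Real.exp_nonneg _)
        _ = (2:ℝ)^c * (r^c * Real.exp (-b * r^s)) := by rw [neg_mul]; ring
  have hev : ∀ᶠ r : ℝ in atTop, (1 + r) ^ c * Real.exp (-(b * r ^ s)) ≤ 1 :=
    h0.eventually_le_const one_pos
  have hbigO : (fun x : EuclideanSpace ℝ (Fin n) => Real.exp (-(b * ‖x‖ ^ s)))
      =O[Filter.cocompact _] fun x => (1 + ‖x‖) ^ (-c) := by
    refine IsBigO.of_bound 1 ?_
    filter_upwards [tendsto_norm_cocompact_atTop.eventually hev,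
      tendsto_norm_cocompact_atTop.eventually (eventually_ge_atTop (0:ℝ))] with x hx hx0
    have hp : (0:ℝ) < (1 + ‖x‖) ^ c := Real.rpow_pos_of_pos (by linarith) c
    rw [Real.norm_eq_abs, Real.norm_eq_abs, abs_of_pos (Real.exp_pos _),
      abs_of_pos (Real.rpow_pos_of_pos (by linarith) _), one_mul, Real.rpow_neg (by linarith),
      ← one_div, le_div_iff₀ hp]
    linarith [mul_comm (Real.exp (-(b * ‖x‖ ^ s))) ((1 + ‖x‖) ^ c)]
  refine hcont.locallyIntegrable.integrable_of_isBigO_cocompact hbigO ?_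
  exact (integrable_one_add_norm (by simp [finrank_euclideanSpace]; linarith [Nat.one_le_iff_ne_zero.mpr hn.ne'] : (Module.finrank ℝ (EuclideanSpace ℝ (Fin n)) : ℝ) < c)).integrableAtFilter _

private lemma aux_Z (n : ℕ) (hn : 0 < n) {b s : ℝ} (hb : 0 < b) (hs : 0 < s) :
    ∫ x : EuclideanSpace ℝ (Fin n), Real.exp (-(b * ‖x‖ ^ s))
      = (volume (Metric.ball (0:EuclideanSpace ℝ (Fin n)) 1)).toReal
        * Real.Gamma ((n:ℝ)/s + 1) * b ^ (-((n:ℝ)/s)) := by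
  haveI : Nonempty (Fin n) := ⟨⟨0, hn⟩⟩
  haveI : Nontrivial (EuclideanSpace ℝ (Fin n)) := by infer_instance
  have h1n : (1:ℝ) ≤ (n:ℝ) := by exact_mod_cast hn
  rw [integral_fun_norm_addHaar (volume : Measure (EuclideanSpace ℝ (Fin n)))
    (fun r => Real.exp (-(b * r ^ s)))]
  have hdim : Module.finrank ℝ (EuclideanSpace ℝ (Fin n)) = n := finrank_euclideanSpace_fin
  rw [hdim]
  have hinner : ∫ y in Ioi (0:ℝ), y ^ (n - 1) • Real.exp (-(b * y ^ s))
      = b ^ (-((n:ℝ)/s)) * (1/s) * Real.Gamma ((n:ℝ)/s) := by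
    have hcg : ∀ y ∈ Ioi (0:ℝ), y ^ (n - 1) • Real.exp (-(b * y ^ s))
        = y ^ ((n:ℝ) - 1) * Real.exp (-b * y ^ s) := by
      intro y hy
      rw [smul_eq_mul, ← Real.rpow_natCast y (n-1), Nat.cast_sub hn, Nat.cast_one, neg_mul]
    rw [setIntegral_congr_fun measurableSet_Ioi hcg,
      integral_rpow_mul_exp_neg_mul_rpow hs (by linarith) hb, sub_add_cancel, neg_div]
  rw [hinner, nsmul_eq_mul, smul_eq_mul]
  have hns : ((n:ℝ)/s) ≠ 0 := by positivity
  rw [Real.Gamma_add_one hns]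
  simp only [Measure.real]
  ring

private lemma gibbs_pointwise {a g : ℝ} (ha : 0 ≤ a) (hg : 0 < g) :
    a - g ≤ a * Real.log a - a * Real.log g := by
  rcases ha.eq_or_lt with rfl | ha'
  · simp [hg.le]
  · have h1 : Real.log (g/a) ≤ g/a - 1 := Real.log_le_sub_one_of_pos (by positivity)
    have h2 : a * Real.log (g/a) ≤ a * (g/a - 1) := mul_le_mul_of_nonneg_left h1 ha'.le
    have h3 : a * (g/a - 1) = g - a := by field_simp
    rw [Real.log_div hg.ne' ha'.ne', mul_sub, h3] at h2
    linarith

/-- **Moment bound on differential entropy.** If `X` is a random vector with density `f` on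
`ℝⁿ` (`n ≥ 1`) with finite differential entropy `h(X) = −∫ f log f` and `E[‖X‖^s] < ∞` for
some `s > 0`, then
`h(X) ≤ log(Γ(n/s+1)/Γ(n/2+1)) + (n/2) log π + (n/s) log(e s E[‖X‖^s]/n)`. -/
theorem differential_entropy_moment_bound {n : ℕ} (hn : 0 < n)
    (f : EuclideanSpace ℝ (Fin n) → ℝ) (hf : Measurable f) (hf0 : ∀ x, 0 ≤ f x)
    (hf1 : ∫ x, f x = 1)
    (hent : Integrable (fun x => f x * Real.log (f x)))
    (s : ℝ) (hs : 0 < s)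
    (hmom : Integrable (fun x : EuclideanSpace ℝ (Fin n) => ‖x‖ ^ s * f x)) :
    -∫ x, f x * Real.log (f x)
      ≤ Real.log (Real.Gamma ((n : ℝ) / s + 1) / Real.Gamma ((n : ℝ) / 2 + 1))
        + ((n : ℝ) / 2) * Real.log π
        + ((n : ℝ) / s) * Real.log (Real.exp 1 * s
            * (∫ x : EuclideanSpace ℝ (Fin n), ‖x‖ ^ s * f x) / n) := by
  haveI : Nonempty (Fin n) := ⟨⟨0, hn⟩⟩
  haveI : Nontrivial (EuclideanSpace ℝ (Fin n)) := by infer_instance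
  have hn' : (0:ℝ) < (n:ℝ) := by exact_mod_cast hn
  have hIf : Integrable f := by
    by_contra h
    rw [integral_undef h] at hf1
    norm_num at hf1
  set M : ℝ := ∫ x : EuclideanSpace ℝ (Fin n), ‖x‖ ^ s * f x with hMdef
  have hM0 : 0 ≤ M :=
    integral_nonneg fun x => mul_nonneg (Real.rpow_nonneg (norm_nonneg _) s) (hf0 x)
  have hM : 0 < M := by
    rcases hM0.eq_or_lt with h | h
    · exfalso
      have hz : (fun x : EuclideanSpace ℝ (Fin n) => ‖x‖ ^ s * f x) =ᵐ[volume] 0 :=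
        (integral_eq_zero_iff_of_nonneg
          (fun x => mul_nonneg (Real.rpow_nonneg (norm_nonneg _) s) (hf0 x)) hmom).mp h.symm
      have h0 : ∀ᵐ x : EuclideanSpace ℝ (Fin n), x ≠ 0 := by
        rw [ae_iff]
        simpa using measure_singleton (0 : EuclideanSpace ℝ (Fin n))
      have hf_ae : f =ᵐ[volume] 0 := by
        filter_upwards [hz, h0] with x hx hx0
        have hxn : (0:ℝ) < ‖x‖ := norm_pos_iff.mpr hx0
        have hns : ‖x‖ ^ s ≠ 0 := by positivity
        simpa [hns] using hx
      rw [integral_congr_ae hf_ae] at hf1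
      simp at hf1
    · exact h
  set b : ℝ := (n:ℝ) / (s * M) with hbdef
  have hb : 0 < b := by positivity
  set G : EuclideanSpace ℝ (Fin n) → ℝ := fun x => Real.exp (-(b * ‖x‖ ^ s)) with hGdef
  have hIG : Integrable G := aux_integrable_exp n hn hb hs
  set V : ℝ := (volume (Metric.ball (0:EuclideanSpace ℝ (Fin n)) 1)).toReal with hVdef
  have hΓa : 0 < Real.Gamma ((n:ℝ)/s + 1) := Real.Gamma_pos_of_pos (by positivity)
  have hΓb : 0 < Real.Gamma ((n:ℝ)/2 + 1) := Real.Gamma_pos_of_pos (by positivity)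
  have hVval : V = Real.sqrt π ^ n / Real.Gamma ((n:ℝ)/2 + 1) := by
    rw [hVdef, EuclideanSpace.volume_ball, Fintype.card_fin, ENNReal.ofReal_one, one_pow, one_mul,
      ENNReal.toReal_ofReal (by positivity)]
  have hV : 0 < V := by
    rw [hVval]
    have : (0:ℝ) < Real.sqrt π := Real.sqrt_pos.mpr Real.pi_pos
    positivity
  set Z : ℝ := ∫ x : EuclideanSpace ℝ (Fin n), G x with hZdef
  have hZeq : Z = V * Real.Gamma ((n:ℝ)/s + 1) * b ^ (-((n:ℝ)/s)) := aux_Z n hn hb hs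
  have hZ : 0 < Z := by
    rw [hZeq]
    have := Real.rpow_pos_of_pos hb (-((n:ℝ)/s))
    positivity
  have hlogg : ∀ x : EuclideanSpace ℝ (Fin n),
      Real.log (G x / Z) = -(b * ‖x‖ ^ s) - Real.log Z := fun x => by
    rw [Real.log_div (Real.exp_ne_zero _) hZ.ne', Real.log_exp]
  have hrw : (fun x : EuclideanSpace ℝ (Fin n) => f x * Real.log (G x / Z))
      = fun x => (-(b * (‖x‖ ^ s * f x)) - Real.log Z * f x) := by
    funext x
    rw [hlogg x]
    ring
  have hIflg : Integrable (fun x : EuclideanSpace ℝ (Fin n) => f x * Real.log (G x / Z)) := by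
    rw [hrw]
    exact ((hmom.const_mul b).neg).sub (hIf.const_mul _)
  have hIg : Integrable (fun x : EuclideanSpace ℝ (Fin n) => G x / Z) := hIG.div_const Z
  have hmono : ∫ x, (f x - G x / Z) ≤ ∫ x, (f x * Real.log (f x) - f x * Real.log (G x / Z)) :=
    integral_mono (hIf.sub hIg) (hent.sub hIflg)
      (fun x => gibbs_pointwise (hf0 x) (div_pos (Real.exp_pos _) hZ))
  rw [integral_sub hIf hIg, integral_sub hent hIflg, hf1, integral_div, ← hZdef,
    div_self hZ.ne'] at hmono
  have hI1 : Integrable (fun x : EuclideanSpace ℝ (Fin n) => -(b * (‖x‖ ^ s * f x))) := by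
    exact ((hmom.const_mul b)).neg
  have hflg : ∫ x, f x * Real.log (G x / Z) = -(b * M) - Real.log Z := by
    rw [hrw, integral_sub hI1 (hIf.const_mul _), integral_neg,
      integral_const_mul, integral_const_mul, hf1, ← hMdef, mul_one]
  rw [hflg] at hmono
  have hbM : b * M = (n:ℝ)/s := by
    rw [hbdef]
    field_simp
  have hstep : -∫ x, f x * Real.log (f x) ≤ (n:ℝ)/s + Real.log Z := by
    rw [← hbM]
    linarith
  refine hstep.trans_eq ?_
  -- final logarithmic bookkeeping
  have hlogZ : Real.log Z = Real.log V + Real.log (Real.Gamma ((n:ℝ)/s + 1))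
      + (-((n:ℝ)/s)) * Real.log b := by
    rw [hZeq, Real.log_mul (by positivity) (Real.rpow_pos_of_pos hb _).ne',
      Real.log_mul hV.ne' hΓa.ne', Real.log_rpow hb]
  have hsqrtπ : (0:ℝ) < Real.sqrt π := Real.sqrt_pos.mpr Real.pi_pos
  have hlogV : Real.log V = (n:ℝ) * (Real.log π / 2) - Real.log (Real.Gamma ((n:ℝ)/2 + 1)) := by
    rw [hVval, Real.log_div (by positivity) hΓb.ne', Real.log_pow,
      Real.log_sqrt Real.pi_pos.le]
  have hlogb : Real.log b = Real.log (n:ℝ) - Real.log s - Real.log M := by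
    rw [hbdef, Real.log_div hn'.ne' (by positivity : (s*M:ℝ) ≠ 0), Real.log_mul hs.ne' hM.ne']
    ring
  have hlogR1 : Real.log (Real.Gamma ((n:ℝ)/s + 1) / Real.Gamma ((n:ℝ)/2 + 1))
      = Real.log (Real.Gamma ((n:ℝ)/s + 1)) - Real.log (Real.Gamma ((n:ℝ)/2 + 1)) :=
    Real.log_div hΓa.ne' hΓb.ne'
  have hlogR2 : Real.log (Real.exp 1 * s * M / (n:ℝ))
      = 1 + Real.log s + Real.log M - Real.log (n:ℝ) := by
    rw [Real.log_div (by positivity) hn'.ne',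
      Real.log_mul (by positivity) hM.ne', Real.log_mul (Real.exp_ne_zero 1) hs.ne',
      Real.log_exp]
  rw [hlogZ, hlogV, hlogb, hlogR1, hlogR2]
  ring
end

section
/- Let (X,Y) be a random pair such that the conditional distribution of Y given X has a density f(y|x) with respect to Lebesgue measure on ℝⁿ, so the marginal density of Y is f(y) = E[f(y|X)], with support S_Y. Then for every t ∈ (0,1], the mutual information satisfies I(X;Y) ≤ κ(t) · ∫_{S_Y} f(y)^{1−2t} · ( Var(f(y|X)) )^t dy. -/
open MeasureTheory Set
open scoped ENNReal NNReal Real ProbabilityTheory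

/- The Kullback–Leibler divergence `D_KL(μ‖ν) = ∫ log(dμ/dν) dμ`, equal to `+∞` when
`μ` is not absolutely continuous with respect to `ν` or the integral is not finite. -/
open Classical in
noncomputable def klDiv {α : Type*} [MeasurableSpace α] (μ ν : Measure α) : ℝ≥0∞ :=
  if μ ≪ ν ∧ Integrable (MeasureTheory.llr μ ν) μ
    then ENNReal.ofReal (∫ a, MeasureTheory.llr μ ν a ∂μ) else ⊤

/-- `κ(t) = sup_{u > 0} log(1+u)/u^t`. -/
noncomputable def kappaSup (t : ℝ) : ℝ :=
  ⨆ u : Set.Ioi (0 : ℝ), Real.log (1 + (u : ℝ)) / (u : ℝ) ^ t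



lemma neg_mul_log_div_le {a b : ℝ} (ha : 0 ≤ a) (hb : 0 ≤ b) : -(a * Real.log (a / b)) ≤ b := by
  rcases eq_or_lt_of_le hb with hb0 | hb0
  · simp [← hb0]
  rcases eq_or_lt_of_le ha with ha0 | ha0
  · simp [← ha0]; positivity
  · have h1 : Real.log (b / a) ≤ b / a - 1 := Real.log_le_sub_one_of_pos (by positivity)
    have h2 : Real.log (a / b) = - Real.log (b / a) := by
      rw [Real.log_div (ne_of_gt ha0) (ne_of_gt hb0), Real.log_div (ne_of_gt hb0) (ne_of_gt ha0)]
      ring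
    have h3 : a * (b / a - 1) = b - a := by field_simp
    calc -(a * Real.log (a / b)) = a * Real.log (b / a) := by rw [h2]; ring
    _ ≤ a * (b / a - 1) := mul_le_mul_of_nonneg_left h1 ha
    _ = b - a := h3
    _ ≤ b := by linarith

lemma mul_log_div_le_sq {a b : ℝ} (ha : 0 ≤ a) (hb : 0 < b) :
    a * Real.log (a / b) ≤ a ^ 2 / b := by
  rcases eq_or_lt_of_le ha with ha0 | ha0
  · rw [← ha0]; simp
  · have h1 : Real.log (a / b) ≤ a / b - 1 := Real.log_le_sub_one_of_pos (by positivity)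
    have h2 : a * (a / b - 1) = a ^ 2 / b - a := by field_simp
    nlinarith

lemma abs_mul_log_div_le {a b : ℝ} (ha : 0 ≤ a) (hb : 0 < b) :
    |a * Real.log (a / b)| ≤ b + a ^ 2 / b := by
  have h1 := neg_mul_log_div_le ha hb.le
  have h2 := mul_log_div_le_sq ha hb
  have h3 : 0 ≤ a ^ 2 / b := by positivity
  rw [abs_le]
  constructor <;> nlinarith

lemma kappa_bddAbove {t : ℝ} (ht0 : 0 < t) (ht1 : t ≤ 1) :
    BddAbove (Set.range fun u : Set.Ioi (0 : ℝ) => Real.log (1 + (u : ℝ)) / (u : ℝ) ^ t) := by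
  refine ⟨1 + 1 / t, ?_⟩
  rintro _ ⟨⟨u, hu⟩, rfl⟩
  simp only [Set.mem_Ioi] at hu
  have hut : (0:ℝ) < u ^ t := Real.rpow_pos_of_pos hu t
  rw [div_le_iff₀ hut]
  rcases le_total u 1 with h1 | h1
  · have hlog : Real.log (1 + u) ≤ u := by
      have := Real.log_le_sub_one_of_pos (x := 1 + u) (by linarith)
      linarith
    have hu1 : u ≤ u ^ t := by
      calc u = u ^ (1:ℝ) := (Real.rpow_one u).symm
      _ ≤ u ^ t := Real.rpow_le_rpow_of_exponent_ge hu h1 ht1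
    have : (1:ℝ) ≤ 1 + 1 / t := by
      have : 0 < 1 / t := by positivity
      linarith
    nlinarith
  · have h2u : Real.log (1 + u) ≤ Real.log (2 * u) := by
      apply Real.log_le_log (by linarith)
      linarith
    have hlog2 : Real.log (2 * u) = Real.log 2 + Real.log u := Real.log_mul (by norm_num) (by linarith)
    have hl2 : Real.log 2 ≤ 1 := by
      have := Real.log_le_sub_one_of_pos (x := 2) (by norm_num)
      linarith
    have hut1 : (1:ℝ) ≤ u ^ t := Real.one_le_rpow h1 ht0.le
    have hlogu : Real.log u ≤ u ^ t / t := by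
      have h3 : Real.log (u ^ t) ≤ u ^ t - 1 := Real.log_le_sub_one_of_pos hut
      rw [Real.log_rpow (by linarith)] at h3
      rw [le_div_iff₀ ht0]
      nlinarith
    have : u ^ t / t = (1/t) * u ^ t := by ring
    nlinarith [mul_le_mul_of_nonneg_left hut1 (le_of_lt (show (0:ℝ) < 1/t by positivity))]

lemma log_le_kappa_mul {t : ℝ} (ht0 : 0 < t) (ht1 : t ≤ 1) {u : ℝ} (hu : 0 ≤ u) :
    Real.log (1 + u) ≤ kappaSup t * u ^ t := by
  rcases eq_or_lt_of_le hu with hu0 | hu0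
  · simp [← hu0, Real.rpow_natCast]
    simp [Real.zero_rpow (ne_of_gt ht0)]
  · haveI : Nonempty (Set.Ioi (0:ℝ)) := ⟨⟨1, by norm_num⟩⟩
    have h := le_ciSup (kappa_bddAbove ht0 ht1) (⟨u, hu0⟩ : Set.Ioi (0:ℝ))
    rw [show (⨆ u : Set.Ioi (0 : ℝ), Real.log (1 + (u : ℝ)) / (u : ℝ) ^ t) = kappaSup t from rfl] at h
    have hut : (0:ℝ) < u ^ t := Real.rpow_pos_of_pos hu0 t
    calc Real.log (1 + u) = (Real.log (1 + u) / u ^ t) * u ^ t := by field_simp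
    _ ≤ kappaSup t * u ^ t := by
        apply mul_le_mul_of_nonneg_right _ hut.le
        exact h
    
lemma kappa_pos {t : ℝ} (ht0 : 0 < t) (ht1 : t ≤ 1) : 0 < kappaSup t := by
  have h := log_le_kappa_mul ht0 ht1 (u := 1) (by norm_num)
  rw [Real.one_rpow, mul_one] at h
  have : (0:ℝ) < Real.log 2 := Real.log_pos (by norm_num)
  norm_num at h
  linarith

lemma slice_bound {α : Type*} [MeasurableSpace α] (ρ : Measure α) [IsProbabilityMeasure ρ]
    {t : ℝ} (ht0 : 0 < t) (ht1 : t ≤ 1) {a : α → ℝ} (ha : Measurable a) (h0 : ∀ x, 0 ≤ a x)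
    (hb : 0 < ∫ x', a x' ∂ρ) :
    ∫⁻ x, ENNReal.ofReal (a x * Real.log (a x / ∫ x', a x' ∂ρ)) ∂ρ
      ≤ ∫⁻ x, ENNReal.ofReal (-(a x * Real.log (a x / ∫ x', a x' ∂ρ))) ∂ρ
        + ENNReal.ofReal (kappaSup t) * ENNReal.ofReal (∫ x', a x' ∂ρ) ^ (1 - 2 * t)
          * (∫⁻ x, ENNReal.ofReal ((a x - ∫ x', a x' ∂ρ) ^ 2) ∂ρ) ^ t := by
  set b : ℝ := ∫ x', a x' ∂ρ with hbdef
  have hInt_a : Integrable a ρ := by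
    by_contra hna
    rw [hbdef, integral_undef hna] at hb
    exact lt_irrefl 0 hb
  set V : ℝ≥0∞ := ∫⁻ x, ENNReal.ofReal ((a x - b) ^ 2) ∂ρ with hVdef
  have hκ := kappa_pos ht0 ht1
  by_cases hVtop : V = ⊤
  · -- RHS is ⊤
    have h1 : (0:ℝ≥0∞) < ENNReal.ofReal b ^ (1 - 2 * t) :=
      ENNReal.rpow_pos (ENNReal.ofReal_pos.mpr hb) ENNReal.ofReal_ne_top
    have h2 : ENNReal.ofReal (kappaSup t) * ENNReal.ofReal b ^ (1 - 2 * t) ≠ 0 :=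
      mul_ne_zero (ne_of_gt (ENNReal.ofReal_pos.mpr hκ)) (ne_of_gt h1)
    rw [hVtop, ENNReal.top_rpow_of_pos ht0, ENNReal.mul_top h2]
    simp
  -- V finite
  have hmeas_sq : Measurable fun x => (a x - b) ^ 2 := ((ha.sub measurable_const).pow_const 2)
  have ha2 : Integrable (fun x => (a x - b) ^ 2) ρ := by
    refine ⟨hmeas_sq.aestronglyMeasurable, ?_⟩
    rw [hasFiniteIntegral_iff_ofReal (ae_of_all _ fun x => sq_nonneg _)]
    exact lt_top_iff_ne_top.mpr hVtop
  have haSq : Integrable (fun x => a x ^ 2) ρ := by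
    have : (fun x => a x ^ 2) = fun x => (a x - b) ^ 2 + (2 * b) * a x - b ^ 2 := by
      funext x; ring
    rw [this]
    exact (ha2.add (hInt_a.const_mul (2 * b))).sub (integrable_const _)
  set σ2 : ℝ := ∫ x, (a x - b) ^ 2 ∂ρ with hσ2def
  have hσ2V : V = ENNReal.ofReal σ2 := by
    rw [hσ2def, integral_eq_lintegral_of_nonneg_ae (ae_of_all _ fun x => sq_nonneg _)
      hmeas_sq.aestronglyMeasurable, ← hVdef, ENNReal.ofReal_toReal hVtop]
  have hσ2nn : 0 ≤ σ2 := integral_nonneg fun x => sq_nonneg _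
  set M : ℝ := ∫ x, a x ^ 2 ∂ρ with hMdef
  have hM : M = σ2 + b ^ 2 := by
    have hexp : (fun x => (a x - b) ^ 2) = fun x => a x ^ 2 - (2 * b) * a x + b ^ 2 := by
      funext x; ring
    have I1 : Integrable (fun x => a x ^ 2 - 2 * b * a x) ρ :=
      haSq.sub (hInt_a.const_mul (2 * b))
    have : σ2 = M - 2 * b * b + b ^ 2 := by
      rw [hσ2def, hexp, integral_add I1 (integrable_const _),
        integral_sub haSq (hInt_a.const_mul (2*b)), integral_const_mul, integral_const]
      simp [← hbdef, ← hMdef]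
    nlinarith [this]
  have hMpos : 0 < M := by nlinarith
  set c : ℝ := M / b ^ 2 with hcdef
  have hcpos : 0 < c := by positivity
  -- integrability of φ
  set φ : α → ℝ := fun x => a x * Real.log (a x / b) with hφdef
  have hφmeas : Measurable φ :=
    ha.mul ((Real.measurable_log).comp (ha.div_const b))
  have hφInt : Integrable φ ρ := by
    refine Integrable.mono' ((integrable_const b).add (haSq.div_const b))
      hφmeas.aestronglyMeasurable (ae_of_all _ fun x => ?_)
    have := abs_mul_log_div_le (h0 x) hb
    simpa [Real.norm_eq_abs, hφdef, abs_mul] using this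
  -- tangent line bound
  have htangent : ∀ x, φ x ≤ a x ^ 2 / (b * c) + a x * (Real.log c - 1) := by
    intro x
    rcases eq_or_lt_of_le (h0 x) with hx0 | hx0
    · simp only [hφdef, ← hx0]; simp
    · have hbc : 0 < b * c := by positivity
      have hsplit : Real.log (a x / b) = Real.log (a x / (b * c)) + Real.log c := by
        rw [Real.log_div (ne_of_gt hx0) (ne_of_gt hb), Real.log_div (ne_of_gt hx0) (ne_of_gt hbc),
          Real.log_mul (ne_of_gt hb) (ne_of_gt hcpos)]
        ring
      have h1 : Real.log (a x / (b * c)) ≤ a x / (b * c) - 1 :=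
        Real.log_le_sub_one_of_pos (by positivity)
      have h2 : a x * (a x / (b * c) - 1) = a x ^ 2 / (b * c) - a x := by
        field_simp
      calc φ x = a x * Real.log (a x / (b * c)) + a x * Real.log c := by simp only [hφdef]; rw [hsplit]; ring
      _ ≤ (a x ^ 2 / (b * c) - a x) + a x * Real.log c := by
          have := mul_le_mul_of_nonneg_left h1 (h0 x)
          linarith [h2 ▸ this]
      _ = a x ^ 2 / (b * c) + a x * (Real.log c - 1) := by ring
  have hintRHS : Integrable (fun x => a x ^ 2 / (b * c) + a x * (Real.log c - 1)) ρ :=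
    (haSq.div_const (b * c)).add (hInt_a.mul_const _)
  have hmain : ∫ x, φ x ∂ρ ≤ b * Real.log c := by
    have h1 : ∫ x, φ x ∂ρ ≤ ∫ x, (a x ^ 2 / (b * c) + a x * (Real.log c - 1)) ∂ρ :=
      integral_mono hφInt hintRHS htangent
    have h2 : ∫ x, (a x ^ 2 / (b * c) + a x * (Real.log c - 1)) ∂ρ
        = M / (b * c) + b * (Real.log c - 1) := by
      rw [integral_add (haSq.div_const (b * c)) (hInt_a.mul_const _), integral_div,
        integral_mul_const]
    have h3 : M / (b * c) = b := by
      rw [hcdef]; field_simp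
    rw [h2, h3] at h1
    linarith
  have hlogc : b * Real.log c ≤ kappaSup t * b ^ (1 - 2*t) * σ2 ^ t := by
    have hc1 : c = 1 + σ2 / b ^ 2 := by
      rw [hcdef, hM]; field_simp; ring
    have h1 : Real.log c ≤ kappaSup t * (σ2 / b ^ 2) ^ t := by
      rw [hc1]; exact log_le_kappa_mul ht0 ht1 (by positivity)
    have h2 : b * (kappaSup t * (σ2 / b ^ 2) ^ t) = kappaSup t * b ^ (1 - 2*t) * σ2 ^ t := by
      rw [Real.div_rpow hσ2nn (by positivity), Real.rpow_sub hb, Real.rpow_one]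
      have hb2 : (b ^ 2 : ℝ) ^ (t:ℝ) = b ^ (2 * t) := by
        rw [show ((b:ℝ) ^ 2) = b ^ (2:ℝ) by rw [Real.rpow_two], ← Real.rpow_mul hb.le]
      rw [hb2]
      have hbt : (0:ℝ) < b ^ (2 * t) := Real.rpow_pos_of_pos hb _
      field_simp
    calc b * Real.log c ≤ b * (kappaSup t * (σ2 / b ^ 2) ^ t) :=
      mul_le_mul_of_nonneg_left h1 hb.le
    _ = kappaSup t * b ^ (1 - 2*t) * σ2 ^ t := h2
  set K : ℝ := kappaSup t * b ^ (1 - 2*t) * σ2 ^ t with hKdef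
  have hKnn : 0 ≤ K := by
    have h1 : (0:ℝ) ≤ b ^ (1-2*t) := (Real.rpow_pos_of_pos hb _).le
    have h2 : (0:ℝ) ≤ σ2 ^ t := Real.rpow_nonneg hσ2nn t
    positivity
  -- translate to lintegrals
  set Pp : ℝ≥0∞ := ∫⁻ x, ENNReal.ofReal (φ x) ∂ρ with hPpdef
  set Pn : ℝ≥0∞ := ∫⁻ x, ENNReal.ofReal (-(φ x)) ∂ρ with hPndef
  have hPp_ne : Pp ≠ ⊤ := by
    have : Pp ≤ ∫⁻ x, ↑‖φ x‖₊ ∂ρ := by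
      apply lintegral_mono fun x => ?_
      rw [← enorm_eq_nnnorm, Real.enorm_eq_ofReal_abs]
      exact ENNReal.ofReal_le_ofReal (le_abs_self _)
    exact ne_top_of_le_ne_top (lt_top_iff_ne_top.mp hφInt.2) this
  have hPn_ne : Pn ≠ ⊤ := by
    have : Pn ≤ ∫⁻ x, ↑‖φ x‖₊ ∂ρ := by
      apply lintegral_mono fun x => ?_
      rw [← enorm_eq_nnnorm, Real.enorm_eq_ofReal_abs]
      exact ENNReal.ofReal_le_ofReal (neg_le_abs _)
    exact ne_top_of_le_ne_top (lt_top_iff_ne_top.mp hφInt.2) this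
  have hsplit : ∫ x, φ x ∂ρ = Pp.toReal - Pn.toReal :=
    integral_eq_lintegral_pos_part_sub_lintegral_neg_part hφInt
  have hfin : Pp.toReal ≤ Pn.toReal + K := by
    rw [hsplit] at hmain
    linarith [hlogc]
  have hineq : Pp ≤ Pn + ENNReal.ofReal K := by
    calc Pp = ENNReal.ofReal Pp.toReal := (ENNReal.ofReal_toReal hPp_ne).symm
    _ ≤ ENNReal.ofReal (Pn.toReal + K) := ENNReal.ofReal_le_ofReal hfin
    _ = ENNReal.ofReal Pn.toReal + ENNReal.ofReal K := ENNReal.ofReal_add ENNReal.toReal_nonneg hKnn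
    _ = Pn + ENNReal.ofReal K := by rw [ENNReal.ofReal_toReal hPn_ne]
  have hK : ENNReal.ofReal K
      = ENNReal.ofReal (kappaSup t) * ENNReal.ofReal b ^ (1 - 2 * t) * V ^ t := by
    rw [hKdef, ENNReal.ofReal_mul (by positivity), ENNReal.ofReal_mul hκ.le]
    rw [ENNReal.ofReal_rpow_of_pos hb, hσ2V, ENNReal.ofReal_rpow_of_nonneg hσ2nn ht0.le]
  rw [← hK]
  exact hineq

/-- **Proposition 7.** Let `(X,Y)` be a random pair where the conditional distribution of `Y`
given `X` has density `f(·|x)` on `ℝⁿ`, with marginal density `f_Y(y) = E[f(y|X)]` and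
support `S_Y`. Then for every `t ∈ (0,1]`, the mutual information
`I(X;Y) = D_KL(P_{XY} ‖ P_X × P_Y)` satisfies
`I(X;Y) ≤ κ(t) ∫_{S_Y} f_Y(y)^{1−2t} Var(f(y|X))^t dy`,
where `Var(f(y|X)) = E[(f(y|X) − f_Y(y))²]` (the right-hand side being interpreted in
`[0,∞]`). -/
theorem mutual_information_var_bound {n : ℕ}
    {Ω : Type*} [MeasureSpace Ω] [IsProbabilityMeasure (ℙ : Measure Ω)]
    {𝒳 : Type*} [MeasurableSpace 𝒳]
    (X : Ω → 𝒳) (hX : Measurable X)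
    (Y : Ω → EuclideanSpace ℝ (Fin n)) (hY : Measurable Y)
    (f : 𝒳 → EuclideanSpace ℝ (Fin n) → ℝ)
    (hf : Measurable (Function.uncurry f)) (hf0 : ∀ x y, 0 ≤ f x y)
    (κ : ProbabilityTheory.Kernel 𝒳 (EuclideanSpace ℝ (Fin n))) [ProbabilityTheory.IsMarkovKernel κ]
    (hκ : ∀ x, κ x = volume.withDensity (fun y => ENNReal.ofReal (f x y)))
    (hjoint : Measure.map (fun ω => (X ω, Y ω)) ℙ = (Measure.map X ℙ) ⊗ₘ κ)
    (t : ℝ) (ht0 : 0 < t) (ht1 : t ≤ 1) :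
    klDiv (Measure.map (fun ω => (X ω, Y ω)) ℙ) ((Measure.map X ℙ).prod (Measure.map Y ℙ))
      ≤ ENNReal.ofReal (kappaSup t)
        * ∫⁻ y in {y | 0 < ∫ ω, f (X ω) y ∂ℙ},
            ENNReal.ofReal (∫ ω, f (X ω) y ∂ℙ) ^ (1 - 2 * t)
              * (∫⁻ ω, ENNReal.ofReal ((f (X ω) y - ∫ ω', f (X ω') y ∂ℙ) ^ 2) ∂ℙ) ^ t := by
  haveI hprobX : IsProbabilityMeasure (Measure.map X ℙ) := Measure.isProbabilityMeasure_map hX.aemeasurable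
  haveI hprobY : IsProbabilityMeasure (Measure.map Y ℙ) := Measure.isProbabilityMeasure_map hY.aemeasurable
  set μX := Measure.map X ℙ with hμXdef
  have hfy : ∀ y, Measurable (fun x => f x y) := fun y => hf.comp measurable_prodMk_right
  -- rewrite ℙ-integrals as μX-integrals
  have hBmap : ∀ y : EuclideanSpace ℝ (Fin n), (∫ ω, f (X ω) y ∂ℙ) = ∫ x, f x y ∂μX := fun y =>
    (integral_map hX.aemeasurable (hfy y).aestronglyMeasurable).symm
  have hVmap : ∀ (y : EuclideanSpace ℝ (Fin n)) (c : ℝ),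
      (∫⁻ ω, ENNReal.ofReal ((f (X ω) y - c) ^ 2) ∂ℙ)
        = ∫⁻ x, ENNReal.ofReal ((f x y - c) ^ 2) ∂μX := fun y c =>
    (lintegral_map (ENNReal.measurable_ofReal.comp
      (((hfy y).sub measurable_const).pow_const 2)) hX).symm
  simp only [hBmap, hVmap]
  set m := Measure.map (fun ω => (X ω, Y ω)) ℙ with hmdef
  set ν := μX.prod (Measure.map Y ℙ) with hνdef
  -- basic objects
  set g : 𝒳 × EuclideanSpace ℝ (Fin n) → ℝ≥0∞ := fun p => ENNReal.ofReal (f p.1 p.2) with hgdef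
  have hg : Measurable g := ENNReal.measurable_ofReal.comp hf
  set fY : EuclideanSpace ℝ (Fin n) → ℝ≥0∞ := fun y => ∫⁻ x, g (x, y) ∂μX with hfYdef
  have hfYmeas : Measurable fY := hg.lintegral_prod_left'
  have hBnn : ∀ y, 0 ≤ ∫ x, f x y ∂μX := fun y => integral_nonneg fun x => hf0 x y
  have hBmeas : Measurable (fun y => ∫ x, f x y ∂μX) :=
    (hf.stronglyMeasurable.integral_prod_left).measurable
  have hBtoReal : ∀ y, (∫ x, f x y ∂μX) = (fY y).toReal := fun y =>
    integral_eq_lintegral_of_nonneg_ae (ae_of_all _ fun x => hf0 x y)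
      (hfy y).aestronglyMeasurable
  -- marginal of Y
  have hYd : Measure.map Y ℙ = volume.withDensity fY := by
    ext s hs
    have h1 : Measure.map Y ℙ s = m (Set.univ ×ˢ s) := by
      rw [Measure.map_apply hY hs, hmdef, Measure.map_apply (hX.prodMk hY)
        (MeasurableSet.univ.prod hs)]
      congr 1
      ext ω; simp
    rw [h1, hjoint, Measure.compProd_apply (MeasurableSet.univ.prod hs),
      withDensity_apply _ hs]
    have h2 : ∀ x : 𝒳, (κ x) (Prod.mk x ⁻¹' (Set.univ ×ˢ s)) = ∫⁻ y in s, g (x, y) ∂volume := by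
      intro x
      have : Prod.mk x ⁻¹' (Set.univ ×ˢ s) = s := by ext y; simp
      rw [this, hκ x, withDensity_apply _ hs]
    simp_rw [h2]
    rw [lintegral_lintegral_swap (hg.aemeasurable)]
  have hfY_int_one : ∫⁻ y, fY y ∂volume = 1 := by
    have h1 : Measure.map Y ℙ Set.univ = 1 := measure_univ
    rw [hYd, withDensity_apply _ MeasurableSet.univ, setLIntegral_univ] at h1
    exact h1
  have hfY_null : (volume : Measure (EuclideanSpace ℝ (Fin n))) {y | fY y = ⊤} = 0 := by
    have h1 := ae_lt_top hfYmeas (by rw [hfY_int_one]; exact ENNReal.one_ne_top)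
    rw [ae_iff] at h1
    convert h1 using 2
    ext y; simp [lt_top_iff_ne_top]
  -- joint as density over μX.prod volume
  have hμm : m = (μX.prod volume).withDensity g := by
    rw [hjoint]
    ext s hs
    rw [Measure.compProd_apply hs, withDensity_apply _ hs, ← lintegral_indicator hs,
      lintegral_prod _ (hg.indicator hs).aemeasurable]
    congr 1; funext x
    rw [hκ x, withDensity_apply _ (measurable_prodMk_left hs),
      ← lintegral_indicator (measurable_prodMk_left hs)]
    refine lintegral_congr fun y => ?_
    by_cases hxy : (x, y) ∈ s
    · rw [Set.indicator_of_mem (show y ∈ Prod.mk x ⁻¹' s from hxy), Set.indicator_of_mem hxy]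
    · rw [Set.indicator_of_notMem (show y ∉ Prod.mk x ⁻¹' s from hxy),
        Set.indicator_of_notMem hxy]
  -- product as density over μX.prod volume
  have hfYsnd : Measurable fun p : 𝒳 × EuclideanSpace ℝ (Fin n) => fY p.2 :=
    hfYmeas.comp measurable_snd
  have hνd : ν = (μX.prod volume).withDensity (fun p => fY p.2) := by
    rw [hνdef, hYd]
    ext s hs
    rw [Measure.prod_apply hs, withDensity_apply _ hs, ← lintegral_indicator hs,
      lintegral_prod _ (hfYsnd.indicator hs).aemeasurable]
    congr 1; funext x
    rw [withDensity_apply _ (measurable_prodMk_left hs),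
      ← lintegral_indicator (measurable_prodMk_left hs)]
    refine lintegral_congr fun y => ?_
    by_cases hxy : (x, y) ∈ s
    · rw [Set.indicator_of_mem (show y ∈ Prod.mk x ⁻¹' s from hxy), Set.indicator_of_mem hxy]
    · rw [Set.indicator_of_notMem (show y ∉ Prod.mk x ⁻¹' s from hxy),
        Set.indicator_of_notMem hxy]
  set h : 𝒳 × EuclideanSpace ℝ (Fin n) → ℝ≥0∞ := fun p => g p * (fY p.2)⁻¹ with hhdef
  have hhmeas : Measurable h := hg.mul (hfYmeas.comp measurable_snd).inv
  -- a.e. good set on the product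
  have hbad1 : (μX.prod volume) {p : 𝒳 × EuclideanSpace ℝ (Fin n) | fY p.2 = ⊤} = 0 := by
    have hset : {p : 𝒳 × EuclideanSpace ℝ (Fin n) | fY p.2 = ⊤}
        = Set.univ ×ˢ {y | fY y = ⊤} := by
      ext ⟨x, y⟩; simp
    rw [hset, Measure.prod_prod, hfY_null, mul_zero]
  have hbad2 : (μX.prod volume) {p : 𝒳 × EuclideanSpace ℝ (Fin n) | fY p.2 = 0 ∧ g p ≠ 0} = 0 := by
    have hsmeas : MeasurableSet {p : 𝒳 × EuclideanSpace ℝ (Fin n) | fY p.2 = 0 ∧ g p ≠ 0} := by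
      apply MeasurableSet.inter
      · exact (hfYmeas.comp measurable_snd) (measurableSet_singleton 0)
      · exact (hg (measurableSet_singleton 0)).compl
    rw [Measure.prod_apply_symm hsmeas]
    have h2 : ∀ y, μX ((fun x => (x, y)) ⁻¹' {p : 𝒳 × EuclideanSpace ℝ (Fin n) |
        fY p.2 = 0 ∧ g p ≠ 0}) = 0 := by
      intro y
      by_cases hy : fY y = 0
      · have hgy : Measurable fun x => g (x, y) := hg.comp measurable_prodMk_right
        have h0 : ∀ᵐ x ∂μX, g (x, y) = 0 := (lintegral_eq_zero_iff hgy).mp hy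
        have hpre : ((fun x => (x, y)) ⁻¹' {p : 𝒳 × EuclideanSpace ℝ (Fin n) |
            fY p.2 = 0 ∧ g p ≠ 0}) = {x | ¬ g (x, y) = 0} := by
          ext x; simp [hy]
        rw [hpre, ← ae_iff]
        exact h0
      · have hpre : ((fun x => (x, y)) ⁻¹' {p : 𝒳 × EuclideanSpace ℝ (Fin n) |
            fY p.2 = 0 ∧ g p ≠ 0}) = ∅ := by
          ext x; simp [hy]
        rw [hpre]; simp
    simp_rw [h2]
    simp
  have hgood : ∀ᵐ p ∂(μX.prod volume), fY p.2 ≠ ⊤ ∧ (fY p.2 = 0 → g p = 0) := by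
    have h1 : ∀ᵐ p ∂(μX.prod volume), fY p.2 ≠ ⊤ := by
      rw [ae_iff]
      convert hbad1 using 2
      ext p; simp
    have h2 : ∀ᵐ p ∂(μX.prod volume), fY p.2 = 0 → g p = 0 := by
      rw [ae_iff]
      convert hbad2 using 2
      ext p
      simp only [Set.mem_setOf_eq]
      tauto
    exact h1.and h2
  -- m = ν.withDensity h
  have hμν : m = ν.withDensity h := by
    rw [hνd, ← withDensity_mul _ hfYsnd hhmeas, hμm]
    apply withDensity_congr_ae
    filter_upwards [hgood] with p hp
    rcases eq_or_ne (fY p.2) 0 with h0 | h0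
    · simp [Pi.mul_apply, hhdef, h0, hp.2 h0]
    · show g p = fY p.2 * (g p * (fY p.2)⁻¹)
      rw [mul_comm (g p) _, ← mul_assoc, ENNReal.mul_inv_cancel h0 hp.1, one_mul]
  have hac : m ≪ ν := by
    rw [hμν]; exact withDensity_absolutelyContinuous _ _
  have hrn : m.rnDeriv ν =ᵐ[ν] h := by
    rw [hμν]
    exact Measure.rnDeriv_withDensity _ hhmeas
  have hllr : llr m ν =ᵐ[m] fun p => Real.log ((h p).toReal) := by
    have h1 : m.rnDeriv ν =ᵐ[m] h := hrn.filter_mono hac.ae_le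
    rw [llr_def]
    filter_upwards [h1] with p hp
    rw [hp]
  set P := ∫⁻ p, ENNReal.ofReal (llr m ν p) ∂m with hPdef
  set N := ∫⁻ p, ENNReal.ofReal (-llr m ν p) ∂m with hNdef
  -- express P, N as double integrals
  have hφmeasP : Measurable fun p : 𝒳 × EuclideanSpace ℝ (Fin n) =>
      ENNReal.ofReal (f p.1 p.2 * Real.log (f p.1 p.2 / (∫ x, f x p.2 ∂μX))) :=
    ENNReal.measurable_ofReal.comp
      (hf.mul (Real.measurable_log.comp (hf.div (hBmeas.comp measurable_snd))))
  have hφmeasN : Measurable fun p : 𝒳 × EuclideanSpace ℝ (Fin n) =>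
      ENNReal.ofReal (-(f p.1 p.2 * Real.log (f p.1 p.2 / (∫ x, f x p.2 ∂μX)))) :=
    ENNReal.measurable_ofReal.comp
      (hf.mul (Real.measurable_log.comp (hf.div (hBmeas.comp measurable_snd)))).neg
  have hhmeas' : Measurable fun p => ENNReal.ofReal (Real.log ((h p).toReal)) :=
    ENNReal.measurable_ofReal.comp (Real.measurable_log.comp hhmeas.ennreal_toReal)
  have hhmeasN' : Measurable fun p => ENNReal.ofReal (-Real.log ((h p).toReal)) :=
    ENNReal.measurable_ofReal.comp (Real.measurable_log.comp hhmeas.ennreal_toReal).neg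
  have hptwise : ∀ᵐ p ∂(μX.prod volume),
      g p * ENNReal.ofReal (Real.log ((h p).toReal))
        = ENNReal.ofReal (f p.1 p.2 * Real.log (f p.1 p.2 / (∫ x, f x p.2 ∂μX)))
      ∧ g p * ENNReal.ofReal (-Real.log ((h p).toReal))
        = ENNReal.ofReal (-(f p.1 p.2 * Real.log (f p.1 p.2 / (∫ x, f x p.2 ∂μX)))) := by
    filter_upwards [hgood] with p hp
    rcases eq_or_ne (fY p.2) 0 with h0 | h0
    · have hg0 : g p = 0 := hp.2 h0
      have hfp : f p.1 p.2 = 0 := by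
        have h1 : ENNReal.ofReal (f p.1 p.2) = 0 := hg0
        rw [ENNReal.ofReal_eq_zero] at h1
        exact le_antisymm h1 (hf0 _ _)
      constructor <;> simp [hg0, hfp]
    · have htR : ((h p).toReal) = f p.1 p.2 / (∫ x, f x p.2 ∂μX) := by
        show ((g p * (fY p.2)⁻¹).toReal) = _
        rw [ENNReal.toReal_mul, ENNReal.toReal_inv, hBtoReal p.2]
        show (ENNReal.ofReal (f p.1 p.2)).toReal * ((fY p.2).toReal)⁻¹ = _
        rw [ENNReal.toReal_ofReal (hf0 _ _), div_eq_mul_inv]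
      constructor
      · rw [htR]
        show ENNReal.ofReal (f p.1 p.2) * _ = _
        rw [← ENNReal.ofReal_mul (hf0 _ _)]
      · rw [htR]
        show ENNReal.ofReal (f p.1 p.2) * _ = _
        rw [← ENNReal.ofReal_mul (hf0 _ _), neg_mul_eq_mul_neg]
  have hP : P = ∫⁻ y, ∫⁻ x,
      ENNReal.ofReal (f x y * Real.log (f x y / (∫ x', f x' y ∂μX))) ∂μX ∂volume := by
    calc P = ∫⁻ p, ENNReal.ofReal (Real.log ((h p).toReal)) ∂m :=
        lintegral_congr_ae (hllr.mono fun p hp => by simp only [hp])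
    _ = ∫⁻ p, (g * fun p => ENNReal.ofReal (Real.log ((h p).toReal))) p ∂(μX.prod volume) := by
        rw [hμm, lintegral_withDensity_eq_lintegral_mul _ hg hhmeas']
    _ = ∫⁻ p, ENNReal.ofReal (f p.1 p.2 * Real.log (f p.1 p.2 / (∫ x, f x p.2 ∂μX)))
          ∂(μX.prod volume) :=
        lintegral_congr_ae (hptwise.mono fun p hp => hp.1)
    _ = _ := lintegral_prod_symm _ hφmeasP.aemeasurable
  have hN : N = ∫⁻ y, ∫⁻ x,
      ENNReal.ofReal (-(f x y * Real.log (f x y / (∫ x', f x' y ∂μX)))) ∂μX ∂volume := by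
    calc N = ∫⁻ p, ENNReal.ofReal (-Real.log ((h p).toReal)) ∂m :=
        lintegral_congr_ae (hllr.mono fun p hp => by simp only [hp])
    _ = ∫⁻ p, (g * fun p => ENNReal.ofReal (-Real.log ((h p).toReal))) p ∂(μX.prod volume) := by
        rw [hμm, lintegral_withDensity_eq_lintegral_mul _ hg hhmeasN']
    _ = ∫⁻ p, ENNReal.ofReal (-(f p.1 p.2 * Real.log (f p.1 p.2 / (∫ x, f x p.2 ∂μX))))
          ∂(μX.prod volume) :=
        lintegral_congr_ae (hptwise.mono fun p hp => hp.2)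
    _ = _ := lintegral_prod_symm _ hφmeasN.aemeasurable
  -- N ≤ 1
  have hN1 : N ≤ 1 := by
    rw [hN]
    calc ∫⁻ y, ∫⁻ x,
        ENNReal.ofReal (-(f x y * Real.log (f x y / (∫ x', f x' y ∂μX)))) ∂μX ∂volume
        ≤ ∫⁻ y, fY y ∂volume := by
          apply lintegral_mono fun y => ?_
          calc ∫⁻ x, ENNReal.ofReal (-(f x y * Real.log (f x y / (∫ x', f x' y ∂μX)))) ∂μX
              ≤ ∫⁻ _x, ENNReal.ofReal (∫ x', f x' y ∂μX) ∂μX :=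
                lintegral_mono fun x =>
                  ENNReal.ofReal_le_ofReal (neg_mul_log_div_le (hf0 x y) (hBnn y))
          _ = ENNReal.ofReal (∫ x', f x' y ∂μX) := by
              rw [lintegral_const, measure_univ, mul_one]
          _ ≤ fY y := by
              rw [hBtoReal y]
              exact ENNReal.ofReal_toReal_le
    _ = 1 := hfY_int_one
  -- slice bound
  set S := {y : EuclideanSpace ℝ (Fin n) | 0 < ∫ x, f x y ∂μX} with hSdef
  have hSmeas : MeasurableSet S := measurableSet_lt measurable_const hBmeas
  set Bnd : EuclideanSpace ℝ (Fin n) → ℝ≥0∞ := fun y =>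
    ENNReal.ofReal (kappaSup t) * ENNReal.ofReal (∫ x, f x y ∂μX) ^ (1 - 2 * t)
      * (∫⁻ x, ENNReal.ofReal ((f x y - ∫ x', f x' y ∂μX) ^ 2) ∂μX) ^ t with hBnddef
  have hVymeas : Measurable fun y => ∫⁻ x, ENNReal.ofReal ((f x y - ∫ x', f x' y ∂μX) ^ 2) ∂μX :=
    Measurable.lintegral_prod_left' (f := fun p : 𝒳 × EuclideanSpace ℝ (Fin n) =>
        ENNReal.ofReal ((f p.1 p.2 - ∫ x', f x' p.2 ∂μX) ^ 2))
      (ENNReal.measurable_ofReal.comp ((hf.sub (hBmeas.comp measurable_snd)).pow_const 2))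
  have hslice : ∀ y, ∫⁻ x, ENNReal.ofReal (f x y * Real.log (f x y / (∫ x', f x' y ∂μX))) ∂μX
      ≤ ∫⁻ x, ENNReal.ofReal (-(f x y * Real.log (f x y / (∫ x', f x' y ∂μX)))) ∂μX
        + S.indicator Bnd y := by
    intro y
    by_cases hy : 0 < ∫ x, f x y ∂μX
    · rw [Set.indicator_of_mem (show y ∈ S from hy) Bnd]
      exact slice_bound μX ht0 ht1 (hfy y) (fun x => hf0 x y) hy
    · rw [Set.indicator_of_notMem (show y ∉ S from hy) Bnd, add_zero]
      have hBy : (∫ x, f x y ∂μX) = 0 := le_antisymm (not_lt.mp hy) (hBnn y)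
      simp [hBy]
  -- combine
  have hPN : P ≤ N + ENNReal.ofReal (kappaSup t) * ∫⁻ y in S,
      ENNReal.ofReal (∫ x, f x y ∂μX) ^ (1 - 2 * t)
        * (∫⁻ x, ENNReal.ofReal ((f x y - ∫ x', f x' y ∂μX) ^ 2) ∂μX) ^ t ∂volume := by
    rw [hP, hN]
    have hNinner : Measurable fun y => ∫⁻ x,
        ENNReal.ofReal (-(f x y * Real.log (f x y / (∫ x', f x' y ∂μX)))) ∂μX :=
      hφmeasN.lintegral_prod_left'
    calc ∫⁻ y, ∫⁻ x,
        ENNReal.ofReal (f x y * Real.log (f x y / (∫ x', f x' y ∂μX))) ∂μX ∂volume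
        ≤ ∫⁻ y, (∫⁻ x,
            ENNReal.ofReal (-(f x y * Real.log (f x y / (∫ x', f x' y ∂μX)))) ∂μX
          + S.indicator Bnd y) ∂volume := lintegral_mono hslice
    _ = (∫⁻ y, ∫⁻ x,
            ENNReal.ofReal (-(f x y * Real.log (f x y / (∫ x', f x' y ∂μX)))) ∂μX ∂volume)
          + ∫⁻ y, S.indicator Bnd y ∂volume := lintegral_add_left hNinner _
    _ = (∫⁻ y, ∫⁻ x,
            ENNReal.ofReal (-(f x y * Real.log (f x y / (∫ x', f x' y ∂μX)))) ∂μX ∂volume)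
          + ∫⁻ y in S, Bnd y ∂volume := by rw [lintegral_indicator hSmeas]
    _ = _ := by
        congr 1
        rw [hBnddef]
        simp_rw [mul_assoc]
        have hprod_meas : Measurable fun y =>
            ENNReal.ofReal (∫ x, f x y ∂μX) ^ (1 - 2 * t)
              * (∫⁻ x, ENNReal.ofReal ((f x y - ∫ x', f x' y ∂μX) ^ 2) ∂μX) ^ t :=
          ((ENNReal.measurable_ofReal.comp hBmeas).pow_const _).mul (hVymeas.pow_const _)
        rw [lintegral_const_mul _ hprod_meas]
  -- conclude
  by_cases hPtop : P = ⊤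
  · have hRtop : ENNReal.ofReal (kappaSup t) * (∫⁻ y in S,
        ENNReal.ofReal (∫ x, f x y ∂μX) ^ (1 - 2 * t)
          * (∫⁻ x, ENNReal.ofReal ((f x y - ∫ x', f x' y ∂μX) ^ 2) ∂μX) ^ t ∂volume) = ⊤ := by
      by_contra hne
      have hlt : N + ENNReal.ofReal (kappaSup t) * (∫⁻ y in S,
          ENNReal.ofReal (∫ x, f x y ∂μX) ^ (1 - 2 * t)
            * (∫⁻ x, ENNReal.ofReal ((f x y - ∫ x', f x' y ∂μX) ^ 2) ∂μX) ^ t ∂volume) < ⊤ :=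
        ENNReal.add_lt_top.mpr ⟨lt_of_le_of_lt hN1 ENNReal.one_lt_top, lt_top_iff_ne_top.mpr hne⟩
      exact (lt_of_le_of_lt hPN hlt).ne hPtop
    calc klDiv m ν ≤ ⊤ := le_top
    _ = _ := hRtop.symm
  · have hN_ne : N ≠ ⊤ := ne_top_of_le_ne_top ENNReal.one_ne_top hN1
    have hint : Integrable (llr m ν) m := by
      refine ⟨(measurable_llr _ _).aestronglyMeasurable, ?_⟩
      have habs : ∫⁻ p, ↑‖llr m ν p‖₊ ∂m = P + N := by
        have hmeas_ofreal_llr : Measurable fun p : 𝒳 × EuclideanSpace ℝ (Fin n) =>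
            ENNReal.ofReal (llr m ν p) := ENNReal.measurable_ofReal.comp (measurable_llr _ _)
        rw [hPdef, hNdef, ← lintegral_add_left hmeas_ofreal_llr]
        apply lintegral_congr fun p => ?_
        rw [← enorm_eq_nnnorm, Real.enorm_eq_ofReal_abs]
        rcases le_total 0 (llr m ν p) with hl | hl
        · rw [abs_of_nonneg hl, ENNReal.ofReal_of_nonpos (show -llr m ν p ≤ 0 by linarith), add_zero]
        · rw [abs_of_nonpos hl, ENNReal.ofReal_of_nonpos hl, zero_add]
      show ∫⁻ p, ↑‖llr m ν p‖₊ ∂m < ⊤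
      rw [habs]
      exact ENNReal.add_lt_top.mpr ⟨lt_top_iff_ne_top.mpr hPtop, lt_top_iff_ne_top.mpr hN_ne⟩
    have hklDiv : klDiv m ν = ENNReal.ofReal (∫ p, llr m ν p ∂m) := by
      rw [klDiv, if_pos ⟨hac, hint⟩]
    rw [hklDiv, integral_eq_lintegral_pos_part_sub_lintegral_neg_part hint]
    by_cases hκR : ENNReal.ofReal (kappaSup t) * (∫⁻ y in S,
        ENNReal.ofReal (∫ x, f x y ∂μX) ^ (1 - 2 * t)
          * (∫⁻ x, ENNReal.ofReal ((f x y - ∫ x', f x' y ∂μX) ^ 2) ∂μX) ^ t ∂volume) = ⊤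
    · rw [hκR]; exact le_top
    · have h1 : P.toReal ≤ N.toReal + (ENNReal.ofReal (kappaSup t) * (∫⁻ y in S,
          ENNReal.ofReal (∫ x, f x y ∂μX) ^ (1 - 2 * t)
            * (∫⁻ x, ENNReal.ofReal ((f x y - ∫ x', f x' y ∂μX) ^ 2) ∂μX) ^ t ∂volume)).toReal := by
        have h2 := ENNReal.toReal_mono (by
          exact ENNReal.add_ne_top.mpr ⟨hN_ne, hκR⟩) hPN
        rwa [ENNReal.toReal_add hN_ne hκR] at h2
      calc ENNReal.ofReal (P.toReal - N.toReal)
          ≤ ENNReal.ofReal ((ENNReal.ofReal (kappaSup t) * (∫⁻ y in S,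
            ENNReal.ofReal (∫ x, f x y ∂μX) ^ (1 - 2 * t)
              * (∫⁻ x, ENNReal.ofReal ((f x y - ∫ x', f x' y ∂μX) ^ 2) ∂μX) ^ t ∂volume)).toReal) :=
            ENNReal.ofReal_le_ofReal (by linarith)
      _ = _ := ENNReal.ofReal_toReal hκR
end

section
/- Let (X,Y) be a random pair such that the conditional distribution of Y given X has a density f(y|x) with respect to Lebesgue measure on ℝⁿ, with marginal density f(y) = E[f(y|X)]. Then for every 0 < r < 1, with t = (1−r)/(2−r), the mutual information satisfies I(X;Y) ≤ κ(t) · ( e^{h_r(Y)} · V_0(Y|X) )^t. -/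
/-!
With `m = P_X × Lebesgue`, the joint law has density `f(x,y)` and `P_X × P_Y` has density
`f_Y(y)` with respect to `m`, so `I(X;Y) = ∫∫ f_Y(y) klFun(f(x,y)/f_Y(y)) dP_X(x) dy`.
For fixed `y`, the tangent bound `log z ≤ z/c + log c - 1` at `c = E[f(y|X)²]/f_Y(y)²` bounds
the inner integral by `f_Y log(1 + Var f(y|X)/f_Y²)`, and the definition of `κ` turns this into
`κ(t) Var(f(y|X))^t f_Y(y)^(1-2t)`. Since `r(1-t) = 1-2t`, Hölder's inequality with exponents
`1/t` and `1/(1-t)` integrates this over `y` to the stated bound.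
-/

open MeasureTheory Set
open scoped ENNReal NNReal Real ProbabilityTheory

open Real ProbabilityTheory
open InformationTheory (klFun klFun_apply klFun_zero klFun_nonneg measurable_klFun)

section Kappa

variable {t : ℝ}

lemma log_one_add_le_rpow_div {u : ℝ} (hu : 0 ≤ u) (ht0 : 0 < t) (ht1 : t ≤ 1) :
    log (1 + u) ≤ u ^ t / t := by
  have hlog : t * log (1 + u) ≤ (1 + u) ^ t - 1 := by
    rw [← log_rpow (by linarith)]
    exact log_le_sub_one_of_pos (by positivity)
  have hsub : (1 + u) ^ t ≤ 1 + u ^ t := by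
    simpa using rpow_add_le_add_rpow zero_le_one hu ht0.le ht1
  rw [le_div_iff₀ ht0]
  linarith

lemma bddAbove_range_log_one_add_div_rpow (ht0 : 0 < t) (ht1 : t ≤ 1) :
    BddAbove (range fun u : Ioi (0 : ℝ) => log (1 + (u : ℝ)) / (u : ℝ) ^ t) := by
  refine ⟨1 / t, ?_⟩
  rintro _ ⟨⟨u, hu⟩, rfl⟩
  rw [div_le_iff₀ (rpow_pos_of_pos hu t), one_div_mul_eq_div]
  exact log_one_add_le_rpow_div (le_of_lt hu) ht0 ht1

lemma log_one_add_le_kappaSup_mul_rpow {w : ℝ} (ht0 : 0 < t) (ht1 : t ≤ 1) (hw : 0 ≤ w) :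
    log (1 + w) ≤ kappaSup t * w ^ t := by
  rcases hw.eq_or_lt with rfl | hw
  · simp [zero_rpow ht0.ne']
  have h := le_ciSup (bddAbove_range_log_one_add_div_rpow ht0 ht1) ⟨w, hw⟩
  rwa [div_le_iff₀ (rpow_pos_of_pos hw t)] at h

lemma kappaSup_pos (ht0 : 0 < t) (ht1 : t ≤ 1) : 0 < kappaSup t := by
  have h := le_ciSup (bddAbove_range_log_one_add_div_rpow ht0 ht1) ⟨1, by norm_num⟩
  refine lt_of_lt_of_le ?_ h
  norm_num [log_pos]

lemma mul_log_one_add_div_sq_le {b V : ℝ} (hb : 0 < b) (hV : 0 ≤ V) (ht0 : 0 < t) (ht1 : t ≤ 1) :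
    b * log (1 + V / b ^ 2) ≤ kappaSup t * V ^ t * b ^ (1 - 2 * t) := by
  calc b * log (1 + V / b ^ 2) ≤ b * (kappaSup t * (V / b ^ 2) ^ t) :=
        mul_le_mul_of_nonneg_left (log_one_add_le_kappaSup_mul_rpow ht0 ht1 (by positivity)) hb.le
    _ = kappaSup t * V ^ t * b ^ (1 - 2 * t) := by
        rw [div_rpow hV (by positivity), ← rpow_natCast, ← rpow_mul hb.le, rpow_sub hb, rpow_one]
        push_cast
        field_simp

end Kappa

lemma klFun_le_sq_div_add {x c : ℝ} (hx : 0 ≤ x) (hc : 0 < c) :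
    klFun x ≤ x ^ 2 / c + x * (log c - 2) + 1 := by
  rcases hx.eq_or_lt with rfl | hx
  · simp [klFun_zero]
  have hlog : log (x / c) ≤ x / c - 1 := log_le_sub_one_of_pos (div_pos hx hc)
  rw [log_div hx.ne' hc.ne'] at hlog
  have h := mul_le_mul_of_nonneg_left hlog hx.le
  have e : x * (x / c - 1) = x ^ 2 / c - x := by field_simp
  rw [klFun_apply]
  nlinarith

section Variance

variable {α : Type*} [MeasurableSpace α] {μ : Measure α} [IsProbabilityMeasure μ] {a : α → ℝ}

lemma lintegral_mul_klFun_div_le_mul_log (ha : MemLp a 2 μ) (ha0 : 0 ≤ᵐ[μ] a) (hb : 0 < μ[a]) :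
    ∫⁻ x, ENNReal.ofReal (μ[a] * klFun (a x / μ[a])) ∂μ
      ≤ ENNReal.ofReal (μ[a] * log (1 + Var[a; μ] / μ[a] ^ 2)) := by
  set b := μ[a]
  set c := 1 + Var[a; μ] / b ^ 2
  have hc : 0 < c := by have := variance_nonneg a μ; positivity
  -- with this `c`, i.e. `b ^ 2 * c = μ[a ^ 2]`, the quadratic majorant integrates to `b * log c`
  set H := fun x => a x ^ 2 / (b * c) + a x * (log c - 2) + b
  have hH : ∀ᵐ x ∂μ, b * klFun (a x / b) ≤ H x := by
    filter_upwards [ha0] with x hx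
    calc b * klFun (a x / b) ≤ b * ((a x / b) ^ 2 / c + a x / b * (log c - 2) + 1) :=
          mul_le_mul_of_nonneg_left (klFun_le_sq_div_add (div_nonneg hx hb.le) hc) hb.le
      _ = H x := by simp only [H]; field_simp
  have hH0 : 0 ≤ᵐ[μ] H := by
    filter_upwards [hH, ha0] with x hx hx0
    exact (mul_nonneg hb.le (klFun_nonneg (div_nonneg hx0 hb.le))).trans hx
  have hint_sq : Integrable (fun x => a x ^ 2 / (b * c)) μ := ha.integrable_sq.div_const _
  have hint_lin : Integrable (fun x => a x * (log c - 2)) μ :=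
    (ha.integrable one_le_two).mul_const _
  have hint_quad : Integrable (fun x => a x ^ 2 / (b * c) + a x * (log c - 2)) μ :=
    hint_sq.add hint_lin
  have hHint : Integrable H μ := hint_quad.add (integrable_const b)
  have hsq : ∫ x, a x ^ 2 ∂μ = b ^ 2 * c := by
    simp only [c, variance_eq_sub ha, Pi.pow_apply]
    field_simp
    ring
  have hintH : ∫ x, H x ∂μ = b * log c := by
    rw [integral_add hint_quad (integrable_const b), integral_add hint_sq hint_lin,
      integral_div, integral_mul_const, integral_const, hsq]
    simp only [probReal_univ, one_smul]
    field_simp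
    ring
  calc ∫⁻ x, ENNReal.ofReal (b * klFun (a x / b)) ∂μ ≤ ∫⁻ x, ENNReal.ofReal (H x) ∂μ :=
        lintegral_mono_ae (hH.mono fun x hx => ENNReal.ofReal_le_ofReal hx)
    _ = ENNReal.ofReal (b * log c) := by
        rw [← ofReal_integral_eq_lintegral_ofReal hHint hH0, hintH]

lemma lintegral_mul_klFun_div_le_evariance (ha : AEStronglyMeasurable a μ) (ha0 : 0 ≤ᵐ[μ] a)
    {t : ℝ} (ht0 : 0 < t) (ht1 : t ≤ 1) :
    ∫⁻ x, ENNReal.ofReal (μ[a] * klFun (a x / μ[a])) ∂μ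
      ≤ ENNReal.ofReal (kappaSup t) * eVar[a; μ] ^ t * ENNReal.ofReal μ[a] ^ (1 - 2 * t) := by
  rcases (integral_nonneg_of_ae ha0).eq_or_lt with hb | hb
  · simp [← hb]
  have hκ := kappaSup_pos ht0 ht1
  by_cases hL2 : MemLp a 2 μ
  · have hV := variance_nonneg a μ
    rw [← ofReal_variance hL2, ENNReal.ofReal_rpow_of_nonneg hV ht0.le,
      ENNReal.ofReal_rpow_of_pos hb, ← ENNReal.ofReal_mul hκ.le,
      ← ENNReal.ofReal_mul (by positivity)]
    exact (lintegral_mul_klFun_div_le_mul_log hL2 ha0 hb).trans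
      (ENNReal.ofReal_le_ofReal (mul_log_one_add_div_sq_le hb hV ht0 ht1))
  · rw [(evariance_eq_top_iff ha).2 hL2, ENNReal.top_rpow_of_pos ht0,
      ENNReal.mul_top (by simpa using hκ),
      ENNReal.top_mul (ENNReal.rpow_pos (ENNReal.ofReal_pos.2 hb) ENNReal.ofReal_ne_top).ne']
    exact le_top

end Variance

lemma lintegral_rpow_mul_ofReal_rpow_le {β : Type*} [MeasurableSpace β] {ν : Measure β}
    {V : β → ℝ≥0∞} {g : β → ℝ} (hV : AEMeasurable V ν) (hg : Measurable g) {r : ℝ} (hr0 : 0 < r)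
    (hr1 : r < 1) :
    ∫⁻ y, V y ^ ((1 - r) / (2 - r)) * ENNReal.ofReal (g y) ^ (1 - 2 * ((1 - r) / (2 - r))) ∂ν
      ≤ ((∫⁻ y, ENNReal.ofReal (g y) ^ r ∂ν) ^ (1 / (1 - r))
          * ∫⁻ y in {y | 0 < g y}, V y ∂ν) ^ ((1 - r) / (2 - r)) := by
  set t := (1 - r) / (2 - r)
  set S := {y | 0 < g y}
  have h2r : 2 - r ≠ 0 := by linarith
  have h1r : 1 - r ≠ 0 := by linarith
  have ht0 : 0 < t := div_pos (by linarith) (by linarith)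
  have ht1 : t < 1 := (div_lt_one (by linarith)).2 (by linarith)
  have h2t : 0 < 1 - 2 * t := by
    rw [show 1 - 2 * t = r / (2 - r) by simp only [t]; field_simp; ring]
    exact div_pos hr0 (by linarith)
  have hS : MeasurableSet S := measurableSet_lt measurable_const hg
  have hsplit : ∀ y, V y ^ t * ENNReal.ofReal (g y) ^ (1 - 2 * t)
      = S.indicator V y ^ t * (ENNReal.ofReal (g y) ^ r) ^ (1 - t) := by
    intro y
    rw [← ENNReal.rpow_mul, show r * (1 - t) = 1 - 2 * t by simp only [t]; field_simp; ring]
    by_cases hy : y ∈ S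
    · rw [indicator_of_mem hy]
    · rw [indicator_of_notMem hy, ENNReal.ofReal_of_nonpos (not_lt.1 hy),
        ENNReal.zero_rpow_of_pos h2t, ENNReal.zero_rpow_of_pos ht0]
      simp
  calc ∫⁻ y, V y ^ t * ENNReal.ofReal (g y) ^ (1 - 2 * t) ∂ν
      = ∫⁻ y, S.indicator V y ^ t * (ENNReal.ofReal (g y) ^ r) ^ (1 - t) ∂ν :=
        lintegral_congr hsplit
    _ ≤ (∫⁻ y, S.indicator V y ∂ν) ^ t * (∫⁻ y, ENNReal.ofReal (g y) ^ r ∂ν) ^ (1 - t) :=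
        ENNReal.lintegral_mul_norm_pow_le (hV.indicator hS)
          ((ENNReal.measurable_ofReal.comp hg).aemeasurable.pow_const r) ht0.le (by linarith)
          (by ring)
    _ = _ := by
        rw [lintegral_indicator hS, ENNReal.mul_rpow_of_nonneg _ _ ht0.le, ← ENNReal.rpow_mul,
          show 1 / (1 - r) * t = 1 - t by simp only [t]; field_simp; ring, mul_comm]

section KLDivergence

variable {α : Type*} [MeasurableSpace α]

lemma klDiv_eq_informationTheory_klDiv {μ ν : Measure α} (h : μ univ = ν univ) :
    klDiv μ ν = InformationTheory.klDiv μ ν := by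
  simp [klDiv, InformationTheory.klDiv_def, measureReal_def, h]

lemma klDiv_withDensity_ofReal {m : Measure α} {p q : α → ℝ} (hp : Measurable p) (hq : Measurable q)
    (hp0 : ∀ x, 0 ≤ p x) (hq0 : ∀ x, 0 ≤ q x) (hpq : ∀ᵐ x ∂m, q x = 0 → p x = 0)
    [IsProbabilityMeasure (m.withDensity fun x => ENNReal.ofReal (p x))]
    [IsProbabilityMeasure (m.withDensity fun x => ENNReal.ofReal (q x))] :
    klDiv (m.withDensity fun x => ENNReal.ofReal (p x))
        (m.withDensity fun x => ENNReal.ofReal (q x))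
      = ∫⁻ x, ENNReal.ofReal (q x * klFun (p x / q x)) ∂m := by
  set ν := m.withDensity fun x => ENNReal.ofReal (q x)
  have hD : Measurable fun x => ENNReal.ofReal (p x / q x) :=
    ENNReal.measurable_ofReal.comp (hp.div hq)
  have hπ : m.withDensity (fun x => ENNReal.ofReal (p x))
      = ν.withDensity fun x => ENNReal.ofReal (p x / q x) := by
    rw [← withDensity_mul m (f := fun x => ENNReal.ofReal (q x)) (by fun_prop) hD]
    refine withDensity_congr_ae ?_
    filter_upwards [hpq] with x hx
    by_cases hqx : q x = 0
    · simp [hqx, hx hqx]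
    · rw [Pi.mul_apply, ← ENNReal.ofReal_mul (hq0 x), mul_div_cancel₀ _ hqx]
  have : IsProbabilityMeasure (ν.withDensity fun x => ENNReal.ofReal (p x / q x)) :=
    hπ ▸ inferInstance
  calc klDiv (m.withDensity fun x => ENNReal.ofReal (p x)) ν
      = InformationTheory.klDiv (ν.withDensity fun x => ENNReal.ofReal (p x / q x)) ν := by
        rw [klDiv_eq_informationTheory_klDiv (by simp), hπ]
    _ = ∫⁻ x, ENNReal.ofReal (klFun (p x / q x)) ∂ν := by
        rw [InformationTheory.klDiv_eq_lintegral_klFun_of_ac (withDensity_absolutelyContinuous _ _)]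
        refine lintegral_congr_ae ?_
        filter_upwards [Measure.rnDeriv_withDensity ν hD] with x hx
        rw [hx, ENNReal.toReal_ofReal (div_nonneg (hp0 x) (hq0 x))]
    _ = ∫⁻ x, ENNReal.ofReal (q x * klFun (p x / q x)) ∂m := by
        rw [lintegral_withDensity_eq_lintegral_mul _ (by fun_prop) (by fun_prop)]
        simp only [Pi.mul_apply, ENNReal.ofReal_mul (hq0 _)]

end KLDivergence

section Channel

variable {α β : Type*} [MeasurableSpace α] [MeasurableSpace β] {μ : Measure α} {ν : Measure β}
  {κ : Kernel α β}

lemma compProd_eq_withDensity [SFinite μ] [SFinite ν] [IsSFiniteKernel κ] {g : α → β → ℝ≥0∞}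
    (hg : Measurable (Function.uncurry g)) (hκ : ∀ x, κ x = ν.withDensity (g x)) :
    μ ⊗ₘ κ = (μ.prod ν).withDensity fun z => g z.1 z.2 := by
  ext s hs
  rw [Measure.compProd_apply hs, withDensity_apply _ hs, ← lintegral_indicator hs,
    lintegral_prod _ (Measurable.indicator (f := fun z : α × β => g z.1 z.2) hg hs).aemeasurable]
  refine lintegral_congr fun x => ?_
  rw [hκ x, withDensity_apply _ (measurable_prodMk_left hs),
    ← lintegral_indicator (measurable_prodMk_left hs)]
  rfl

lemma comp_eq_withDensity_lintegral [SFinite μ] [SFinite ν] {g : α → β → ℝ≥0∞}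
    (hg : Measurable (Function.uncurry g)) (hκ : ∀ x, κ x = ν.withDensity (g x)) :
    κ ∘ₘ μ = ν.withDensity fun y => ∫⁻ x, g x y ∂μ := by
  ext s hs
  rw [Measure.bind_apply hs κ.aemeasurable, withDensity_apply _ hs]
  simp_rw [hκ, withDensity_apply _ hs]
  exact lintegral_lintegral_swap hg.aemeasurable

section RealDensity

variable [IsFiniteMeasure μ] [IsFiniteKernel κ] [SFinite ν] {f : α → β → ℝ}

lemma ae_integrable_of_kernel_eq_withDensity (hf : Measurable (Function.uncurry f))
    (hf0 : ∀ x y, 0 ≤ f x y)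
    (hκ : ∀ x, κ x = ν.withDensity fun y => ENNReal.ofReal (f x y)) :
    ∀ᵐ y ∂ν, Integrable (fun x => f x y) μ := by
  have hG : Measurable fun y => ∫⁻ x, ENNReal.ofReal (f x y) ∂μ :=
    hf.ennreal_ofReal.lintegral_prod_left'
  have hfin : ∫⁻ y, ∫⁻ x, ENNReal.ofReal (f x y) ∂μ ∂ν ≠ ⊤ := by
    rw [← setLIntegral_univ, ← withDensity_apply _ MeasurableSet.univ,
      ← comp_eq_withDensity_lintegral (g := fun x y => ENNReal.ofReal (f x y)) hf.ennreal_ofReal hκ]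
    exact measure_ne_top _ _
  filter_upwards [ae_lt_top hG hfin] with y hy
  exact (lintegral_ofReal_ne_top_iff_integrable
    (hf.comp measurable_prodMk_right).aestronglyMeasurable (ae_of_all _ (hf0 · y))).1 hy.ne

lemma comp_eq_withDensity_integral (hf : Measurable (Function.uncurry f)) (hf0 : ∀ x y, 0 ≤ f x y)
    (hκ : ∀ x, κ x = ν.withDensity fun y => ENNReal.ofReal (f x y)) :
    κ ∘ₘ μ = ν.withDensity fun y => ENNReal.ofReal (∫ x, f x y ∂μ) := by
  rw [comp_eq_withDensity_lintegral (g := fun x y => ENNReal.ofReal (f x y)) hf.ennreal_ofReal hκ]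
  refine withDensity_congr_ae ?_
  filter_upwards [ae_integrable_of_kernel_eq_withDensity (μ := μ) hf hf0 hκ] with y hy
  exact (ofReal_integral_eq_lintegral_ofReal hy (ae_of_all _ (hf0 · y))).symm

lemma ae_density_eq_zero_of_integral_eq_zero (hf : Measurable (Function.uncurry f))
    (hf0 : ∀ x y, 0 ≤ f x y)
    (hκ : ∀ x, κ x = ν.withDensity fun y => ENNReal.ofReal (f x y)) :
    ∀ᵐ z ∂μ.prod ν, ∫ x, f x z.2 ∂μ = 0 → f z.1 z.2 = 0 := by
  have hmeas : MeasurableSet {z : α × β | ∫ x, f x z.2 ∂μ = 0 → f z.1 z.2 = 0} :=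
    (measurableSet_eq_fun (hf.stronglyMeasurable.integral_prod_left.measurable.comp measurable_snd)
      measurable_const).imp (measurableSet_eq_fun hf measurable_const)
  rw [Measure.ae_prod_iff_ae_ae hmeas, Measure.ae_ae_comm hmeas]
  filter_upwards [ae_integrable_of_kernel_eq_withDensity (μ := μ) hf hf0 hκ] with y hy
  by_cases h0 : ∫ x, f x y ∂μ = 0
  · filter_upwards [(integral_eq_zero_iff_of_nonneg (hf0 · y) hy).1 h0] with x hx _ using hx
  · exact ae_of_all _ fun x h => absurd h h0

end RealDensity

lemma klDiv_compProd_prod_comp [IsProbabilityMeasure μ] [IsMarkovKernel κ] [SFinite ν]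
    {f : α → β → ℝ} (hf : Measurable (Function.uncurry f)) (hf0 : ∀ x y, 0 ≤ f x y)
    (hκ : ∀ x, κ x = ν.withDensity fun y => ENNReal.ofReal (f x y)) :
    klDiv (μ ⊗ₘ κ) (μ.prod (κ ∘ₘ μ))
      = ∫⁻ y, ∫⁻ x, ENNReal.ofReal ((∫ x', f x' y ∂μ) * klFun (f x y / ∫ x', f x' y ∂μ)) ∂μ ∂ν := by
  have hfY : Measurable fun y => ∫ x, f x y ∂μ :=
    hf.stronglyMeasurable.integral_prod_left.measurable
  have hcompProd := compProd_eq_withDensity (μ := μ) (g := fun x y => ENNReal.ofReal (f x y))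
    hf.ennreal_ofReal hκ
  have hprod : μ.prod (κ ∘ₘ μ)
      = (μ.prod ν).withDensity fun z => ENNReal.ofReal (∫ x, f x z.2 ∂μ) := by
    rw [comp_eq_withDensity_integral hf hf0 hκ,
      prod_withDensity_right (g := fun y => ENNReal.ofReal (∫ x, f x y ∂μ)) hfY.ennreal_ofReal]
  have : IsProbabilityMeasure ((μ.prod ν).withDensity fun z => ENNReal.ofReal (f z.1 z.2)) :=
    hcompProd ▸ inferInstance
  have : IsProbabilityMeasure
      ((μ.prod ν).withDensity fun z => ENNReal.ofReal (∫ x, f x z.2 ∂μ)) :=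
    hprod ▸ inferInstance
  rw [hcompProd, hprod, klDiv_withDensity_ofReal (p := fun z : α × β => f z.1 z.2)
    (q := fun z : α × β => ∫ x, f x z.2 ∂μ) hf (hfY.comp measurable_snd) (fun z => hf0 z.1 z.2)
    (fun z => integral_nonneg (hf0 · z.2))
    (ae_density_eq_zero_of_integral_eq_zero (μ := μ) hf hf0 hκ)]
  exact lintegral_prod_symm _ ((hfY.comp measurable_snd).mul (measurable_klFun.comp
    (hf.div (hfY.comp measurable_snd)))).ennreal_ofReal.aemeasurable

end Channel

theorem mutual_information_renyi_entropy_bound_general {n : ℕ}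
    {Ω : Type*} [MeasureSpace Ω] [IsProbabilityMeasure (ℙ : Measure Ω)]
    {𝒳 : Type*} [MeasurableSpace 𝒳]
    (X : Ω → 𝒳) (hX : Measurable X)
    (Y : Ω → EuclideanSpace ℝ (Fin n))
    (f : 𝒳 → EuclideanSpace ℝ (Fin n) → ℝ)
    (hf : Measurable (Function.uncurry f)) (hf0 : ∀ x y, 0 ≤ f x y)
    (κ : ProbabilityTheory.Kernel 𝒳 (EuclideanSpace ℝ (Fin n))) [ProbabilityTheory.IsMarkovKernel κ]
    (hκ : ∀ x, κ x = volume.withDensity (fun y => ENNReal.ofReal (f x y)))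
    (hjoint : Measure.map (fun ω => (X ω, Y ω)) ℙ = (Measure.map X ℙ) ⊗ₘ κ)
    (r : ℝ) (hr0 : 0 < r) (hr1 : r < 1) :
    klDiv (Measure.map (fun ω => (X ω, Y ω)) ℙ) ((Measure.map X ℙ).prod (Measure.map Y ℙ))
      ≤ ENNReal.ofReal (kappaSup ((1 - r) / (2 - r)))
        * ((∫⁻ y, ENNReal.ofReal (∫ ω, f (X ω) y ∂ℙ) ^ r) ^ (1 / (1 - r))
            * ∫⁻ y in {y | 0 < ∫ ω, f (X ω) y ∂ℙ},
                ∫⁻ ω, ENNReal.ofReal ((f (X ω) y - ∫ ω', f (X ω') y ∂ℙ) ^ 2) ∂ℙ)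
          ^ ((1 - r) / (2 - r)) := by
  set μ := Measure.map X ℙ
  have : IsProbabilityMeasure μ := Measure.isProbabilityMeasure_map hX.aemeasurable
  set t := (1 - r) / (2 - r)
  have ht0 : 0 < t := div_pos (by linarith) (by linarith)
  have ht1 : t ≤ 1 := (div_le_one (by linarith)).2 (by linarith)
  have hfx : ∀ y, Measurable fun x => f x y := fun y => hf.comp measurable_prodMk_right
  have hmean : ∀ y, ∫ ω, f (X ω) y ∂ℙ = ∫ x, f x y ∂μ := fun y =>
    (integral_map hX.aemeasurable (hfx y).aestronglyMeasurable).symm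
  have hvar : ∀ y, ∫⁻ ω, ENNReal.ofReal ((f (X ω) y - ∫ x, f x y ∂μ) ^ 2) ∂ℙ
      = eVar[fun x => f x y; μ] := fun y => by
    rw [evariance_eq_lintegral_ofReal, lintegral_map (by fun_prop) hX]
  have hfY : Measurable fun y => ∫ x, f x y ∂μ :=
    hf.stronglyMeasurable.integral_prod_left.measurable
  have hVm : Measurable fun y => eVar[fun x => f x y; μ] := by
    simp only [evariance_eq_lintegral_ofReal]
    exact ((hf.sub (hfY.comp measurable_snd)).pow_const 2).ennreal_ofReal.lintegral_prod_left'
  have hYlaw : Measure.map Y ℙ = κ ∘ₘ μ := by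
    rw [← Measure.snd_map_prodMk hX, hjoint, Measure.snd_compProd]
  simp only [hmean, hvar]
  rw [hYlaw, hjoint, klDiv_compProd_prod_comp hf hf0 hκ]
  calc _ ≤ ∫⁻ y, ENNReal.ofReal (kappaSup t)
        * (eVar[fun x => f x y; μ] ^ t * ENNReal.ofReal μ[fun x => f x y] ^ (1 - 2 * t)) :=
        lintegral_mono fun y => (lintegral_mul_klFun_div_le_evariance
          (hfx y).aestronglyMeasurable (ae_of_all _ (hf0 · y)) ht0 ht1).trans_eq (mul_assoc _ _ _)
    _ = ENNReal.ofReal (kappaSup t)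
        * ∫⁻ y, eVar[fun x => f x y; μ] ^ t * ENNReal.ofReal μ[fun x => f x y] ^ (1 - 2 * t) :=
        lintegral_const_mul' _ _ ENNReal.ofReal_ne_top
    _ ≤ _ := mul_le_mul_right (lintegral_rpow_mul_ofReal_rpow_le hVm.aemeasurable hfY hr0 hr1) _

/-- **Proposition 8.** Let `(X,Y)` be a random pair where the conditional distribution of `Y`
given `X` has density `f(·|x)` on `ℝⁿ`, with marginal density `f_Y(y) = E[f(y|X)]` and
support `S_Y`. Then for every `0 < r < 1`, with `t = (1−r)/(2−r)`, the mutual information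
`I(X;Y) = D_KL(P_{XY} ‖ P_X × P_Y)` satisfies
`I(X;Y) ≤ κ(t) (e^{h_r(Y)} V_0(Y|X))^t`,
where `e^{h_r(Y)} = (∫ f_Y^r)^{1/(1−r)}` and
`V_0(Y|X) = ∫_{S_Y} Var(f(y|X)) dy`, `Var(f(y|X)) = E[(f(y|X) − f_Y(y))²]` (the right-hand
side being interpreted in `[0,∞]`). -/
theorem mutual_information_renyi_entropy_bound {n : ℕ}
    {Ω : Type*} [MeasureSpace Ω] [IsProbabilityMeasure (ℙ : Measure Ω)]
    {𝒳 : Type*} [MeasurableSpace 𝒳]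
    (X : Ω → 𝒳) (hX : Measurable X)
    (Y : Ω → EuclideanSpace ℝ (Fin n)) (hY : Measurable Y)
    (f : 𝒳 → EuclideanSpace ℝ (Fin n) → ℝ)
    (hf : Measurable (Function.uncurry f)) (hf0 : ∀ x y, 0 ≤ f x y)
    (κ : ProbabilityTheory.Kernel 𝒳 (EuclideanSpace ℝ (Fin n))) [ProbabilityTheory.IsMarkovKernel κ]
    (hκ : ∀ x, κ x = volume.withDensity (fun y => ENNReal.ofReal (f x y)))
    (hjoint : Measure.map (fun ω => (X ω, Y ω)) ℙ = (Measure.map X ℙ) ⊗ₘ κ)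
    (r : ℝ) (hr0 : 0 < r) (hr1 : r < 1) :
    klDiv (Measure.map (fun ω => (X ω, Y ω)) ℙ) ((Measure.map X ℙ).prod (Measure.map Y ℙ))
      ≤ ENNReal.ofReal (kappaSup ((1 - r) / (2 - r)))
        * ((∫⁻ y, ENNReal.ofReal (∫ ω, f (X ω) y ∂ℙ) ^ r) ^ (1 / (1 - r))
            * ∫⁻ y in {y | 0 < ∫ ω, f (X ω) y ∂ℙ},
                ∫⁻ ω, ENNReal.ofReal ((f (X ω) y - ∫ ω', f (X ω') y ∂ℙ) ^ 2) ∂ℙ)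
          ^ ((1 - r) / (2 - r)) :=
  mutual_information_renyi_entropy_bound_general X hX Y f hf hf0 κ hκ hjoint r hr0 hr1
end

section
/- Let (X,Y) be a random pair such that the conditional distribution of Y given X has a density f(y|x) with respect to Lebesgue measure on ℝⁿ, and let X₁, X₂ be independent random variables each distributed as X. Then for any s ∈ ℝ, V_s(Y|X) = E[ K_s(X, X) ] − E[ K_s(X₁, X₂) ], where K_s(x₁, x₂) = ∫ ‖y‖^s f(y|x₁) f(y|x₂) dy (assuming these expectations are finite). -/
/-!
For every `y`, the variance of `f(y|X)` is `E[f(y|X)²] - f(y)²`, and by independence and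
identical distribution `E[f(y|X₁) f(y|X₂)] = f(y)²`. Weighting by `‖y‖^s`, integrating over `y`
and exchanging the order of integration (Fubini, licensed by the finiteness of the two kernel
expectations) turns the two terms into `E[K_s(X,X)]` and `E[K_s(X₁,X₂)]`. Off `S_Y` the
nonnegative `f(y|X)` has mean zero, hence vanishes a.s., so restricting to `S_Y` loses nothing.
-/

open MeasureTheory ProbabilityTheory

section Fubini

variable {α β : Type*} [MeasurableSpace α] [MeasurableSpace β] {μ : Measure α} {ν : Measure β}
  [SFinite ν]

theorem integrable_uncurry_of_lintegral_ofReal_ne_top {F : α → β → ℝ}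
    (hF : AEStronglyMeasurable (Function.uncurry F) (μ.prod ν)) (hF0 : ∀ a b, 0 ≤ F a b)
    (h : ∫⁻ a, ∫⁻ b, ENNReal.ofReal (F a b) ∂ν ∂μ ≠ ⊤) :
    Integrable (Function.uncurry F) (μ.prod ν) := by
  refine ⟨hF, ?_⟩
  rw [hasFiniteIntegral_iff_ofReal (f := Function.uncurry F) (.of_forall fun p => hF0 p.1 p.2),
    lintegral_prod _ hF.aemeasurable.ennreal_ofReal]
  exact h.lt_top

theorem integrable_uncurry_mul_comp_mul_comp {Ω 𝒳 : Type*} [MeasurableSpace Ω]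
    [MeasurableSpace 𝒳] {P : Measure Ω} {f : 𝒳 → β → ℝ} (hf : Measurable (Function.uncurry f))
    (hf0 : ∀ x y, 0 ≤ f x y) {w : β → ℝ} (hw : Measurable w) (hw0 : ∀ y, 0 ≤ w y)
    {Z₁ Z₂ : Ω → 𝒳} (hZ₁ : Measurable Z₁) (hZ₂ : Measurable Z₂)
    (h : ∫⁻ ω, ∫⁻ y, ENNReal.ofReal (w y) * ENNReal.ofReal (f (Z₁ ω) y)
      * ENNReal.ofReal (f (Z₂ ω) y) ∂ν ∂P ≠ ⊤) :
    Integrable (Function.uncurry fun ω y => w y * (f (Z₁ ω) y * f (Z₂ ω) y)) (P.prod ν) := by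
  have hfZ : ∀ {Z : Ω → 𝒳}, Measurable Z → Measurable fun p : Ω × β => f (Z p.1) p.2 :=
    fun hZ => hf.comp ((hZ.comp measurable_fst).prodMk measurable_snd)
  refine integrable_uncurry_of_lintegral_ofReal_ne_top
    ((hw.comp measurable_snd).mul ((hfZ hZ₁).mul (hfZ hZ₂))).aestronglyMeasurable
    (fun _ y => mul_nonneg (hw0 y) (mul_nonneg (hf0 _ _) (hf0 _ _))) ?_
  simpa only [ENNReal.ofReal_mul (hw0 _), ENNReal.ofReal_mul (hf0 _ _), mul_assoc] using h

end Fubini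

section Variance

variable {Ω : Type*} [MeasurableSpace Ω] {P : Measure Ω} {Z : Ω → ℝ} {c : ℝ}

theorem memLp_two_of_integrable_const_mul_sq (hZ : AEStronglyMeasurable Z P) (hc : c ≠ 0)
    (h : Integrable (fun ω => c * Z ω ^ 2) P) : MemLp Z 2 P :=
  (memLp_two_iff_integrable_sq hZ).2 ((integrable_const_mul_iff (IsUnit.mk0 c hc) _).1 h)

theorem const_mul_integral_sub_integral_sq_eq [IsProbabilityMeasure P]
    (hZ : AEStronglyMeasurable Z P)
    (h : Integrable (fun ω => c * Z ω ^ 2) P) :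
    c * ∫ ω, (Z ω - ∫ ω', Z ω' ∂P) ^ 2 ∂P = c * (∫ ω, Z ω ^ 2 ∂P - (∫ ω, Z ω ∂P) ^ 2) := by
  rcases eq_or_ne c 0 with rfl | hc
  · simp
  have hZ2 := memLp_two_of_integrable_const_mul_sq hZ hc h
  rw [← variance_eq_integral hZ.aemeasurable, variance_eq_sub hZ2]
  simp

theorem const_mul_integral_sub_integral_sq_eq_zero [IsProbabilityMeasure P]
    (hZ : AEStronglyMeasurable Z P) (hZ0 : ∀ ω, 0 ≤ Z ω)
    (h : Integrable (fun ω => c * Z ω ^ 2) P) (hpos : ¬ 0 < ∫ ω, Z ω ∂P) :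
    c * ∫ ω, (Z ω - ∫ ω', Z ω' ∂P) ^ 2 ∂P = 0 := by
  rcases eq_or_ne c 0 with rfl | hc
  · simp
  have hZi : Integrable Z P := (memLp_two_of_integrable_const_mul_sq hZ hc h).integrable one_le_two
  have hmean : ∫ ω, Z ω ∂P = 0 := le_antisymm (not_lt.1 hpos) (integral_nonneg hZ0)
  have hZae : Z =ᵐ[P] 0 := (integral_eq_zero_iff_of_nonneg hZ0 hZi).1 hmean
  rw [hmean, integral_eq_zero_of_ae (hZae.mono fun ω hω => by simp [hω]), mul_zero]

theorem setIntegral_mean_pos_mul_integral_sub_integral_sq_eq [IsProbabilityMeasure P]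
    {E : Type*} [MeasurableSpace E] {ν : Measure E} {g : Ω → E → ℝ} {w : E → ℝ}
    (hg : ∀ y, AEStronglyMeasurable (g · y) P) (hg0 : ∀ ω y, 0 ≤ g ω y)
    (h : ∀ᵐ y ∂ν, Integrable (fun ω => w y * g ω y ^ 2) P) :
    ∫ y in {y | 0 < ∫ ω, g ω y ∂P}, w y * ∫ ω, (g ω y - ∫ ω', g ω' y ∂P) ^ 2 ∂P ∂ν
      = ∫ y, w y * (∫ ω, g ω y ^ 2 ∂P - (∫ ω, g ω y ∂P) ^ 2) ∂ν := by
  rw [setIntegral_eq_integral_of_ae_compl_eq_zero (s := {y | 0 < ∫ ω, g ω y ∂P})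
    (h.mono fun y hy hpos => const_mul_integral_sub_integral_sq_eq_zero (hg y) (hg0 · y) hy hpos)]
  exact integral_congr_ae (h.mono fun y hy => const_mul_integral_sub_integral_sq_eq (hg y) hy)

theorem ProbabilityTheory.IndepFun.integral_comp_mul_comp_eq_sq {𝒳 : Type*} [MeasurableSpace 𝒳]
    {X X₁ X₂ : Ω → 𝒳} (hindep : IndepFun X₁ X₂ P) (hid₁ : IdentDistrib X₁ X P P)
    (hid₂ : IdentDistrib X₂ X P P) {h : 𝒳 → ℝ} (hh : Measurable h) :
    ∫ ω, h (X₁ ω) * h (X₂ ω) ∂P = (∫ ω, h (X ω) ∂P) ^ 2 := by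
  calc ∫ ω, h (X₁ ω) * h (X₂ ω) ∂P = (∫ ω, h (X₁ ω) ∂P) * ∫ ω, h (X₂ ω) ∂P :=
        (hindep.comp hh hh).integral_fun_mul_eq_mul_integral
          (hh.comp_aemeasurable hid₁.aemeasurable_fst).aestronglyMeasurable
          (hh.comp_aemeasurable hid₂.aemeasurable_fst).aestronglyMeasurable
    _ = (∫ ω, h (X ω) ∂P) ^ 2 := by
        have h₁ : ∫ ω, h (X₁ ω) ∂P = ∫ ω, h (X ω) ∂P := (hid₁.comp hh).integral_eq
        have h₂ : ∫ ω, h (X₂ ω) ∂P = ∫ ω, h (X ω) ∂P := (hid₂.comp hh).integral_eq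
        rw [sq, h₁, h₂]

end Variance

theorem var_conditional_density_kernel_decomposition_general {n : ℕ}
    {Ω : Type*} [MeasureSpace Ω] [IsProbabilityMeasure (ℙ : Measure Ω)]
    {𝒳 : Type*} [MeasurableSpace 𝒳]
    (X : Ω → 𝒳) (hX : Measurable X)
    (f : 𝒳 → EuclideanSpace ℝ (Fin n) → ℝ)
    (hf : Measurable (Function.uncurry f)) (hf0 : ∀ x y, 0 ≤ f x y)
    (X₁ X₂ : Ω → 𝒳) (hX₁ : Measurable X₁) (hX₂ : Measurable X₂)
    (hindep : ProbabilityTheory.IndepFun X₁ X₂ ℙ)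
    (hid₁ : Measure.map X₁ ℙ = Measure.map X ℙ) (hid₂ : Measure.map X₂ ℙ = Measure.map X ℙ)
    (s : ℝ)
    (hKdiag : ∫⁻ ω, ∫⁻ y, ENNReal.ofReal (‖y‖ ^ s)
        * ENNReal.ofReal (f (X ω) y) * ENNReal.ofReal (f (X ω) y) ∂(volume) ∂ℙ ≠ ⊤)
    (hKoff : ∫⁻ ω, ∫⁻ y, ENNReal.ofReal (‖y‖ ^ s)
        * ENNReal.ofReal (f (X₁ ω) y) * ENNReal.ofReal (f (X₂ ω) y) ∂(volume) ∂ℙ ≠ ⊤) :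
    ∫ y in {y | 0 < ∫ ω, f (X ω) y ∂ℙ},
        ‖y‖ ^ s * ∫ ω, (f (X ω) y - ∫ ω', f (X ω') y ∂ℙ) ^ 2 ∂ℙ
      = (∫ ω, ∫ y, ‖y‖ ^ s * (f (X ω) y * f (X ω) y) ∂(volume) ∂ℙ)
        - ∫ ω, ∫ y, ‖y‖ ^ s * (f (X₁ ω) y * f (X₂ ω) y) ∂(volume) ∂ℙ := by
  have hw : Measurable fun y : EuclideanSpace ℝ (Fin n) => ‖y‖ ^ s := by fun_prop
  have hdiag := integrable_uncurry_mul_comp_mul_comp hf hf0 hw (fun _ => by positivity) hX hX hKdiag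
  have hoff := integrable_uncurry_mul_comp_mul_comp hf hf0 hw (fun _ => by positivity) hX₁ hX₂ hKoff
  have hsq : ∀ y, ∫ ω, f (X₁ ω) y * f (X₂ ω) y ∂ℙ = (∫ ω, f (X ω) y ∂ℙ) ^ 2 := fun y =>
    hindep.integral_comp_mul_comp_eq_sq ⟨hX₁.aemeasurable, hX.aemeasurable, hid₁⟩
      ⟨hX₂.aemeasurable, hX.aemeasurable, hid₂⟩ hf.of_uncurry_right
  calc _ = ∫ y, ‖y‖ ^ s * (∫ ω, f (X ω) y ^ 2 ∂ℙ - (∫ ω, f (X ω) y ∂ℙ) ^ 2) :=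
        setIntegral_mean_pos_mul_integral_sub_integral_sq_eq
          (fun _ => (hf.of_uncurry_right.comp hX).aestronglyMeasurable) (fun _ _ => hf0 _ _)
          (hdiag.prod_left_ae.mono fun _ hy => by
            simpa only [Function.uncurry_apply_pair, sq] using hy)
    _ = (∫ y, ∫ ω, ‖y‖ ^ s * (f (X ω) y * f (X ω) y) ∂ℙ)
          - ∫ y, ∫ ω, ‖y‖ ^ s * (f (X₁ ω) y * f (X₂ ω) y) ∂ℙ := by
        rw [← integral_sub (by exact hdiag.integral_prod_right)
          (by exact hoff.integral_prod_right)]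
        refine integral_congr_ae (.of_forall fun y => ?_)
        simp only [integral_const_mul, hsq, sq, mul_sub]
    _ = _ := by rw [integral_integral_swap hdiag, integral_integral_swap hoff]

/-- **Variance decomposition of `V_s` via the expected likelihood kernel.** Let `(X,Y)` be a
random pair where the conditional distribution of `Y` given `X` has density `f(·|x)` on
`ℝⁿ`, with marginal density `f_Y(y) = E[f(y|X)]` and support `S_Y`, and let `X₁, X₂` be
independent random variables each distributed as `X`. Then for any `s ∈ ℝ`,
`V_s(Y|X) = E[K_s(X,X)] − E[K_s(X₁,X₂)]`, where
`V_s(Y|X) = ∫_{S_Y} ‖y‖^s E[(f(y|X) − f_Y(y))²] dy` and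
`K_s(x₁,x₂) = ∫ ‖y‖^s f(y|x₁) f(y|x₂) dy` (assuming these expectations are finite). -/
theorem var_conditional_density_kernel_decomposition {n : ℕ}
    {Ω : Type*} [MeasureSpace Ω] [IsProbabilityMeasure (ℙ : Measure Ω)]
    {𝒳 : Type*} [MeasurableSpace 𝒳]
    (X : Ω → 𝒳) (hX : Measurable X)
    (Y : Ω → EuclideanSpace ℝ (Fin n)) (hY : Measurable Y)
    (f : 𝒳 → EuclideanSpace ℝ (Fin n) → ℝ)
    (hf : Measurable (Function.uncurry f)) (hf0 : ∀ x y, 0 ≤ f x y)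
    (κ : ProbabilityTheory.Kernel 𝒳 (EuclideanSpace ℝ (Fin n))) [ProbabilityTheory.IsMarkovKernel κ]
    (hκ : ∀ x, κ x = volume.withDensity (fun y => ENNReal.ofReal (f x y)))
    (hjoint : Measure.map (fun ω => (X ω, Y ω)) ℙ = (Measure.map X ℙ) ⊗ₘ κ)
    (X₁ X₂ : Ω → 𝒳) (hX₁ : Measurable X₁) (hX₂ : Measurable X₂)
    (hindep : ProbabilityTheory.IndepFun X₁ X₂ ℙ)
    (hid₁ : Measure.map X₁ ℙ = Measure.map X ℙ) (hid₂ : Measure.map X₂ ℙ = Measure.map X ℙ)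
    (s : ℝ)
    (hKdiag : ∫⁻ ω, ∫⁻ y, ENNReal.ofReal (‖y‖ ^ s)
        * ENNReal.ofReal (f (X ω) y) * ENNReal.ofReal (f (X ω) y) ∂(volume) ∂ℙ ≠ ⊤)
    (hKoff : ∫⁻ ω, ∫⁻ y, ENNReal.ofReal (‖y‖ ^ s)
        * ENNReal.ofReal (f (X₁ ω) y) * ENNReal.ofReal (f (X₂ ω) y) ∂(volume) ∂ℙ ≠ ⊤) :
    ∫ y in {y | 0 < ∫ ω, f (X ω) y ∂ℙ},
        ‖y‖ ^ s * ∫ ω, (f (X ω) y - ∫ ω', f (X ω') y ∂ℙ) ^ 2 ∂ℙ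
      = (∫ ω, ∫ y, ‖y‖ ^ s * (f (X ω) y * f (X ω) y) ∂(volume) ∂ℙ)
        - ∫ ω, ∫ y, ‖y‖ ^ s * (f (X₁ ω) y * f (X₂ ω) y) ∂(volume) ∂ℙ :=
  var_conditional_density_kernel_decomposition_general X hX f hf hf0 X₁ X₂ hX₁ hX₂ hindep hid₁ hid₂
    s hKdiag hKoff
end

section
/- Suppose U → X → Y forms a Markov chain, where the conditional distribution of Y given X has a density f(y|x) with respect to Lebesgue measure on ℝⁿ. Let (U, X₁′, X₂′) be distributed so that, given U, the variables X₁′ and X₂′ are conditionally independent with the conditional distribution of X given U, and let X₁, X₂ be independent copies of X. Then for any s ∈ ℝ, V_s(Y|U) = E[ K_s(X₁′, X₂′) ] − E[ K_s(X₁, X₂) ], where K_s(x₁, x₂) = ∫ ‖y‖^s f(y|x₁) f(y|x₂) dy (assuming these expectations are finite). -/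
open MeasureTheory Set
open scoped ENNReal NNReal Real ProbabilityTheory

open scoped ENNReal in
private lemma aux_le_sq_add_one (a : ℝ≥0∞) : a ≤ a ^ 2 + 1 := by
  rcases le_total a 1 with h | h
  · exact h.trans le_add_self
  · calc a = a * 1 := (mul_one a).symm
      _ ≤ a * a := mul_le_mul_right h a
      _ = a ^ 2 := (sq a).symm
      _ ≤ a ^ 2 + 1 := le_self_add

open scoped ENNReal in
private lemma aux_fubini_swap {n : ℕ} {𝒳 : Type*} [MeasurableSpace 𝒳]
    (f : 𝒳 → EuclideanSpace ℝ (Fin n) → ℝ) (hf : Measurable (Function.uncurry f))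
    (w : EuclideanSpace ℝ (Fin n) → ℝ≥0∞) (hwm : Measurable w)
    (ν₁ ν₂ : Measure 𝒳) [SFinite ν₁] [SFinite ν₂] :
    ∫⁻ x1, ∫⁻ x2, (∫⁻ y, w y * ENNReal.ofReal (f x1 y) * ENNReal.ofReal (f x2 y)) ∂ν₂ ∂ν₁
      = ∫⁻ y, w y * (∫⁻ x, ENNReal.ofReal (f x y) ∂ν₁) * (∫⁻ x, ENNReal.ofReal (f x y) ∂ν₂) := by
  have hfy : ∀ y : EuclideanSpace ℝ (Fin n), Measurable fun x => ENNReal.ofReal (f x y) :=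
    fun y => ENNReal.measurable_ofReal.comp (hf.comp (measurable_id.prodMk measurable_const))
  have hfx : ∀ x : 𝒳, Measurable fun y => ENNReal.ofReal (f x y) :=
    fun x => ENNReal.measurable_ofReal.comp (hf.comp (measurable_const.prodMk measurable_id))
  have h1 : ∀ x1 : 𝒳, ∫⁻ x2, (∫⁻ y, w y * ENNReal.ofReal (f x1 y) * ENNReal.ofReal (f x2 y)) ∂ν₂
      = ∫⁻ y, w y * ENNReal.ofReal (f x1 y) * (∫⁻ x, ENNReal.ofReal (f x y) ∂ν₂) := by
    intro x1
    rw [lintegral_lintegral_swap]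
    · refine lintegral_congr fun y => ?_
      rw [lintegral_const_mul _ (hfy y)]
    · apply Measurable.aemeasurable
      apply Measurable.mul
      · apply Measurable.mul
        · exact hwm.comp measurable_snd
        · exact (hfx x1).comp measurable_snd
      · exact ENNReal.measurable_ofReal.comp (hf.comp (measurable_fst.prodMk measurable_snd))
  simp only [h1]
  rw [lintegral_lintegral_swap]
  · refine lintegral_congr fun y => ?_
    have : (fun x1 => w y * ENNReal.ofReal (f x1 y) * (∫⁻ x, ENNReal.ofReal (f x y) ∂ν₂))
        = fun x1 => (w y * (∫⁻ x, ENNReal.ofReal (f x y) ∂ν₂)) * ENNReal.ofReal (f x1 y) := by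
      funext x1; ring
    rw [this, lintegral_const_mul _ (hfy y)]
    ring
  · apply Measurable.aemeasurable
    apply Measurable.mul
    · apply Measurable.mul
      · exact hwm.comp measurable_snd
      · exact ENNReal.measurable_ofReal.comp (hf.comp (measurable_fst.prodMk measurable_snd))
    · exact (Measurable.lintegral_prod_right (f := fun y x => ENNReal.ofReal (f x y))
        (ENNReal.measurable_ofReal.comp
          (hf.comp (measurable_snd.prodMk measurable_fst)))).comp measurable_snd

/-- **Data-processing identity for `V_s` (equation (18)).** Suppose `U → X → Y` is a Markov
chain, where the conditional distribution of `Y` given `X` has density `f(·|x)` on `ℝⁿ`, so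
that the conditional density of `Y` given `U = u` is `g(y|u) = E[f(y|X) | U = u]`. Let
`(U, X₁′, X₂′)` be such that, given `U`, the variables `X₁′, X₂′` are conditionally
independent with the conditional distribution of `X` given `U`, and let `X₁, X₂` be
independent copies of `X`. Then for any `s ∈ ℝ`,
`V_s(Y|U) = E[K_s(X₁′,X₂′)] − E[K_s(X₁,X₂)]`, where
`V_s(Y|U) = ∫_{S_Y} ‖y‖^s E[(g(y|U) − f_Y(y))²] dy` and
`K_s(x₁,x₂) = ∫ ‖y‖^s f(y|x₁) f(y|x₂) dy` (assuming these expectations are finite). -/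
theorem var_conditional_density_markov_decomposition {n : ℕ}
    {Ω : Type*} [MeasureSpace Ω] [IsProbabilityMeasure (ℙ : Measure Ω)]
    {𝒰 : Type*} [MeasurableSpace 𝒰] {𝒳 : Type*} [MeasurableSpace 𝒳]
    (U : Ω → 𝒰) (hU : Measurable U)
    (X : Ω → 𝒳) (hX : Measurable X)
    (Y : Ω → EuclideanSpace ℝ (Fin n)) (hY : Measurable Y)
    (f : 𝒳 → EuclideanSpace ℝ (Fin n) → ℝ)
    (hf : Measurable (Function.uncurry f)) (hf0 : ∀ x y, 0 ≤ f x y)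
    -- the conditional distribution of `Y` given `(U, X)` has density `f(·|x)` depending
    -- only on `x`; this encodes both the Markov property `U → X → Y` and the fact that the
    -- conditional distribution of `Y` given `X` has density `f`
    (κY : ProbabilityTheory.Kernel (𝒰 × 𝒳) (EuclideanSpace ℝ (Fin n)))
    [ProbabilityTheory.IsMarkovKernel κY]
    (hκY : ∀ p : 𝒰 × 𝒳, κY p = volume.withDensity (fun y => ENNReal.ofReal (f p.2 y)))
    (hjointY : Measure.map (fun ω => ((U ω, X ω), Y ω)) ℙ
      = (Measure.map (fun ω => (U ω, X ω)) ℙ) ⊗ₘ κY)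
    -- `κUX` is the conditional distribution of `X` given `U`
    (κUX : ProbabilityTheory.Kernel 𝒰 𝒳) [ProbabilityTheory.IsMarkovKernel κUX]
    (hjointX : Measure.map (fun ω => (U ω, X ω)) ℙ = (Measure.map U ℙ) ⊗ₘ κUX)
    -- given `U`, the variables `X₁′, X₂′` are conditionally i.i.d. with the conditional
    -- distribution of `X` given `U`
    (X₁' X₂' : Ω → 𝒳) (hX₁' : Measurable X₁') (hX₂' : Measurable X₂')
    (hcondiid : Measure.map (fun ω => (U ω, (X₁' ω, X₂' ω))) ℙ
      = (Measure.map U ℙ) ⊗ₘ (κUX ×ₖ κUX))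
    -- `X₁, X₂` are independent copies of `X`
    (X₁ X₂ : Ω → 𝒳) (hX₁ : Measurable X₁) (hX₂ : Measurable X₂)
    (hindep : ProbabilityTheory.IndepFun X₁ X₂ ℙ)
    (hid₁ : Measure.map X₁ ℙ = Measure.map X ℙ) (hid₂ : Measure.map X₂ ℙ = Measure.map X ℙ)
    (s : ℝ)
    (hKprime : ∫⁻ ω, ∫⁻ y, ENNReal.ofReal (‖y‖ ^ s)
        * ENNReal.ofReal (f (X₁' ω) y) * ENNReal.ofReal (f (X₂' ω) y) ∂(volume) ∂ℙ ≠ ⊤)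
    (hKoff : ∫⁻ ω, ∫⁻ y, ENNReal.ofReal (‖y‖ ^ s)
        * ENNReal.ofReal (f (X₁ ω) y) * ENNReal.ofReal (f (X₂ ω) y) ∂(volume) ∂ℙ ≠ ⊤) :
    ∫ y in {y | 0 < ∫ ω, (∫ x, f x y ∂(κUX (U ω))) ∂ℙ},
        ‖y‖ ^ s * ∫ ω, ((∫ x, f x y ∂(κUX (U ω)))
            - ∫ ω', (∫ x, f x y ∂(κUX (U ω'))) ∂ℙ) ^ 2 ∂ℙ
      = (∫ ω, ∫ y, ‖y‖ ^ s * (f (X₁' ω) y * f (X₂' ω) y) ∂(volume) ∂ℙ)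
        - ∫ ω, ∫ y, ‖y‖ ^ s * (f (X₁ ω) y * f (X₂ ω) y) ∂(volume) ∂ℙ := by
  classical
  set μU : Measure 𝒰 := Measure.map U ℙ with hμU
  haveI : IsProbabilityMeasure μU := Measure.isProbabilityMeasure_map hU.aemeasurable
  set L : EuclideanSpace ℝ (Fin n) → 𝒰 → ℝ≥0∞ :=
    fun y u => ∫⁻ x, ENNReal.ofReal (f x y) ∂(κUX u) with hL
  set w : EuclideanSpace ℝ (Fin n) → ℝ≥0∞ := fun y => ENNReal.ofReal (‖y‖ ^ s) with hw
  -- measurability of L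
  have hLm : Measurable (fun p : EuclideanSpace ℝ (Fin n) × 𝒰 => L p.1 p.2) := by
    have : Measurable (fun p : (EuclideanSpace ℝ (Fin n) × 𝒰) × 𝒳 =>
        ENNReal.ofReal (f p.2 p.1.1)) :=
      ENNReal.measurable_ofReal.comp (hf.comp (measurable_snd.prodMk measurable_fst.fst))
    exact Measurable.lintegral_kernel_prod_right
      (κ := κUX.comap Prod.snd measurable_snd) this
  have hwm : Measurable w := by
    exact ENNReal.measurable_ofReal.comp (measurable_norm.pow_const s)
  have key1 : ∀ (y : EuclideanSpace ℝ (Fin n)) (u : 𝒰),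
      (∫ x, f x y ∂(κUX u)) = (L y u).toReal := by
    intro y u
    rw [integral_eq_lintegral_of_nonneg_ae (ae_of_all _ fun x => hf0 x y)
      ((hf.comp (measurable_id.prodMk measurable_const)).aestronglyMeasurable)]
  simp only [key1]
  set I : EuclideanSpace ℝ (Fin n) → ℝ≥0∞ := fun y => ∫⁻ u, (L y u) ^ 2 ∂μU with hI
  set J : EuclideanSpace ℝ (Fin n) → ℝ≥0∞ := fun y => ∫⁻ u, L y u ∂μU with hJ
  have hIm : Measurable I := by
    apply Measurable.lintegral_prod_right (f := fun y u => (L y u) ^ 2)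
    exact hLm.pow_const 2
  have hJm : Measurable J := Measurable.lintegral_prod_right (f := L) hLm
  haveI : IsProbabilityMeasure (Measure.map X ℙ) := Measure.isProbabilityMeasure_map hX.aemeasurable
  have hfy : ∀ y : EuclideanSpace ℝ (Fin n), Measurable fun x => ENNReal.ofReal (f x y) :=
    fun y => ENNReal.measurable_ofReal.comp (hf.comp (measurable_id.prodMk measurable_const))
  have hLym : ∀ y, Measurable (L y) := fun y => hLm.comp measurable_prodMk_left
  -- M = J
  have hMJ : ∀ y, (∫⁻ x, ENNReal.ofReal (f x y) ∂(Measure.map X ℙ)) = J y := by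
    intro y
    have hXmap : Measure.map X ℙ = Measure.map Prod.snd (μU ⊗ₘ κUX) := by
      rw [← hjointX, Measure.map_map measurable_snd (hU.prodMk hX)]
      rfl
    rw [hXmap, lintegral_map (hfy y) measurable_snd,
      Measure.lintegral_compProd (f := fun p : 𝒰 × 𝒳 => ENNReal.ofReal (f p.2 y))
        ((hfy y).comp measurable_snd)]
  -- measurability of the big kernels
  have hG'm : Measurable (fun p : 𝒰 × (𝒳 × 𝒳) =>
      ∫⁻ y, w y * ENNReal.ofReal (f p.2.1 y) * ENNReal.ofReal (f p.2.2 y)) := by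
    apply Measurable.lintegral_prod_right (f := fun (p : 𝒰 × (𝒳 × 𝒳)) y =>
      w y * ENNReal.ofReal (f p.2.1 y) * ENNReal.ofReal (f p.2.2 y))
    simp only [Function.uncurry_def]
    apply Measurable.mul (f := fun p : (𝒰 × (𝒳 × 𝒳)) × EuclideanSpace ℝ (Fin n) =>
      w p.2 * ENNReal.ofReal (f p.1.2.1 p.2)) (g := fun p => ENNReal.ofReal (f p.1.2.2 p.2))
    · exact (hwm.comp measurable_snd).mul
        (ENNReal.measurable_ofReal.comp
          (hf.comp ((measurable_fst.snd.fst).prodMk measurable_snd)))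
    · exact ENNReal.measurable_ofReal.comp
        (hf.comp ((measurable_fst.snd.snd).prodMk measurable_snd))
  have hG2m : Measurable (fun p : 𝒳 × 𝒳 =>
      ∫⁻ y, w y * ENNReal.ofReal (f p.1 y) * ENNReal.ofReal (f p.2 y)) := by
    apply Measurable.lintegral_prod_right (f := fun (p : 𝒳 × 𝒳) y =>
      w y * ENNReal.ofReal (f p.1 y) * ENNReal.ofReal (f p.2 y))
    simp only [Function.uncurry_def]
    apply Measurable.mul (f := fun p : (𝒳 × 𝒳) × EuclideanSpace ℝ (Fin n) =>
      w p.2 * ENNReal.ofReal (f p.1.1 p.2)) (g := fun p => ENNReal.ofReal (f p.1.2 p.2))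
    · exact (hwm.comp measurable_snd).mul
        (ENNReal.measurable_ofReal.comp
          (hf.comp ((measurable_fst.fst).prodMk measurable_snd)))
    · exact ENNReal.measurable_ofReal.comp
        (hf.comp ((measurable_fst.snd).prodMk measurable_snd))
  -- the two Tonelli chains
  have hA : (∫⁻ ω, ∫⁻ y, w y * ENNReal.ofReal (f (X₁' ω) y)
        * ENNReal.ofReal (f (X₂' ω) y) ∂(volume) ∂ℙ) = ∫⁻ y, w y * I y := by
    calc ∫⁻ ω, ∫⁻ y, w y * ENNReal.ofReal (f (X₁' ω) y)
          * ENNReal.ofReal (f (X₂' ω) y) ∂(volume) ∂ℙ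
        = ∫⁻ p, (∫⁻ y, w y * ENNReal.ofReal (f p.2.1 y) * ENNReal.ofReal (f p.2.2 y))
            ∂(Measure.map (fun ω => (U ω, (X₁' ω, X₂' ω))) ℙ) :=
          (lintegral_map hG'm (hU.prodMk (hX₁'.prodMk hX₂'))).symm
      _ = ∫⁻ u, ∫⁻ q, (∫⁻ y, w y * ENNReal.ofReal (f q.1 y) * ENNReal.ofReal (f q.2 y))
            ∂((κUX ×ₖ κUX) u) ∂μU := by
          rw [hcondiid]; exact Measure.lintegral_compProd hG'm
      _ = ∫⁻ u, ∫⁻ x1, ∫⁻ x2, (∫⁻ y, w y * ENNReal.ofReal (f x1 y)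
            * ENNReal.ofReal (f x2 y)) ∂(κUX u) ∂(κUX u) ∂μU := by
          refine lintegral_congr fun u => ?_
          exact ProbabilityTheory.Kernel.lintegral_prod _ _ _ hG2m
      _ = ∫⁻ u, (∫⁻ y, w y * L y u * L y u) ∂μU := by
          refine lintegral_congr fun u => ?_
          exact aux_fubini_swap f hf w hwm (κUX u) (κUX u)
      _ = ∫⁻ y, ∫⁻ u, w y * L y u * L y u ∂μU := by
          apply lintegral_lintegral_swap
          apply Measurable.aemeasurable
          exact ((hwm.comp measurable_snd).mul
            (hLm.comp measurable_swap)).mul (hLm.comp measurable_swap)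
      _ = ∫⁻ y, w y * I y := by
          refine lintegral_congr fun y => ?_
          have h2 : (fun u => w y * L y u * L y u) = fun u => w y * (L y u) ^ 2 := by
            funext u; ring
          rw [h2]
          exact lintegral_const_mul _ ((hLym y).pow_const 2)
  have hB : (∫⁻ ω, ∫⁻ y, w y * ENNReal.ofReal (f (X₁ ω) y)
        * ENNReal.ofReal (f (X₂ ω) y) ∂(volume) ∂ℙ) = ∫⁻ y, w y * (J y) ^ 2 := by
    have hmap2 : Measure.map (fun ω => (X₁ ω, X₂ ω)) ℙ
        = (Measure.map X ℙ).prod (Measure.map X ℙ) := by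
      exact ((ProbabilityTheory.indepFun_iff_map_prod_eq_prod_map_map
        hX₁.aemeasurable hX₂.aemeasurable).mp hindep).trans (by rw [hid₁, hid₂])
    calc ∫⁻ ω, ∫⁻ y, w y * ENNReal.ofReal (f (X₁ ω) y)
          * ENNReal.ofReal (f (X₂ ω) y) ∂(volume) ∂ℙ
        = ∫⁻ p, (∫⁻ y, w y * ENNReal.ofReal (f p.1 y) * ENNReal.ofReal (f p.2 y))
            ∂(Measure.map (fun ω => (X₁ ω, X₂ ω)) ℙ) :=
          (lintegral_map hG2m (hX₁.prodMk hX₂)).symm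
      _ = ∫⁻ x1, (∫⁻ x2, (∫⁻ y, w y * ENNReal.ofReal (f x1 y) * ENNReal.ofReal (f x2 y))
            ∂(Measure.map X ℙ)) ∂(Measure.map X ℙ) := by
          rw [hmap2]; exact lintegral_prod _ hG2m.aemeasurable
      _ = ∫⁻ y, w y * J y * J y := by
          rw [aux_fubini_swap f hf w hwm (Measure.map X ℙ) (Measure.map X ℙ)]
          simp only [hMJ]
      _ = ∫⁻ y, w y * (J y) ^ 2 := lintegral_congr fun y => by ring
  have hAne : (∫⁻ y, w y * I y) ≠ ⊤ := by rw [← hA]; exact hKprime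
  have hBne : (∫⁻ y, w y * (J y) ^ 2) ≠ ⊤ := by rw [← hB]; exact hKoff
  have hinner : ∀ x1 x2 : 𝒳, (∫ y, ‖y‖ ^ s * (f x1 y * f x2 y))
      = (∫⁻ y, w y * ENNReal.ofReal (f x1 y) * ENNReal.ofReal (f x2 y)).toReal := by
    intro x1 x2
    have hm : AEStronglyMeasurable (fun y : EuclideanSpace ℝ (Fin n) =>
        ‖y‖ ^ s * (f x1 y * f x2 y)) volume := by
      refine Measurable.aestronglyMeasurable ?_
      exact (measurable_norm.pow_const s).mul
        ((hf.comp (measurable_const.prodMk measurable_id)).mul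
          (hf.comp (measurable_const.prodMk measurable_id)))
    rw [integral_eq_lintegral_of_nonneg_ae
      (ae_of_all _ fun y => mul_nonneg (Real.rpow_nonneg (norm_nonneg y) s)
        (mul_nonneg (hf0 _ _) (hf0 _ _))) hm]
    congr 1
    refine lintegral_congr fun y => ?_
    rw [ENNReal.ofReal_mul (Real.rpow_nonneg (norm_nonneg y) s),
      ENNReal.ofReal_mul (hf0 x1 y), ← mul_assoc]
  have hT1 : (∫ ω, ∫ y, ‖y‖ ^ s * (f (X₁' ω) y * f (X₂' ω) y) ∂(volume) ∂ℙ)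
      = (∫⁻ y, w y * I y).toReal := by
    have hPm : Measurable fun ω => ∫⁻ y, w y * ENNReal.ofReal (f (X₁' ω) y)
        * ENNReal.ofReal (f (X₂' ω) y) := hG2m.comp (hX₁'.prodMk hX₂')
    calc (∫ ω, ∫ y, ‖y‖ ^ s * (f (X₁' ω) y * f (X₂' ω) y) ∂(volume) ∂ℙ)
        = ∫ ω, (∫⁻ y, w y * ENNReal.ofReal (f (X₁' ω) y)
            * ENNReal.ofReal (f (X₂' ω) y)).toReal ∂ℙ := by
          simp only [hinner]
      _ = (∫⁻ ω, ∫⁻ y, w y * ENNReal.ofReal (f (X₁' ω) y)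
            * ENNReal.ofReal (f (X₂' ω) y) ∂(volume) ∂ℙ).toReal :=
          integral_toReal hPm.aemeasurable (ae_lt_top hPm hKprime)
      _ = (∫⁻ y, w y * I y).toReal := by rw [hA]
  have hT2 : (∫ ω, ∫ y, ‖y‖ ^ s * (f (X₁ ω) y * f (X₂ ω) y) ∂(volume) ∂ℙ)
      = (∫⁻ y, w y * (J y) ^ 2).toReal := by
    have hPm : Measurable fun ω => ∫⁻ y, w y * ENNReal.ofReal (f (X₁ ω) y)
        * ENNReal.ofReal (f (X₂ ω) y) := hG2m.comp (hX₁.prodMk hX₂)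
    calc (∫ ω, ∫ y, ‖y‖ ^ s * (f (X₁ ω) y * f (X₂ ω) y) ∂(volume) ∂ℙ)
        = ∫ ω, (∫⁻ y, w y * ENNReal.ofReal (f (X₁ ω) y)
            * ENNReal.ofReal (f (X₂ ω) y)).toReal ∂ℙ := by
          simp only [hinner]
      _ = (∫⁻ ω, ∫⁻ y, w y * ENNReal.ofReal (f (X₁ ω) y)
            * ENNReal.ofReal (f (X₂ ω) y) ∂(volume) ∂ℙ).toReal :=
          integral_toReal hPm.aemeasurable (ae_lt_top hPm hKoff)
      _ = (∫⁻ y, w y * (J y) ^ 2).toReal := by rw [hB]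
  rw [hT1, hT2]
  have hφm : ∀ y, Measurable fun ω => L y (U ω) := fun y => (hLym y).comp hU
  have hLmapJ : ∀ y, (∫⁻ ω, L y (U ω) ∂ℙ) = J y :=
    fun y => (lintegral_map (hLym y) hU).symm
  have hLmapI : ∀ y, (∫⁻ ω, (L y (U ω)) ^ 2 ∂ℙ) = I y :=
    fun y => (lintegral_map ((hLym y).pow_const 2) hU).symm
  let c : EuclideanSpace ℝ (Fin n) → ℝ := fun y => ∫ ω, (L y (U ω)).toReal ∂ℙ
  show (∫ y in {y | 0 < c y}, ‖y‖ ^ s * ∫ ω, ((L y (U ω)).toReal - c y) ^ 2 ∂ℙ)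
      = (∫⁻ y, w y * I y).toReal - (∫⁻ y, w y * (J y) ^ 2).toReal
  have hcm : Measurable c := by
    have hsm : StronglyMeasurable (fun p : EuclideanSpace ℝ (Fin n) × Ω =>
        (L p.1 (U p.2)).toReal) :=
      ((hLm.comp (measurable_fst.prodMk (hU.comp measurable_snd))).ennreal_toReal).stronglyMeasurable
    exact hsm.integral_prod_right'.measurable
  have hSmeas : MeasurableSet {y | 0 < c y} := measurableSet_lt measurable_const hcm
  have hae : ∀ᵐ y : EuclideanSpace ℝ (Fin n), ({y | 0 < c y}.indicator
        (fun y => ‖y‖ ^ s * ∫ ω, ((L y (U ω)).toReal - c y) ^ 2 ∂ℙ)) y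
      = (w y * I y).toReal - (w y * (J y) ^ 2).toReal := by
    filter_upwards [ae_lt_top (hwm.mul hIm) hAne] with y hy
    by_cases hw0 : w y = 0
    · have hns : ‖y‖ ^ s = 0 :=
        le_antisymm (ENNReal.ofReal_eq_zero.mp hw0) (Real.rpow_nonneg (norm_nonneg y) s)
      simp [Set.indicator_apply, hns, hw0]
    · have hwt : w y ≠ ⊤ := ENNReal.ofReal_ne_top
      have hIfin : I y ≠ ⊤ := by
        intro h
        change w y * I y < ⊤ at hy
        rw [h, ENNReal.mul_top hw0] at hy
        exact (lt_irrefl _ hy).elim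
      have hJfin : J y ≠ ⊤ := by
        have hle : J y ≤ I y + 1 := by
          have h1 : (∫⁻ u, L y u ∂μU) ≤ ∫⁻ u, (L y u) ^ 2 + 1 ∂μU :=
            lintegral_mono fun u => aux_le_sq_add_one (L y u)
          have h2 : (∫⁻ u, (L y u) ^ 2 + 1 ∂μU) = I y + 1 := by
            rw [lintegral_add_right _ measurable_const, lintegral_const, measure_univ, mul_one]
          exact h2 ▸ h1
        exact fun h => (ENNReal.add_ne_top.mpr ⟨hIfin, ENNReal.one_ne_top⟩) (top_le_iff.mp (h ▸ hle))
      have haefin : ∀ᵐ ω ∂ℙ, L y (U ω) < ⊤ :=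
        ae_lt_top (hφm y) (by rw [hLmapJ y]; exact hJfin)
      have hφint : Integrable (fun ω => (L y (U ω)).toReal) ℙ :=
        integrable_toReal_of_lintegral_ne_top (hφm y).aemeasurable
          (by rw [hLmapJ y]; exact hJfin)
      have hφ2eq : (fun ω => (L y (U ω)).toReal ^ 2) = fun ω => ((L y (U ω)) ^ 2).toReal := by
        funext ω; rw [ENNReal.toReal_pow]
      have hφ2int : Integrable (fun ω => (L y (U ω)).toReal ^ 2) ℙ := by
        rw [hφ2eq]
        exact integrable_toReal_of_lintegral_ne_top ((hφm y).pow_const 2).aemeasurable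
          (by rw [hLmapI y]; exact hIfin)
      have hcJ : c y = (J y).toReal := by
        show (∫ ω, (L y (U ω)).toReal ∂ℙ) = (J y).toReal
        rw [integral_toReal (hφm y).aemeasurable haefin, hLmapJ y]
      have hφ2 : (∫ ω, (L y (U ω)).toReal ^ 2 ∂ℙ) = (I y).toReal := by
        rw [hφ2eq, integral_toReal ((hφm y).pow_const 2).aemeasurable
          (haefin.mono fun ω h => ENNReal.pow_lt_top h), hLmapI y]
      have hV : (∫ ω, ((L y (U ω)).toReal - c y) ^ 2 ∂ℙ) = (I y).toReal - (J y).toReal ^ 2 := by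
        have hexp : (fun ω => ((L y (U ω)).toReal - c y) ^ 2)
            = fun ω => ((L y (U ω)).toReal ^ 2 - (2 * c y) * (L y (U ω)).toReal) + c y ^ 2 := by
          funext ω; ring
        have hsub : Integrable (fun ω => (L y (U ω)).toReal ^ 2
            - (2 * c y) * (L y (U ω)).toReal) ℙ := hφ2int.sub (hφint.const_mul (2 * c y))
        rw [hexp, integral_add hsub (integrable_const _),
          integral_sub hφ2int (hφint.const_mul (2 * c y)), integral_const_mul, hφ2,
          integral_const, probReal_univ, one_smul]
        have hcc : (∫ ω, (L y (U ω)).toReal ∂ℙ) = c y := rfl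
        rw [hcc, hcJ]; ring
      by_cases hcy : 0 < c y
      · rw [Set.indicator_of_mem (show y ∈ {y | 0 < c y} from hcy), hV]
        have hns : ‖y‖ ^ s = (w y).toReal :=
          (ENNReal.toReal_ofReal (Real.rpow_nonneg (norm_nonneg y) s)).symm
        rw [hns, ENNReal.toReal_mul, ENNReal.toReal_mul, ENNReal.toReal_pow]
        ring
      · rw [Set.indicator_of_notMem (show y ∉ {y | 0 < c y} from hcy)]
        have hc0 : c y = 0 :=
          le_antisymm (not_lt.mp hcy) (integral_nonneg fun ω => ENNReal.toReal_nonneg)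
        have hJ0 : J y = 0 := by
          have h := hcJ
          rw [hc0] at h
          rcases (ENNReal.toReal_eq_zero_iff _).mp h.symm with h0 | h0
          · exact h0
          · exact absurd h0 hJfin
        have hI0 : I y = 0 := by
          have hae0 : ∀ᵐ u ∂μU, L y u = 0 := (lintegral_eq_zero_iff (hLym y)).mp hJ0
          have : (∫⁻ u, (L y u) ^ 2 ∂μU) = ∫⁻ u, 0 ∂μU :=
            lintegral_congr_ae (hae0.mono fun u h => by simp [h])
          simpa using this
        simp [hJ0, hI0]
  have hwiInt : Integrable (fun y => (w y * I y).toReal) volume :=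
    integrable_toReal_of_lintegral_ne_top (hwm.mul hIm).aemeasurable hAne
  have hwjInt : Integrable (fun y => (w y * (J y) ^ 2).toReal) volume :=
    integrable_toReal_of_lintegral_ne_top (hwm.mul (hJm.pow_const 2)).aemeasurable hBne
  calc (∫ y in {y | 0 < c y}, ‖y‖ ^ s * ∫ ω, ((L y (U ω)).toReal - c y) ^ 2 ∂ℙ)
      = ∫ y, ({y | 0 < c y}.indicator
          (fun y => ‖y‖ ^ s * ∫ ω, ((L y (U ω)).toReal - c y) ^ 2 ∂ℙ)) y :=
        (integral_indicator hSmeas).symm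
    _ = ∫ y, ((w y * I y).toReal - (w y * (J y) ^ 2).toReal) := integral_congr_ae hae
    _ = (∫ y, (w y * I y).toReal) - ∫ y, (w y * (J y) ^ 2).toReal :=
        integral_sub hwiInt hwjInt
    _ = (∫⁻ y, w y * I y).toReal - (∫⁻ y, w y * (J y) ^ 2).toReal := by
        rw [integral_toReal (f := fun y => w y * I y) (hwm.mul hIm).aemeasurable (ae_lt_top (hwm.mul hIm) hAne),
          integral_toReal (f := fun y => w y * (J y) ^ 2) (hwm.mul (hJm.pow_const 2)).aemeasurable
            (ae_lt_top (hwm.mul (hJm.pow_const 2)) hBne)]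
end

section
/- Fix λ ∈ (0,1) and u ∈ (0,∞), and for r ∈ (0,1) define p(r) = (1−r)/r − √( ((1−r)/r) · ((1−λ)/λ) · u ) and q(r) = (1−r)/r + √( ((1−r)/r) · (λ/(1−λ)) · u ). Then lim_{r→1⁻} ψ_r(p(r), q(r)) = √(2π/u). -/
open MeasureTheory Set
open scoped ENNReal NNReal Real

open Filter Topology Real

noncomputable def stirlingRemainder (x : ℝ) : ℝ :=
  log (Gamma x) - (x - 1 / 2) * log x + x

lemma stirlingRemainder_natCast {n : ℕ} (hn : n ≠ 0) :
    stirlingRemainder n = log (Stirling.stirlingSeq n) + log 2 / 2 := by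
  obtain ⟨m, rfl⟩ := Nat.exists_eq_succ_of_ne_zero hn
  have hm : (0 : ℝ) < m + 1 := by positivity
  rw [stirlingRemainder, Stirling.log_stirlingSeq_formula, Nat.factorial_succ, Nat.cast_mul,
    Nat.cast_succ, Real.Gamma_nat_eq_factorial, log_mul hm.ne' (by positivity),
    log_mul two_ne_zero hm.ne', log_div hm.ne' (exp_pos 1).ne', log_exp]
  ring

lemma tendsto_stirlingRemainder_natCast :
    Tendsto (fun n : ℕ => stirlingRemainder n) atTop (𝓝 (log (2 * π) / 2)) := by
  have h := ((continuousAt_log (sqrt_pos.2 pi_pos).ne').tendsto.comp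
    Stirling.tendsto_stirlingSeq_sqrt_pi).add_const (log 2 / 2)
  rw [log_sqrt pi_pos.le, ← add_div, ← log_mul pi_pos.ne' two_ne_zero, mul_comm] at h
  refine h.congr' ?_
  filter_upwards [eventually_ne_atTop 0] with n hn
  exact (stirlingRemainder_natCast hn).symm

lemma log_Gamma_add_le {a t : ℝ} (ha : 0 < a) (ht₀ : 0 ≤ t) (ht₁ : t ≤ 1) :
    log (Gamma (a + t)) ≤ log (Gamma a) + t * log a := by
  have h := convexOn_log_Gamma.2 (mem_Ioi.2 ha) (mem_Ioi.2 (by linarith : 0 < a + 1))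
    (sub_nonneg.2 ht₁) ht₀ (sub_add_cancel 1 t)
  simp only [smul_eq_mul, Function.comp_apply, Gamma_add_one ha.ne',
    log_mul ha.ne' (Gamma_pos_of_pos ha).ne'] at h
  rw [show (1 - t) * a + t * (a + 1) = a + t by ring] at h
  linarith

lemma stirlingRemainder_add_le {a t : ℝ} (ha : 1 / 2 ≤ a) (ht₀ : 0 ≤ t) (ht₁ : t ≤ 1) :
    stirlingRemainder (a + t) ≤ stirlingRemainder a + a⁻¹ := by
  have ha₀ : 0 < a := by linarith
  have hat : 0 < a + t := by linarith
  have hlog : (a + t - 1 / 2) * (log a - log (a + t)) ≤ (a + t - 1 / 2) * (-t / (a + t)) := by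
    refine mul_le_mul_of_nonneg_left ?_ (by linarith)
    rw [← log_div ha₀.ne' hat.ne']
    calc log (a / (a + t)) ≤ a / (a + t) - 1 := log_le_sub_one_of_pos (by positivity)
      _ = -t / (a + t) := by field_simp; ring
  have herr : (a + t - 1 / 2) * (-t / (a + t)) + t ≤ a⁻¹ := by
    rw [show (a + t - 1 / 2) * (-t / (a + t)) + t = t / (2 * (a + t)) by field_simp; ring,
      div_le_iff₀ (by positivity), inv_mul_eq_div, le_div_iff₀ ha₀]
    nlinarith
  have := log_Gamma_add_le ha₀ ht₀ ht₁
  unfold stirlingRemainder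
  nlinarith

lemma tendsto_stirlingRemainder_atTop :
    Tendsto stirlingRemainder atTop (𝓝 (log (2 * π) / 2)) := by
  have hfloor : Tendsto (fun x : ℝ => ⌊x⌋₊) atTop atTop := tendsto_nat_floor_atTop
  have hnat := tendsto_stirlingRemainder_natCast
  have hlower : Tendsto (fun x : ℝ => stirlingRemainder (⌊x⌋₊ + 1) - x⁻¹) atTop
      (𝓝 (log (2 * π) / 2)) := by
    simpa using (((tendsto_add_atTop_iff_nat 1).2 hnat).comp hfloor).sub tendsto_inv_atTop_zero
  have hupper : Tendsto (fun x : ℝ => stirlingRemainder ⌊x⌋₊ + (⌊x⌋₊ : ℝ)⁻¹) atTop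
      (𝓝 (log (2 * π) / 2)) := by
    simpa using (hnat.comp hfloor).add
      (tendsto_inv_atTop_zero.comp (tendsto_natCast_atTop_atTop.comp hfloor))
  refine tendsto_of_tendsto_of_tendsto_of_le_of_le' hlower hupper ?_ ?_
  · filter_upwards [eventually_ge_atTop 1] with x hx
    have h := stirlingRemainder_add_le (a := x) (t := ⌊x⌋₊ + 1 - x) (by linarith)
      (sub_nonneg.2 (Nat.lt_floor_add_one x).le) (by linarith [Nat.floor_le (by linarith : 0 ≤ x)])
    rw [add_sub_cancel] at h
    linarith
  · filter_upwards [eventually_ge_atTop 1] with x hx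
    have hn : (1 : ℝ) ≤ ⌊x⌋₊ := by exact_mod_cast Nat.one_le_floor_iff x |>.2 hx
    have h := stirlingRemainder_add_le (a := ⌊x⌋₊) (t := x - ⌊x⌋₊) (by linarith)
      (sub_nonneg.2 (Nat.floor_le (by linarith))) (by linarith [Nat.lt_floor_add_one x])
    rwa [add_sub_cancel] at h

lemma Gamma_eq_exp_stirlingRemainder {x : ℝ} (hx : 0 < x) :
    Gamma x = exp (stirlingRemainder x) * x ^ x / √x * exp (-x) := by
  rw [stirlingRemainder, exp_add, exp_sub, exp_log (Gamma_pos_of_pos hx), mul_comm (x - 1 / 2),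
    ← rpow_def_of_pos hx, rpow_sub hx, sqrt_eq_rpow, exp_neg]
  field_simp

lemma Btilde_mul_sqrt_eq_exp {a b : ℝ} (ha : 0 < a) (hb : 0 < b) :
    Btilde a b * √(a * b / (a + b)) =
      exp (stirlingRemainder a + stirlingRemainder b - stirlingRemainder (a + b)) := by
  have hab : 0 < a + b := add_pos ha hb
  rw [Btilde, Gamma_eq_exp_stirlingRemainder ha, Gamma_eq_exp_stirlingRemainder hb,
    Gamma_eq_exp_stirlingRemainder hab, rpow_neg ha.le, rpow_neg hb.le, sqrt_div' _ hab.le,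
    sqrt_mul ha.le, exp_sub, exp_add, neg_add, exp_add]
  have := rpow_pos_of_pos ha a
  have := rpow_pos_of_pos hb b
  have := rpow_pos_of_pos hab (a + b)
  field_simp

lemma tendsto_Btilde_mul_sqrt_atTop {lam : ℝ} (h₀ : 0 < lam) (h₁ : lam < 1) :
    Tendsto (fun s => Btilde (lam * s) ((1 - lam) * s) * √(lam * (1 - lam) * s)) atTop
      (𝓝 √(2 * π)) := by
  have hL {c : ℝ} (hc : 0 < c) :
      Tendsto (fun s => stirlingRemainder (c * s)) atTop (𝓝 (log (2 * π) / 2)) :=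
    tendsto_stirlingRemainder_atTop.comp (tendsto_id.const_mul_atTop hc)
  have h := (((hL h₀).add (hL (sub_pos.2 h₁))).sub (hL one_pos)).rexp
  rw [add_sub_cancel_right, ← log_sqrt (by positivity), exp_log (by positivity)] at h
  refine h.congr' ?_
  filter_upwards [eventually_gt_atTop 0] with s hs
  have hsum : lam * s + (1 - lam) * s = 1 * s := by ring
  have hprod : lam * s * ((1 - lam) * s) / (lam * s + (1 - lam) * s) = lam * (1 - lam) * s := by
    field_simp; ring
  have h₁' := sub_pos.2 h₁
  rw [← hsum, ← Btilde_mul_sqrt_eq_exp (by positivity) (by positivity), hprod]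

lemma tendsto_div_one_sub_nhdsLT_one : Tendsto (fun r : ℝ => r / (1 - r)) (𝓝[<] 1) atTop := by
  have h : Tendsto (fun r : ℝ => 1 - r) (𝓝[<] 1) (𝓝[>] 0) := by
    refine tendsto_nhdsWithin_of_tendsto_nhds_of_eventually_within _ ?_ ?_
    · exact ((continuous_sub_left (1 : ℝ)).tendsto' 1 0 (sub_self 1)).mono_left
        nhdsWithin_le_nhds
    · filter_upwards [self_mem_nhdsWithin] with r (hr : r < 1)
      exact sub_pos.2 hr
  simpa [div_eq_mul_inv] using (tendsto_nhdsWithin_of_tendsto_nhds tendsto_id).pos_mul_atTop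
    one_pos (tendsto_inv_nhdsGT_zero.comp h)

lemma psi_parametrized_eq {lam u r : ℝ} (h₀ : 0 < lam) (h₁ : lam < 1) (hu : 0 < u)
    (hr₀ : 0 < r) (hr₁ : r < 1) :
    psi r ((1 - r) / r - √((1 - r) / r * ((1 - lam) / lam) * u))
        ((1 - r) / r + √((1 - r) / r * (lam / (1 - lam)) * u)) =
      Btilde (lam * (r / (1 - r))) ((1 - lam) * (r / (1 - r))) *
        √(lam * (1 - lam) * (r / (1 - r))) / √u := by
  have h₁' := sub_pos.2 h₁
  set ε := (1 - r) / r with hε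
  set c := √(ε * u / (lam * (1 - lam))) with hc
  have hc₀ : 0 < c := sqrt_pos.2 (by positivity)
  have hq : √(ε * (lam / (1 - lam)) * u) = lam * c := by
    rw [show ε * (lam / (1 - lam)) * u = lam ^ 2 * (ε * u / (lam * (1 - lam))) by
      field_simp, sqrt_mul (sq_nonneg _), sqrt_sq h₀.le]
  have hp : √(ε * ((1 - lam) / lam) * u) = (1 - lam) * c := by
    rw [show ε * ((1 - lam) / lam) * u = (1 - lam) ^ 2 * (ε * u / (lam * (1 - lam))) by
      field_simp, sqrt_mul (sq_nonneg _), sqrt_sq h₁'.le]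
  have hqp : ε + lam * c - (ε - (1 - lam) * c) = c := by ring
  have hlam : (ε + lam * c + 1 - 1 / r) / c = lam := by
    rw [show ε + lam * c + 1 - 1 / r = lam * c by rw [hε]; field_simp; ring,
      mul_div_cancel_right₀ _ hc₀.ne']
  have hinv : 1 / c = √(lam * (1 - lam) * (r / (1 - r))) / √u := by
    rw [hc, one_div, ← sqrt_inv, ← sqrt_div' _ hu.le, hε]
    congr 1
    field_simp
  rw [psi, hq, hp, hqp, hlam, hinv, show r * lam / (1 - r) = lam * (r / (1 - r)) by ring,
    show r * (1 - lam) / (1 - r) = (1 - lam) * (r / (1 - r)) by ring]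
  ring

/-- **Lemma 1.** Fix `λ ∈ (0,1)` and `u ∈ (0,∞)`, and for `r ∈ (0,1)` set
`p(r) = (1−r)/r − √(((1−r)/r)((1−λ)/λ)u)` and `q(r) = (1−r)/r + √(((1−r)/r)(λ/(1−λ))u)`.
Then `ψ_r(p(r), q(r)) → √(2π/u)` as `r → 1⁻`. -/
theorem psi_limit_parametrized (lam u : ℝ) (hlam0 : 0 < lam) (hlam1 : lam < 1) (hu : 0 < u) :
    Filter.Tendsto
      (fun r : ℝ => psi r
        ((1 - r) / r - Real.sqrt ((1 - r) / r * ((1 - lam) / lam) * u))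
        ((1 - r) / r + Real.sqrt ((1 - r) / r * (lam / (1 - lam)) * u)))
      (nhdsWithin 1 (Set.Iio 1))
      (nhds (Real.sqrt (2 * π / u))) := by
  have h := ((tendsto_Btilde_mul_sqrt_atTop hlam0 hlam1).comp
    tendsto_div_one_sub_nhdsLT_one).div_const √u
  rw [← sqrt_div' _ hu.le] at h
  refine h.congr' ?_
  filter_upwards [Ioo_mem_nhdsLT one_pos] with r ⟨hr₀, hr₁⟩
  exact (psi_parametrized_eq hlam0 hlam1 hu hr₀ hr₁).symm
end
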